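/- arXiv:2209.01826 — 14 statements merged into one kernel-verified Lean document; each statement's English description precedes it below -/
import Mathlib

section
/- Let n ≥ 2k ≥ 4 be integers. If F is an intersecting family of k-subsets of [n] (every two members intersect), then |F| ≤ C(n-1, k-1). -/
open Finset

/-- Erdős–Ko–Rado theorem. -/
theorem stmt0 (n k : ℕ) (hk : 2 ≤ k) (hn : 2 * k ≤ n)
    (F : Finset (Finset ℕ)) (hF : F ⊆ (Finset.Icc 1 n).powersetCard k)
    (hint : ∀ A ∈ F, ∀ B ∈ F, (A ∩ B).Nonempty) :
    F.card ≤ (n - 1).choose (k - 1) := by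
  classical
  set f : Fin n → ℕ := fun i => (i : ℕ) + 1 with hf
  have hfinj : Function.Injective f := fun a b h => by
    apply Fin.val_injective; simpa [hf] using h
  have hrange : ∀ A ∈ F, ∀ x ∈ A, x ∈ Set.range f := by
    intro A hA x hx
    have := hF hA
    rw [mem_powersetCard] at this
    have hx' := this.1 hx
    rw [mem_Icc] at hx'
    exact ⟨⟨x - 1, by omega⟩, by simp [hf]; omega⟩
  set g : Finset ℕ → Finset (Fin n) := fun A => A.preimage f (hfinj.injOn) with hg
  have himg : ∀ A ∈ F, (g A).image f = A := by
    intro A hA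
    rw [hg, image_preimage]
    exact filter_true_of_mem (hrange A hA)
  set 𝒜 : Finset (Finset (Fin n)) := F.image g with h𝒜
  have hcard : 𝒜.card = F.card := by
    rw [h𝒜]
    apply card_image_of_injOn
    intro A hA B hB h
    rw [← himg A hA, ← himg B hB, h]
  have hsized : (𝒜 : Set (Finset (Fin n))).Sized k := by
    intro A hA
    simp only [h𝒜, coe_image, Set.mem_image, mem_coe] at hA
    obtain ⟨B, hB, rfl⟩ := hA
    have := hF hB
    rw [mem_powersetCard] at this
    rw [← card_image_of_injective (g B) hfinj, himg B hB, this.2]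
  have hinter : (𝒜 : Set (Finset (Fin n))).Intersecting := by
    intro A hA B hB hd
    simp only [h𝒜, coe_image, Set.mem_image, mem_coe] at hA hB
    obtain ⟨A', hA', rfl⟩ := hA
    obtain ⟨B', hB', rfl⟩ := hB
    obtain ⟨x, hx⟩ := hint A' hA' B' hB'
    rw [mem_inter] at hx
    obtain ⟨i, hi⟩ := hrange A' hA' x hx.1
    have h1 : i ∈ g A' := by rw [hg]; simp [hi, hx.1]
    have h2 : i ∈ g B' := by rw [hg]; simp [hi, hx.2]
    exact (Finset.disjoint_left.1 hd h1) h2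
  have h3 : k ≤ n / 2 := Nat.le_div_iff_mul_le (by norm_num) |>.2 (by omega)
  calc F.card = 𝒜.card := hcard.symm
    _ ≤ (n - 1).choose (k - 1) := Finset.erdos_ko_rado hinter hsized h3
end

section
/- Let n > 2k ≥ 4 be integers. If F is an intersecting family of k-subsets of [n] that is non-trivial (the intersection of all members of F is empty), then |F| ≤ C(n-1, k-1) - C(n-k-1, k-1) + 1. -/
/-!
Compressing along `j ↦ i` (`i < j`) preserves the size and the intersecting property, so a
non-trivial intersecting family can be shifted until either it is shifted, or one more compression
would turn it into a star at `i`.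

A shifted non-trivial family contains `[2, k + 1]`, so every member meets `[2, k + 1]`; families of
this kind are bounded by induction on `n`, splitting off the members that contain `n`.

In the other case every member contains `i` or `j`. At most `C(n-2, k-2)` members contain both, and
deleting `i`, resp. `j`, from the members containing only one of them leaves two non-empty
cross-intersecting `(k-1)`-uniform families on `n - 2` points. For these the cross-intersecting
Hilton–Milner bound `|A| + |B| ≤ C(m, r) - C(m - r, r) + 1` holds, again by shifting and induction
on `m`. Pascal's rule adds up the pieces.
-/

open Finset UV
open scoped FinsetFamily

namespace HiltonMilner

lemma choose_two_mul_self {r : ℕ} (hr : 1 ≤ r) :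
    (2 * r).choose r = 2 * (2 * r - 1).choose (r - 1) := by
  obtain ⟨s, rfl⟩ := Nat.exists_eq_add_of_le' hr
  rw [show 2 * (s + 1) = 2 * s + 1 + 1 by ring, Nat.choose_succ_succ, Nat.choose_symm_half,
    show 2 * s + 1 + 1 - 1 = 2 * s + 1 by omega, Nat.add_sub_cancel]
  ring

section CrossIntersecting

variable {α : Type*} [DecidableEq α] {A B A' B' H : Finset (Finset α)} {G D : Finset α}
  {r s t : ℕ} {b i j : α}

def CrossIntersecting (A B : Finset (Finset α)) : Prop :=
  ∀ S ∈ A, ∀ T ∈ B, (S ∩ T).Nonempty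

lemma CrossIntersecting.symm (h : CrossIntersecting A B) : CrossIntersecting B A :=
  fun S hS T hT => inter_comm T S ▸ h T hT S hS

lemma CrossIntersecting.mono (h : CrossIntersecting A B) (hA : A' ⊆ A) (hB : B' ⊆ B) :
    CrossIntersecting A' B' :=
  fun S hS T hT => h S (hA hS) T (hB hT)

lemma CrossIntersecting.nonMemberSubfamily (h : CrossIntersecting A B) :
    CrossIntersecting (A.nonMemberSubfamily b) (B.nonMemberSubfamily b) :=
  h.mono (filter_subset _ _) (filter_subset _ _)

lemma CrossIntersecting.nonMemberSubfamily_memberSubfamily (h : CrossIntersecting A B) :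
    CrossIntersecting (A.nonMemberSubfamily b) (B.memberSubfamily b) := by
  intro S hS T hT
  rw [mem_nonMemberSubfamily] at hS
  rw [mem_memberSubfamily] at hT
  obtain ⟨x, hx⟩ := h S hS.1 _ hT.1
  rw [mem_inter, mem_insert] at hx
  obtain ⟨hxS, rfl | hxT⟩ := hx
  · exact absurd hxS hS.2
  · exact ⟨x, mem_inter.2 ⟨hxS, hxT⟩⟩

lemma CrossIntersecting.memberSubfamily_nonMemberSubfamily (h : CrossIntersecting A B)
    (hij : i ≠ j) :
    CrossIntersecting ((A.memberSubfamily i).nonMemberSubfamily j)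
      ((B.nonMemberSubfamily i).memberSubfamily j) := by
  intro S hS T hT
  simp only [mem_memberSubfamily, mem_nonMemberSubfamily] at hS hT
  obtain ⟨y, hy⟩ := h _ hS.1.1 _ hT.1.1
  simp only [mem_inter, mem_insert] at hy
  obtain ⟨rfl | hyS, rfl | hyT⟩ := hy
  · exact absurd rfl hij
  · exact absurd (mem_insert_of_mem hyT) hT.1.2
  · exact absurd hyS hS.2
  · exact ⟨y, mem_inter.2 ⟨hyS, hyT⟩⟩

lemma card_eq_of_forall_mem_or_mem (hcover : ∀ S ∈ A, i ∈ S ∨ j ∈ S) :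
    #A = #((A.memberSubfamily i).memberSubfamily j) +
      #((A.memberSubfamily i).nonMemberSubfamily j) +
      #((A.nonMemberSubfamily i).memberSubfamily j) := by
  have hempty : (A.nonMemberSubfamily i).nonMemberSubfamily j = ∅ :=
    eq_empty_of_forall_notMem fun S hS => by
      simp only [mem_nonMemberSubfamily] at hS
      exact (hcover S hS.1.1).elim hS.1.2 hS.2
  have := card_memberSubfamily_add_card_nonMemberSubfamily i A
  have := card_memberSubfamily_add_card_nonMemberSubfamily j (A.memberSubfamily i)
  have := card_memberSubfamily_add_card_nonMemberSubfamily j (A.nonMemberSubfamily i)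
  rw [hempty, card_empty] at this
  omega

lemma nonMemberSubfamily_subset_powersetCard (hA : A ⊆ powersetCard r G) :
    A.nonMemberSubfamily b ⊆ powersetCard r (G.erase b) := by
  intro S hS
  rw [mem_nonMemberSubfamily] at hS
  obtain ⟨hSG, hSr⟩ := mem_powersetCard.1 (hA hS.1)
  exact mem_powersetCard.2 ⟨subset_erase.2 ⟨hSG, hS.2⟩, hSr⟩

lemma memberSubfamily_subset_powersetCard (hA : A ⊆ powersetCard r G) :
    A.memberSubfamily b ⊆ powersetCard (r - 1) (G.erase b) := by
  intro S hS
  rw [mem_memberSubfamily] at hS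
  obtain ⟨hSG, hSr⟩ := mem_powersetCard.1 (hA hS.1)
  rw [card_insert_of_notMem hS.2] at hSr
  exact mem_powersetCard.2 ⟨subset_erase.2 ⟨(subset_insert _ _).trans hSG, hS.2⟩, by omega⟩

lemma forall_inter_nonempty_memberSubfamily (hmeet : ∀ S ∈ H, (S ∩ D).Nonempty) (hb : b ∉ D) :
    ∀ S ∈ H.memberSubfamily b, (S ∩ D).Nonempty := by
  intro S hS
  obtain ⟨x, hx⟩ := hmeet _ (mem_memberSubfamily.1 hS).1
  rw [mem_inter, mem_insert] at hx
  obtain ⟨rfl | hxS, hxD⟩ := hx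
  · exact absurd hxD hb
  · exact ⟨x, mem_inter.2 ⟨hxS, hxD⟩⟩

lemma card_erase_eq_of_notMem (hb : b ∉ D) :
    #(H.erase D) = #((H.nonMemberSubfamily b).erase D) + #(H.memberSubfamily b) := by
  have h₀ : (H.erase D).nonMemberSubfamily b = (H.nonMemberSubfamily b).erase D := by
    ext S
    simp only [mem_nonMemberSubfamily, mem_erase]
    tauto
  have h₁ : (H.erase D).memberSubfamily b = H.memberSubfamily b := by
    ext S
    simp only [mem_memberSubfamily, mem_erase, and_congr_left_iff]
    exact fun _ => ⟨And.right, fun h => ⟨fun hc => hb (hc ▸ mem_insert_self b S), h⟩⟩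
  rw [← h₀, ← h₁, add_comm, card_memberSubfamily_add_card_nonMemberSubfamily]

lemma card_le_of_forall_inter_nonempty (hH : H ⊆ powersetCard s G) (hD : D ⊆ G)
    (hmeet : ∀ S ∈ H, (S ∩ D).Nonempty) :
    #H ≤ (#G).choose s - (#G - #D).choose s := by
  have hsub : H ⊆ powersetCard s G \ powersetCard s (G \ D) := by
    intro S hS
    refine mem_sdiff.2 ⟨hH hS, fun hSD => ?_⟩
    obtain ⟨x, hx⟩ := hmeet S hS
    exact (mem_sdiff.1 ((mem_powersetCard.1 hSD).1 (mem_inter.1 hx).1)).2 (mem_inter.1 hx).2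
  calc #H ≤ #(powersetCard s G \ powersetCard s (G \ D)) := card_le_card hsub
    _ = (#G).choose s - (#G - #D).choose s := by
      rw [card_sdiff_of_subset (powersetCard_mono sdiff_subset), card_powersetCard,
        card_powersetCard, card_sdiff_of_subset hD]

lemma CrossIntersecting.card_eq_zero_or_card_le (h : CrossIntersecting A B)
    (hA : A ⊆ powersetCard s G) (hB : B ⊆ powersetCard t G) :
    #B = 0 ∨ #A ≤ (#G).choose s - (#G - t).choose s := by
  refine (#B).eq_zero_or_pos.imp_right fun hB' => ?_
  obtain ⟨T, hT⟩ := card_pos.1 hB'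
  obtain ⟨hTG, hTt⟩ := mem_powersetCard.1 (hB hT)
  exact hTt ▸ card_le_of_forall_inter_nonempty hA hTG fun S hS => h S hS T hT

/-- `T ↦ G \ T` maps `B` injectively into the `r`-subsets of `G` outside `A`. -/
lemma CrossIntersecting.card_add_card_le_choose (h : CrossIntersecting A B)
    (hA : A ⊆ powersetCard r G) (hB : B ⊆ powersetCard r G) (hG : #G = 2 * r) :
    #A + #B ≤ (2 * r).choose r := by
  have hcompl : ∀ T ∈ B, G \ (G \ T) = T := fun T hT =>
    Finset.sdiff_sdiff_eq_self (mem_powersetCard.1 (hB hT)).1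
  have hdisj : Disjoint A (B.image (G \ ·)) := by
    refine disjoint_right.2 fun S hS hSA => ?_
    obtain ⟨T, hT, rfl⟩ := mem_image.1 hS
    obtain ⟨x, hx⟩ := h _ hSA T hT
    simp at hx
  have hsub : A ∪ B.image (G \ ·) ⊆ powersetCard r G := by
    refine union_subset hA fun S hS => ?_
    obtain ⟨T, hT, rfl⟩ := mem_image.1 hS
    obtain ⟨hTG, hTr⟩ := mem_powersetCard.1 (hB hT)
    exact mem_powersetCard.2 ⟨sdiff_subset, by rw [card_sdiff_of_subset hTG]; omega⟩
  have hinj : Set.InjOn (G \ ·) B := fun S hS T hT hST => by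
    rw [← hcompl S hS, ← hcompl T hT]
    exact congrArg _ hST
  have := card_le_card hsub
  rwa [card_union_of_disjoint hdisj, card_powersetCard, hG, card_image_of_injOn hinj] at this

/-- If `#D > r`, bound `#H` by `CrossIntersecting.card_add_card_le_choose`; if `#D = r`, apply it to
`H.erase D` and `H.erase D ∪ {D, G \ D}`. -/
lemma CrossIntersecting.card_erase_le_of_card_eq_two_mul (h : CrossIntersecting H H)
    (hH : H ⊆ powersetCard r G) (hG : #G = 2 * r) (hDG : D ⊆ G) (hrD : r ≤ #D)
    (hmeet : ∀ S ∈ H, (S ∩ D).Nonempty) (hr : 2 ≤ r) :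
    #(H.erase D) ≤ (2 * r - 1).choose (r - 1) - (2 * r - #D - 1).choose (r - 1) := by
  obtain hrD | hrD := hrD.lt_or_eq
  · have := card_le_card (erase_subset D H)
    have := h.card_add_card_le_choose hH hH hG
    rw [choose_two_mul_self (by omega)] at this
    rw [Nat.choose_eq_zero_of_lt (by omega : 2 * r - #D - 1 < r - 1)]
    omega
  have hGD : G \ D ∉ H.erase D := fun hc => by simpa using hmeet _ (mem_of_mem_erase hc)
  have hDGD : D ∉ insert (G \ D) (H.erase D) := by
    rw [mem_insert, not_or]
    refine ⟨fun hc => ?_, notMem_erase _ _⟩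
    obtain ⟨x, hx⟩ := card_pos.1 (show 0 < #D by omega)
    exact (mem_sdiff.1 (hc ▸ hx)).2 hx
  have hX : CrossIntersecting (H.erase D) (insert D (insert (G \ D) (H.erase D))) := by
    intro S hS T hT
    rw [mem_insert, mem_insert] at hT
    obtain ⟨hSD, hSH⟩ := mem_erase.1 hS
    obtain ⟨hSG, hSr⟩ := mem_powersetCard.1 (hH hSH)
    rcases hT with rfl | rfl | hT
    · exact hmeet S hSH
    · obtain ⟨x, hxS, hxD⟩ := not_subset.1 fun hSD' =>
        hSD (eq_of_subset_of_card_le hSD' (by rw [hSr, hrD]))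
      exact ⟨x, mem_inter.2 ⟨hxS, mem_sdiff.2 ⟨hSG hxS, hxD⟩⟩⟩
    · exact h S hSH T (mem_of_mem_erase hT)
  have hsub : insert D (insert (G \ D) (H.erase D)) ⊆ powersetCard r G :=
    insert_subset (mem_powersetCard.2 ⟨hDG, hrD.symm⟩) (insert_subset
      (mem_powersetCard.2 ⟨sdiff_subset, by rw [card_sdiff_of_subset hDG]; omega⟩)
      ((erase_subset _ _).trans hH))
  have := hX.card_add_card_le_choose ((erase_subset _ _).trans hH) hsub hG
  rw [card_insert_of_notMem hDGD, card_insert_of_notMem hGD, choose_two_mul_self (by omega)] at this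
  rw [← hrD, show 2 * r - r - 1 = r - 1 by omega, Nat.choose_self]
  omega

/-- Erdős–Ko–Rado, transported from `Fin #G` to an arbitrary ground set `G`. -/
theorem card_le_choose_of_intersecting (h : CrossIntersecting H H)
    (hH : H ⊆ powersetCard r G) (hG : 2 * r ≤ #G) : #H ≤ (#G - 1).choose (r - 1) := by
  let f : Finset α → Finset (Fin #G) := fun S => (S.subtype (· ∈ G)).map G.equivFin.toEmbedding
  have hf : ∀ S ∈ H, S ⊆ G := fun S hS => (mem_powersetCard.1 (hH hS)).1
  have hfcard : ∀ S ∈ H, #(f S) = r := fun S hS => by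
    rw [card_map, card_subtype, filter_true_of_mem (hf S hS), (mem_powersetCard.1 (hH hS)).2]
  have hinj : Set.InjOn f H := by
    intro S hS T hT hST
    have := congrArg (fun U => (U.map G.equivFin.symm.toEmbedding).map
      (Function.Embedding.subtype (· ∈ G))) hST
    simpa [f, map_map, subtype_map, filter_true_of_mem (hf S hS),
      filter_true_of_mem (hf T hT)] using this
  rw [← card_image_of_injOn hinj]
  refine erdos_ko_rado (n := #G) ?_ ?_ (by omega)
  · intro U hU V hV
    obtain ⟨S, hS, rfl⟩ := mem_image.1 hU
    obtain ⟨T, hT, rfl⟩ := mem_image.1 hV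
    obtain ⟨x, hx⟩ := h S hS T hT
    rw [mem_inter] at hx
    refine not_disjoint_iff.2 ⟨G.equivFin ⟨x, hf S hS hx.1⟩, ?_, ?_⟩ <;>
      simp [f, hx.1, hx.2]
  · intro U hU
    obtain ⟨S, hS, rfl⟩ := mem_image.1 hU
    exact hfcard S hS

end CrossIntersecting

section Shifting

variable {A B : Finset (Finset ℕ)} {G S T : Finset ℕ} {i j r b : ℕ}

def ShiftedOn (G : Finset ℕ) (A : Finset (Finset ℕ)) : Prop :=
  ∀ i ∈ G, ∀ j ∈ G, i < j → ∀ S ∈ A, j ∈ S → i ∉ S → insert i (S.erase j) ∈ A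

lemma compress_singleton_of_notMem_of_mem (hi : i ∉ S) (hj : j ∈ S) :
    compress {i} {j} S = insert i (S.erase j) := by
  rw [compress_of_disjoint_of_le (disjoint_singleton_left.2 hi) (singleton_subset_iff.2 hj),
    sup_eq_union, union_comm, ← insert_eq, sdiff_singleton_eq_erase,
    erase_insert_of_ne fun h : i = j => hi (h ▸ hj)]

lemma compress_singleton_of_not (h : ¬(i ∉ S ∧ j ∈ S)) : compress {i} {j} S = S := by
  rw [compress, if_neg (by simpa [disjoint_singleton_left] using h)]

lemma compress_singleton_subset : compress {i} {j} S ⊆ insert i S := by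
  unfold compress
  split_ifs
  · intro x hx
    simp only [sup_eq_union, mem_sdiff, mem_union, mem_singleton, mem_insert] at hx ⊢
    tauto
  · exact subset_insert _ _

lemma compression_subset_powersetCard (hA : A ⊆ powersetCard r G) (hi : i ∈ G) :
    𝓒 {i} {j} A ⊆ powersetCard r G := by
  intro S hS
  obtain ⟨hSA, -⟩ | ⟨-, T, hT, rfl⟩ := mem_compression.1 hS
  · exact hA hSA
  obtain ⟨hTG, hTr⟩ := mem_powersetCard.1 (hA hT)
  exact mem_powersetCard.2 ⟨compress_singleton_subset.trans (insert_subset hi hTG),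
    by rw [card_compress (by simp), hTr]⟩

lemma exists_eq_of_mem_compression_of_notMem (hS : S ∈ 𝓒 {i} {j} A) (hSA : S ∉ A) :
    ∃ T ∈ A, i ∉ T ∧ j ∈ T ∧ insert i (T.erase j) = S := by
  obtain ⟨hSA', -⟩ | ⟨-, T, hT, rfl⟩ := mem_compression.1 hS
  · exact absurd hSA' hSA
  by_cases hT' : i ∉ T ∧ j ∈ T
  · exact ⟨T, hT, hT'.1, hT'.2, (compress_singleton_of_notMem_of_mem hT'.1 hT'.2).symm⟩
  · rw [compress_singleton_of_not hT'] at hSA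
    exact absurd hT hSA

lemma compress_mem_of_mem_compression_of_mem (hS : S ∈ 𝓒 {i} {j} A) (hSA : S ∈ A) :
    compress {i} {j} S ∈ A :=
  ((mem_compression.1 hS).resolve_right fun h => h.1 hSA).2

/-- A set that survives the compression of `B` meets every set that the compression of `A`
creates. -/
private lemma inter_nonempty_of_compress (h : CrossIntersecting A B) (hS : S ∈ A) (hi : i ∉ S)
    (hj : j ∈ S) (hT : T ∈ B) (hTc : compress {i} {j} T ∈ B) :
    (insert i (S.erase j) ∩ T).Nonempty := by
  obtain ⟨x, hx⟩ := h S hS T hT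
  rw [mem_inter] at hx
  by_cases hxj : x = j
  · subst hxj
    by_cases hiT : i ∈ T
    · exact ⟨i, mem_inter.2 ⟨mem_insert_self _ _, hiT⟩⟩
    rw [compress_singleton_of_notMem_of_mem hiT hx.2] at hTc
    obtain ⟨y, hy⟩ := h S hS _ hTc
    simp only [mem_inter, mem_insert, mem_erase] at hy
    obtain ⟨hyS, rfl | ⟨hyx, hyT⟩⟩ := hy
    · exact absurd hyS hi
    · exact ⟨y, mem_inter.2 ⟨mem_insert_of_mem (mem_erase.2 ⟨hyx, hyS⟩), hyT⟩⟩
  · exact ⟨x, mem_inter.2 ⟨mem_insert_of_mem (mem_erase.2 ⟨hxj, hx.1⟩), hx.2⟩⟩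

lemma CrossIntersecting.compression (h : CrossIntersecting A B) :
    CrossIntersecting (𝓒 {i} {j} A) (𝓒 {i} {j} B) := by
  intro S hS T hT
  by_cases hSA : S ∈ A <;> by_cases hTB : T ∈ B
  · exact h S hSA T hTB
  · obtain ⟨T, hT', hi, hj, rfl⟩ := exists_eq_of_mem_compression_of_notMem hT hTB
    rw [inter_comm]
    exact inter_nonempty_of_compress h.symm hT' hi hj hSA
      (compress_mem_of_mem_compression_of_mem hS hSA)
  · obtain ⟨S, hS', hi, hj, rfl⟩ := exists_eq_of_mem_compression_of_notMem hS hSA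
    exact inter_nonempty_of_compress h hS' hi hj hTB
      (compress_mem_of_mem_compression_of_mem hT hTB)
  · obtain ⟨S, -, -, -, rfl⟩ := exists_eq_of_mem_compression_of_notMem hS hSA
    obtain ⟨T, -, -, -, rfl⟩ := exists_eq_of_mem_compression_of_notMem hT hTB
    exact ⟨i, mem_inter.2 ⟨mem_insert_self _ _, mem_insert_self _ _⟩⟩

def familyWeight (A : Finset (Finset ℕ)) : ℕ := ∑ S ∈ A, ∑ x ∈ S, x

lemma sum_insert_erase_add (hi : i ∉ S) (hj : j ∈ S) :
    ∑ x ∈ insert i (S.erase j), x + j = ∑ x ∈ S, x + i := by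
  rw [sum_insert fun h => hi (mem_of_mem_erase h), add_assoc, sum_erase_add _ _ hj, add_comm]

lemma familyWeight_compression_lt (hij : i < j) (h : 𝓒 {i} {j} A ≠ A) :
    familyWeight (𝓒 {i} {j} A) < familyWeight A := by
  have hM : {S ∈ A | compress {i} {j} S ∉ A}.Nonempty := by
    contrapose! h
    rw [compression, filter_image, h, image_empty, union_empty]
    exact filter_true_of_mem fun S hS => not_not.1 (filter_eq_empty_iff.1 h hS)
  have hlt : ∀ S ∈ {S ∈ A | compress {i} {j} S ∉ A}, ∑ x ∈ compress {i} {j} S, x < ∑ x ∈ S, x := by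
    intro S hS
    obtain ⟨hSA, hcS⟩ := mem_filter.1 hS
    have hS' : i ∉ S ∧ j ∈ S := by
      by_contra hc
      rw [compress_singleton_of_not hc] at hcS
      exact hcS hSA
    have := sum_insert_erase_add hS'.1 hS'.2
    rw [compress_singleton_of_notMem_of_mem hS'.1 hS'.2]
    omega
  rw [familyWeight, familyWeight, compression, sum_union compress_disjoint]
  conv_rhs => rw [← filter_union_filter_not_eq (compress {i} {j} · ∈ A) A]
  rw [sum_union (disjoint_filter_filter_not _ _ _), add_lt_add_iff_left, filter_image,
    sum_image compress_injOn]
  exact sum_lt_sum_of_nonempty hM hlt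

lemma familyWeight_compression_le (hij : i < j) : familyWeight (𝓒 {i} {j} A) ≤ familyWeight A := by
  by_cases h : 𝓒 {i} {j} A = A
  · rw [h]
  · exact (familyWeight_compression_lt hij h).le

lemma exists_compression_ne_of_not_shiftedOn (h : ¬ ShiftedOn G A) :
    ∃ i ∈ G, ∃ j ∈ G, i < j ∧ 𝓒 {i} {j} A ≠ A := by
  simp only [ShiftedOn, not_forall] at h
  obtain ⟨i, hi, j, hj, hij, S, hS, hjS, hiS, hnot⟩ := h
  refine ⟨i, hi, j, hj, hij, fun hA => hnot ?_⟩
  rw [← compress_singleton_of_notMem_of_mem hiS hjS, ← hA]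
  exact compress_mem_compression hS

lemma ShiftedOn.nonMemberSubfamily (h : ShiftedOn G A) :
    ShiftedOn (G.erase b) (A.nonMemberSubfamily b) := by
  intro i hi j hj hij S hS hjS hiS
  rw [mem_nonMemberSubfamily] at hS ⊢
  refine ⟨h i (mem_of_mem_erase hi) j (mem_of_mem_erase hj) hij S hS.1 hjS hiS, ?_⟩
  simp only [mem_insert, mem_erase, not_or]
  exact ⟨(ne_of_mem_erase hi).symm, fun h => hS.2 h.2⟩

lemma ShiftedOn.memberSubfamily (h : ShiftedOn G A) :
    ShiftedOn (G.erase b) (A.memberSubfamily b) := by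
  intro i hi j hj hij S hS hjS hiS
  rw [mem_memberSubfamily] at hS ⊢
  have hib := ne_of_mem_erase hi
  have hjb := ne_of_mem_erase hj
  have := h i (mem_of_mem_erase hi) j (mem_of_mem_erase hj) hij _ hS.1 (mem_insert_of_mem hjS)
    (by simp [hib, hiS])
  rw [erase_insert_of_ne hjb.symm, insert_comm] at this
  refine ⟨this, ?_⟩
  simp only [mem_insert, mem_erase, not_or]
  exact ⟨hib.symm, fun h => hS.2 h.2⟩

/-- If `S ∪ {b}` and `T ∪ {b}` met only in the top element `b`, they would leave room for some
`x ∉ S ∪ T`, and shifting `b` to `x` would give a member of `A` disjoint from `T ∪ {b}`. -/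
lemma CrossIntersecting.memberSubfamily_of_shiftedOn (h : CrossIntersecting A B)
    (hA : A ⊆ powersetCard r G) (hB : B ⊆ powersetCard r G) (hSh : ShiftedOn G A)
    (hG : 2 * r ≤ #G) (hbG : b ∈ G) (hb : ∀ x ∈ G, x ≤ b) :
    CrossIntersecting (A.memberSubfamily b) (B.memberSubfamily b) := by
  intro S hS T hT
  rw [mem_memberSubfamily] at hS hT
  by_contra hST
  rw [not_nonempty_iff_eq_empty] at hST
  obtain ⟨hSG, hSr⟩ := mem_powersetCard.1 (hA hS.1)
  obtain ⟨hTG, hTr⟩ := mem_powersetCard.1 (hB hT.1)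
  have hcard : #(insert b S ∪ insert b T) < #G := by
    have := card_union_add_card_inter (insert b S) (insert b T)
    have : 0 < #(insert b S ∩ insert b T) := card_pos.2 ⟨b, by simp⟩
    omega
  obtain ⟨x, hxG, hxST⟩ := exists_mem_notMem_of_card_lt_card hcard
  simp only [mem_union, mem_insert, not_or] at hxST
  obtain ⟨⟨hxb, hxS⟩, -, hxT⟩ := hxST
  have hshift := hSh x hxG b hbG (lt_of_le_of_ne (hb x hxG) hxb) _ hS.1 (mem_insert_self _ _)
    (by simp [hxb, hxS])
  rw [erase_insert hS.2] at hshift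
  obtain ⟨y, hy⟩ := h _ hshift _ hT.1
  simp only [mem_inter, mem_insert] at hy
  obtain ⟨rfl | hyS, rfl | hyT⟩ := hy
  · exact hxb rfl
  · exact hxT hyT
  · exact hS.2 hyS
  · exact (not_nonempty_iff_eq_empty.2 hST) ⟨y, mem_inter.2 ⟨hyS, hyT⟩⟩

end Shifting

theorem card_add_card_le_of_shiftedOn {A B : Finset (Finset ℕ)} {r : ℕ} (G : Finset ℕ)
    (hr : 1 ≤ r) (hG : 2 * r ≤ #G)
    (hA : A ⊆ powersetCard r G) (hB : B ⊆ powersetCard r G) (hShA : ShiftedOn G A)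
    (hShB : ShiftedOn G B) (h : CrossIntersecting A B) (hAne : A.Nonempty) (hBne : B.Nonempty) :
    #A + #B ≤ (#G).choose r - (#G - r).choose r + 1 := by
  obtain rfl | hr := hr.eq_or_lt
  · have := h.card_eq_zero_or_card_le hA hB
    have := h.symm.card_eq_zero_or_card_le hB hA
    have := card_pos.2 hAne
    have := card_pos.2 hBne
    simp only [Nat.choose_one_right] at *
    omega
  obtain hG | hG := hG.eq_or_lt
  · have := h.card_add_card_le_choose hA hB hG.symm
    rw [← hG, show 2 * r - r = r by omega, Nat.choose_self]
    omega
  -- Split `A` and `B` by the largest element `b`. The induction hypothesis bounds the two pairs of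
  -- parts on the same level when both are non-empty, and a member of a non-empty part bounds the
  -- other level of the other family; together these cover every pattern of empty parts.
  have hGne : G.Nonempty := card_pos.1 (by omega)
  obtain ⟨b, hbG, hb⟩ : ∃ b ∈ G, ∀ x ∈ G, x ≤ b := ⟨G.max' hGne, G.max'_mem _, G.le_max'⟩
  have hG' : #(G.erase b) = #G - 1 := card_erase_of_mem hbG
  have hA₀ := nonMemberSubfamily_subset_powersetCard (b := b) hA
  have hB₀ := nonMemberSubfamily_subset_powersetCard (b := b) hB
  have hA₁ := memberSubfamily_subset_powersetCard (b := b) hA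
  have hB₁ := memberSubfamily_subset_powersetCard (b := b) hB
  have below := (#(A.nonMemberSubfamily b)).eq_zero_or_pos.imp_right fun hA₀' =>
    (#(B.nonMemberSubfamily b)).eq_zero_or_pos.imp_right fun hB₀' =>
    card_add_card_le_of_shiftedOn (G.erase b) (by omega) (by omega) hA₀ hB₀
      hShA.nonMemberSubfamily hShB.nonMemberSubfamily h.nonMemberSubfamily
      (card_pos.1 hA₀') (card_pos.1 hB₀')
  have top := (#(A.memberSubfamily b)).eq_zero_or_pos.imp_right fun hA₁' =>
    (#(B.memberSubfamily b)).eq_zero_or_pos.imp_right fun hB₁' =>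
    card_add_card_le_of_shiftedOn (G.erase b) (by omega) (by omega) hA₁ hB₁
      hShA.memberSubfamily hShB.memberSubfamily
      (h.memberSubfamily_of_shiftedOn hA hB hShA (by omega) hbG hb)
      (card_pos.1 hA₁') (card_pos.1 hB₁')
  have hB₁A₀ := h.nonMemberSubfamily_memberSubfamily.symm.card_eq_zero_or_card_le hB₁ hA₀
  have hA₁B₀ := h.symm.nonMemberSubfamily_memberSubfamily.symm.card_eq_zero_or_card_le hA₁ hB₀
  have hB₀A₁ := h.symm.nonMemberSubfamily_memberSubfamily.card_eq_zero_or_card_le hB₀ hA₁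
  have hA₀B₁ := h.nonMemberSubfamily_memberSubfamily.card_eq_zero_or_card_le hA₀ hB₁
  simp only [hG', show #G - 1 - (r - 1) = #G - r by omega,
    show #G - 1 - r = #G - r - 1 by omega] at below top hB₁A₀ hA₁B₀ hB₀A₁ hA₀B₁
  have := card_memberSubfamily_add_card_nonMemberSubfamily b A
  have := card_memberSubfamily_add_card_nonMemberSubfamily b B
  have := card_pos.2 hAne
  have := card_pos.2 hBne
  have := Nat.choose_eq_choose_pred_add (n := #G) (k := r) (by omega) (by omega)
  have := Nat.choose_eq_choose_pred_add (n := #G - r) (k := r) (by omega) (by omega)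
  have := Nat.choose_eq_choose_pred_add (n := #G - r) (k := r - 1) (by omega) (by omega)
  have : 0 < (#G - r - 1).choose (r - 1 - 1) := Nat.choose_pos (by omega)
  have : (#G - r - 1).choose (r - 1) ≤ (#G - 1).choose (r - 1) := Nat.choose_le_choose _ (by omega)
  have : (#G - r).choose r ≤ (#G - 1).choose r := Nat.choose_le_choose _ (by omega)
  omega
termination_by #G

theorem card_add_card_le_of_crossIntersecting {A B : Finset (Finset ℕ)} {r : ℕ} (G : Finset ℕ)
    (hr : 1 ≤ r) (hG : 2 * r ≤ #G) (hA : A ⊆ powersetCard r G) (hB : B ⊆ powersetCard r G)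
    (h : CrossIntersecting A B) (hAne : A.Nonempty) (hBne : B.Nonempty) :
    #A + #B ≤ (#G).choose r - (#G - r).choose r + 1 := by
  by_cases hSh : ShiftedOn G A ∧ ShiftedOn G B
  · exact card_add_card_le_of_shiftedOn G hr hG hA hB hSh.1 hSh.2 h hAne hBne
  obtain ⟨i, hi, j, hij, hne⟩ :
      ∃ i ∈ G, ∃ j, i < j ∧ (𝓒 {i} {j} A ≠ A ∨ 𝓒 {i} {j} B ≠ B) := by
    rcases not_and_or.1 hSh with hSh | hSh
    · obtain ⟨i, hi, j, -, hij, hne⟩ := exists_compression_ne_of_not_shiftedOn hSh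
      exact ⟨i, hi, j, hij, .inl hne⟩
    · obtain ⟨i, hi, j, -, hij, hne⟩ := exists_compression_ne_of_not_shiftedOn hSh
      exact ⟨i, hi, j, hij, .inr hne⟩
  have hlt : familyWeight (𝓒 {i} {j} A) + familyWeight (𝓒 {i} {j} B) <
      familyWeight A + familyWeight B := by
    have := familyWeight_compression_le (A := A) hij
    have := familyWeight_compression_le (A := B) hij
    rcases hne with hne | hne <;> have := familyWeight_compression_lt hij hne <;> omega
  have := card_add_card_le_of_crossIntersecting (A := 𝓒 {i} {j} A) (B := 𝓒 {i} {j} B) G hr hG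
    (compression_subset_powersetCard hA hi) (compression_subset_powersetCard hB hi) h.compression
    (card_pos.1 (by rw [card_compression]; exact card_pos.2 hAne))
    (card_pos.1 (by rw [card_compression]; exact card_pos.2 hBne))
  rwa [card_compression, card_compression] at this
termination_by familyWeight A + familyWeight B

section Shifted

variable {H F : Finset (Finset ℕ)} {D S : Finset ℕ} {k m n : ℕ}

lemma eq_empty_of_shiftedOn_of_forall_inter_nonempty (hH : H ⊆ powersetCard 1 (Icc 1 m))
    (hSh : ShiftedOn (Icc 1 m) H) (hmeet : ∀ S ∈ H, (S ∩ D).Nonempty) (hD : 1 ∉ D) : H = ∅ := by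
  have hmem : ∀ y, {y} ∈ H → y ∈ D := fun y hy => by
    obtain ⟨z, hz⟩ := hmeet _ hy
    rw [mem_inter, mem_singleton] at hz
    exact hz.1 ▸ hz.2
  refine eq_empty_of_forall_notMem fun S hS => ?_
  obtain ⟨hSm, hS1⟩ := mem_powersetCard.1 (hH hS)
  obtain ⟨x, rfl⟩ := card_eq_one.1 hS1
  have hxD := hmem x hS
  have hx := mem_Icc.1 (hSm (mem_singleton_self x))
  have h1x : 1 < x := lt_of_le_of_ne hx.1 fun h => hD (h ▸ hxD)
  have h1 := hSh 1 (mem_Icc.2 ⟨le_rfl, by omega⟩) x (hSm (mem_singleton_self x)) h1x {x} hS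
    (mem_singleton_self x) (by simp; omega)
  rw [erase_singleton, insert_empty] at h1
  exact hD (hmem 1 h1)

theorem card_erase_Icc_le_of_shiftedOn {H : Finset (Finset ℕ)} {c m r : ℕ} (hr : 1 ≤ r)
    (hrc : r ≤ c) (hcm : c < m) (hrm : 2 * r ≤ m) (hH : H ⊆ powersetCard r (Icc 1 m))
    (hSh : ShiftedOn (Icc 1 m) H) (hInt : CrossIntersecting H H)
    (hmeet : ∀ S ∈ H, (S ∩ Icc 2 (c + 1)).Nonempty) :
    #(H.erase (Icc 2 (c + 1))) ≤ (m - 1).choose (r - 1) - (m - c - 1).choose (r - 1) := by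
  have hD : #(Icc 2 (c + 1)) = c := by simp
  have hm : #(Icc 1 m) = m := by simp
  obtain rfl | hr := hr.eq_or_lt
  · rw [eq_empty_of_shiftedOn_of_forall_inter_nonempty hH hSh hmeet (by simp)]
    simp
  obtain hcm | hcm := Nat.succ_le_of_lt hcm |>.eq_or_lt
  · have := card_le_choose_of_intersecting hInt hH (by omega)
    have := card_le_card (erase_subset (Icc 2 (c + 1)) H)
    rw [show m - c - 1 = 0 by omega, Nat.choose_eq_zero_of_lt (by omega : 0 < r - 1)]
    rw [hm] at *
    omega
  obtain hrm | hrm := hrm.eq_or_lt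
  · subst hrm
    simpa [hD] using hInt.card_erase_le_of_card_eq_two_mul hH hm
      (Icc_subset_Icc (by norm_num) (by omega)) (by omega) hmeet hr
  have hmD : m ∉ Icc 2 (c + 1) := by simp; omega
  have hIcc : (Icc 1 m).erase m = Icc 1 (m - 1) := by ext; simp; omega
  have hH₀ := nonMemberSubfamily_subset_powersetCard (b := m) hH
  have hH₁ := memberSubfamily_subset_powersetCard (b := m) hH
  have hSh₀ := hSh.nonMemberSubfamily (b := m)
  have hSh₁ := hSh.memberSubfamily (b := m)
  rw [hIcc] at hH₀ hH₁ hSh₀ hSh₁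
  have below := card_erase_Icc_le_of_shiftedOn hr.le hrc (by omega) (by omega) hH₀ hSh₀
    hInt.nonMemberSubfamily fun S hS => hmeet S (mem_nonMemberSubfamily.1 hS).1
  have top := card_erase_Icc_le_of_shiftedOn (c := c) (m := m - 1) (r := r - 1) (by omega)
    (by omega) (by omega) (by omega) hH₁ hSh₁
    (hInt.memberSubfamily_of_shiftedOn hH hH hSh (by simp; omega) (by simp; omega)
      fun x hx => (mem_Icc.1 hx).2)
    (forall_inter_nonempty_memberSubfamily hmeet hmD)
  have hDH₁ : Icc 2 (c + 1) ∉ H.memberSubfamily m := fun hc => by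
    have := (mem_powersetCard.1 (hH₁ hc)).2
    omega
  rw [erase_eq_of_notMem hDH₁] at top
  have := card_erase_eq_of_notMem (H := H) hmD
  have := Nat.choose_eq_choose_pred_add (n := m - 1) (k := r - 1) (by omega) (by omega)
  have := Nat.choose_eq_choose_pred_add (n := m - c - 1) (k := r - 1) (by omega) (by omega)
  have : (m - c - 2).choose (r - 1) ≤ (m - 2).choose (r - 1) := Nat.choose_le_choose _ (by omega)
  have : (m - c - 2).choose (r - 2) ≤ (m - 2).choose (r - 2) := Nat.choose_le_choose _ (by omega)
  simp only [show m - 1 - 1 = m - 2 by omega, show m - 1 - c - 1 = m - c - 2 by omega,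
    show m - c - 1 - 1 = m - c - 2 by omega, show r - 1 - 1 = r - 2 by omega] at *
  omega
termination_by m

/-- Among the members of `F` avoiding `1`, one of least weight must be `[2, k + 1]`: otherwise
some shift lowers its weight. -/
lemma ShiftedOn.Icc_two_mem (hSh : ShiftedOn (Icc 1 n) F) (hF : F ⊆ powersetCard k (Icc 1 n))
    (hS : S ∈ F) (h1 : 1 ∉ S) : Icc 2 (k + 1) ∈ F := by
  obtain ⟨S, hS, hmin⟩ :=
    exists_min_image {S ∈ F | 1 ∉ S} (fun S => ∑ x ∈ S, x) ⟨S, mem_filter.2 ⟨hS, h1⟩⟩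
  obtain ⟨hSF, h1S⟩ := mem_filter.1 hS
  obtain ⟨hSn, hSk⟩ := mem_powersetCard.1 (hF hSF)
  have hcard : #(Icc 2 (k + 1)) = k := by simp
  by_contra hD
  have hne : S ≠ Icc 2 (k + 1) := fun h => hD (h ▸ hSF)
  obtain ⟨j, hjS, hjD⟩ := not_subset.1 fun h : S ⊆ Icc 2 (k + 1) =>
    hne (eq_of_subset_of_card_le h (by rw [hSk, hcard]))
  obtain ⟨i, hiD, hiS⟩ := not_subset.1 fun h : Icc 2 (k + 1) ⊆ S =>
    hne (eq_of_subset_of_card_le h (by rw [hSk, hcard])).symm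
  have hj := mem_Icc.1 (hSn hjS)
  have hi := mem_Icc.1 hiD
  have hj1 : j ≠ 1 := fun h => h1S (h ▸ hjS)
  have hjk : k + 1 < j := by simp only [mem_Icc, not_and_or] at hjD; omega
  have hT := hSh i (mem_Icc.2 ⟨by omega, by omega⟩) j (hSn hjS) (by omega) S hSF hjS hiS
  have h1T : 1 ∉ insert i (S.erase j) := by
    simp only [mem_insert, mem_erase, not_or]
    exact ⟨by omega, fun h => h1S h.2⟩
  have := hmin _ (mem_filter.2 ⟨hT, h1T⟩)
  have := sum_insert_erase_add hiS hjS
  omega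

theorem card_le_of_shiftedOn (hk : 1 ≤ k) (hn : 2 * k < n) (hF : F ⊆ powersetCard k (Icc 1 n))
    (hSh : ShiftedOn (Icc 1 n) F) (hInt : CrossIntersecting F F) (hS : S ∈ F) (h1 : 1 ∉ S) :
    #F ≤ (n - 1).choose (k - 1) - (n - k - 1).choose (k - 1) + 1 := by
  have hD := hSh.Icc_two_mem hF hS h1
  have := card_erase_Icc_le_of_shiftedOn hk le_rfl (by omega) hn.le hF hSh hInt
    fun T hT => hInt T hT _ hD
  rw [card_erase_of_mem hD] at this
  omega

end Shifted

section TwoPointCover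

variable {F : Finset (Finset ℕ)} {G S : Finset ℕ} {i j k x : ℕ}

lemma forall_mem_or_mem_of_forall_mem_compression (hx : ∀ S ∈ 𝓒 {i} {j} F, x ∈ S)
    (hnt : ∀ x, ∃ S ∈ F, x ∉ S) : ∀ S ∈ F, i ∈ S ∨ j ∈ S := by
  obtain rfl : x = i := by
    obtain ⟨S, hS, hxS⟩ := hnt x
    have := compress_singleton_subset (hx _ (compress_mem_compression hS))
    exact (mem_insert.1 this).resolve_right hxS
  intro S hS
  by_contra hc
  rw [not_or] at hc
  have := hx _ (compress_mem_compression hS)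
  rw [compress_singleton_of_not (fun h => hc.2 h.2)] at this
  exact hc.1 this

theorem card_le_of_forall_mem_or_mem (hk : 2 ≤ k) (hG : 2 * k ≤ #G)
    (hF : F ⊆ powersetCard k G) (hInt : CrossIntersecting F F) (hcover : ∀ S ∈ F, i ∈ S ∨ j ∈ S)
    (hi : ∃ S ∈ F, i ∉ S) (hj : ∃ S ∈ F, j ∉ S) :
    #F ≤ (#G - 1).choose (k - 1) - (#G - k - 1).choose (k - 1) + 1 := by
  obtain ⟨Si, hSi, hiSi⟩ := hi
  obtain ⟨Sj, hSj, hjSj⟩ := hj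
  have hjSi := (hcover Si hSi).resolve_left hiSi
  have hiSj := (hcover Sj hSj).resolve_right hjSj
  have hij : i ≠ j := fun h => hiSi (h ▸ hjSi)
  have hiG := (mem_powersetCard.1 (hF hSj)).1 hiSj
  have hjG := (mem_powersetCard.1 (hF hSi)).1 hjSi
  have hG' : #((G.erase i).erase j) = #G - 2 := by
    rw [card_erase_of_mem (mem_erase.2 ⟨hij.symm, hjG⟩), card_erase_of_mem hiG]
    omega
  have hXA := nonMemberSubfamily_subset_powersetCard (b := j)
    (memberSubfamily_subset_powersetCard (b := i) hF)
  have hXB := memberSubfamily_subset_powersetCard (b := j)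
    (nonMemberSubfamily_subset_powersetCard (b := i) hF)
  have hXAne : ((F.memberSubfamily i).nonMemberSubfamily j).Nonempty :=
    ⟨Sj.erase i, by simp [insert_erase hiSj, hSj, hjSj]⟩
  have hXBne : ((F.nonMemberSubfamily i).memberSubfamily j).Nonempty :=
    ⟨Si.erase j, by simp [insert_erase hjSi, hSi, hiSi]⟩
  have hcross := card_add_card_le_of_crossIntersecting _ (by omega) (by omega) hXA hXB
    (hInt.memberSubfamily_nonMemberSubfamily hij) hXAne hXBne
  have hX₂ := card_le_card (memberSubfamily_subset_powersetCard
    (memberSubfamily_subset_powersetCard (b := i) hF) (b := j))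
  rw [card_powersetCard] at hX₂
  rw [hG', show #G - 2 - (k - 1) = #G - k - 1 by omega] at hcross
  rw [hG', show k - 1 - 1 = k - 2 by omega] at hX₂
  have := card_eq_of_forall_mem_or_mem hcover
  have := Nat.choose_eq_choose_pred_add (n := #G - 1) (k := k - 1) (by omega) (by omega)
  have : (#G - k - 1).choose (k - 1) ≤ (#G - 2).choose (k - 1) := Nat.choose_le_choose _ (by omega)
  simp only [show #G - 1 - 1 = #G - 2 by omega, show k - 1 - 1 = k - 2 by omega] at *
  omega

end TwoPointCover

end HiltonMilner

open HiltonMilner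

/-- Hilton–Milner theorem. -/
theorem stmt1 (n k : ℕ) (hk : 2 ≤ k) (hn : 2 * k < n)
    (F : Finset (Finset ℕ)) (hF : F ⊆ (Finset.Icc 1 n).powersetCard k)
    (hint : ∀ A ∈ F, ∀ B ∈ F, (A ∩ B).Nonempty)
    (hnt : ∀ x : ℕ, ∃ A ∈ F, x ∉ A) :
    F.card ≤ (n - 1).choose (k - 1) - (n - k - 1).choose (k - 1) + 1 := by
  by_cases hSh : ShiftedOn (Icc 1 n) F
  · obtain ⟨S, hS, h1S⟩ := hnt 1
    exact card_le_of_shiftedOn (by omega) hn hF hSh hint hS h1S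
  obtain ⟨i, hi, j, -, hij, hne⟩ := exists_compression_ne_of_not_shiftedOn hSh
  by_cases hnt' : ∀ x, ∃ A ∈ 𝓒 {i} {j} F, x ∉ A
  · have := stmt1 n k hk hn _ (compression_subset_powersetCard hF hi)
      (CrossIntersecting.compression hint) hnt'
    rwa [card_compression] at this
  push Not at hnt'
  obtain ⟨x, hx⟩ := hnt'
  have := card_le_of_forall_mem_or_mem hk (by simp; omega) hF hint
    (forall_mem_or_mem_of_forall_mem_compression hx hnt) (hnt i) (hnt j)
  simpa using this
termination_by familyWeight F
decreasing_by exact familyWeight_compression_lt hij hne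
end

section
/- Let n ≥ 2k ≥ 4. If F and G are non-trivial, cross-intersecting families of k-subsets of [n], and both F and G are shifted (initial) families, then |F| + |G| ≤ (k+1) + Σ_{i=2}^{k} C(k+1, i)·C(n-k-1, k-i). -/
/-- The shifting partial order on finite sets of naturals. -/
def prec (A B : Finset ℕ) : Prop :=
  A.card = B.card ∧
    ∀ i < A.card, (A.sort (· ≤ ·)).getD i 0 ≤ (B.sort (· ≤ ·)).getD i 0

/-- A family of k-subsets of [n] is shifted (initial). -/
def IsShifted (n k : ℕ) (F : Finset (Finset ℕ)) : Prop :=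
  ∀ A ∈ (Finset.Icc 1 n).powersetCard k, ∀ B ∈ F, prec A B → A ∈ F

open Finset
open scoped symmDiff

/-!
Every member of `F` meets `[k+1]` in at least two points: `G` contains `{2, …, k+1}` (shift down
a member avoiding `1`), while a member of `F` meeting `[k+1]` at most once shifts down to
`{1, k+2, …, 2k}`, which misses `{2, …, k+1}`. So `F` and `G` live in the layers
`2 ≤ |B ∩ [k+1]| ≤ k`, whose sizes make up the sum in the bound. The top layer consists of the
`k+1` subsets of `[k+1]`; it may lie in both families, which accounts for the extra `k+1`.

The other layers are closed under the involution `B ↦ B ∆ [r]`, where `r ≤ n` is the last point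
with `|B ∩ [r]| = r/2`. Past `r` the set `B` is sparse, so the `k` smallest points of `[n]` outside
`B ∆ [r]` form a set `A ≼ B`. By shiftedness, `B ∈ F` then forces `B ∆ [r] ∉ G`; hence `F` and
the image of `G` are disjoint inside these layers.
-/

theorem List.Pairwise.getD_le_iff_lt_countP {l : List ℕ} (hl : l.Pairwise (· < ·)) {i : ℕ}
    (hi : i < l.length) (m : ℕ) : l.getD i 0 ≤ m ↔ i < l.countP (· ≤ m) := by
  induction l generalizing i with
  | nil => simp at hi
  | cons x t ih =>
    obtain ⟨hxt, ht⟩ := List.pairwise_cons.1 hl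
    by_cases hx : x ≤ m
    · cases i with
      | zero => simp [hx]
      | succ i =>
        rw [List.getD_cons_succ, ih ht (by simpa using hi)]
        simp [hx]
    · have h0 : t.countP (· ≤ m) = 0 :=
        List.countP_eq_zero.2 fun y hy => by have := hxt y hy; simp only [decide_eq_true_eq]; omega
      cases i with
      | zero => simp [hx, h0]
      | succ i =>
        rw [List.getD_cons_succ, ih ht (by simpa using hi)]
        simp [hx, h0]

theorem Finset.sort_getD_le_iff (A : Finset ℕ) {i : ℕ} (hi : i < #A) (m : ℕ) :
    (A.sort (· ≤ ·)).getD i 0 ≤ m ↔ i < #(A ∩ Iic m) := by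
  have hcount : (A.sort (· ≤ ·)).countP (· ≤ m) = #(A ∩ Iic m) := by
    rw [(sort_perm_toList A _).countP_eq, ← Multiset.coe_countP, coe_toList,
      Multiset.countP_eq_card_filter, ← filter_val, ← card_def]
    congr 1; ext; simp
  rw [← hcount]
  exact (sortedLT_sort A).pairwise.getD_le_iff_lt_countP (by rwa [length_sort]) m

def CountPrec (A B : Finset ℕ) : Prop :=
  ∀ m, #(B ∩ Iic m) ≤ #(A ∩ Iic m)

theorem CountPrec.prec {A B : Finset ℕ} (h : CountPrec A B) (hcard : #A = #B) : prec A B := by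
  refine ⟨hcard, fun i hi => ?_⟩
  have hiB : i < #(B ∩ Iic ((B.sort (· ≤ ·)).getD i 0)) :=
    (B.sort_getD_le_iff (hcard ▸ hi) _).1 le_rfl
  exact (A.sort_getD_le_iff hi _).2 (hiB.trans_le (h _))

theorem CountPrec.union {A₁ A₂ B₁ B₂ : Finset ℕ} (h₁ : CountPrec A₁ B₁) (h₂ : CountPrec A₂ B₂)
    (hA : Disjoint A₁ A₂) (hB : Disjoint B₁ B₂) : CountPrec (A₁ ∪ A₂) (B₁ ∪ B₂) := by
  intro m
  rw [union_inter_distrib_right, union_inter_distrib_right,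
    card_union_of_disjoint (hA.mono inter_subset_left inter_subset_left),
    card_union_of_disjoint (hB.mono inter_subset_left inter_subset_left)]
  exact add_le_add (h₁ m) (h₂ m)

theorem countPrec_singleton {i j : ℕ} (h : i ≤ j) : CountPrec {i} {j} := by
  intro m
  by_cases hj : j ≤ m
  · simp [singleton_inter_of_mem, mem_Iic.2 hj, mem_Iic.2 (h.trans hj)]
  · simp [singleton_inter_of_notMem, mem_Iic, hj]

theorem countPrec_Ioc_of_forall_lt {a : ℕ} {B : Finset ℕ} (hB : ∀ b ∈ B, a < b) :
    CountPrec (Ioc a (a + #B)) B := by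
  intro m
  have hIoc : Ioc a (a + #B) ∩ Iic m = Ioc a (min (a + #B) m) := by ext; simp; omega
  have hle : #(B ∩ Iic m) ≤ #(Ioc a m) :=
    card_le_card fun x hx => by
      have := hB x (mem_inter.1 hx).1; simp_all
  have := card_le_card (inter_subset_left (s₁ := B) (s₂ := Iic m))
  rw [hIoc, Nat.card_Ioc]; rw [Nat.card_Ioc] at hle; omega

theorem exists_subset_card_eq_min_le_card_inter_Iic (S : Finset ℕ) :
    ∀ t ≤ #S, ∃ E ⊆ S, #E = t ∧ ∀ m, min t #(S ∩ Iic m) ≤ #(E ∩ Iic m) := by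
  induction S using Finset.induction_on_max with
  | empty => intro t ht; exact ⟨∅, empty_subset _, by simp_all, by simp⟩
  | insert a s hlt ih =>
    intro t ht
    rw [card_insert_of_notMem fun ha => (hlt a ha).false] at ht
    rcases ht.lt_or_eq with ht | rfl
    · obtain ⟨E, hEs, hEt, hE⟩ := ih t (by omega)
      refine ⟨E, hEs.trans (subset_insert a s), hEt, fun m => ?_⟩
      by_cases ham : a ≤ m
      · have hE : E ∩ Iic m = E :=
          inter_eq_left.2 fun x hx => mem_Iic.2 ((hlt x (hEs hx)).le.trans ham)
        rw [hE, hEt]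
        exact min_le_left _ _
      · rw [insert_inter_of_notMem (by simpa using ham)]; exact hE m
    · refine ⟨insert a s, Subset.rfl, card_insert_of_notMem fun ha => (hlt a ha).false, ?_⟩
      exact fun m => min_le_right _ _

theorem CountPrec.exists_subset {S D : Finset ℕ} (h : CountPrec S D) :
    ∃ E ⊆ S, #E = #D ∧ CountPrec E D := by
  have hD : D ∩ Iic (D.sup id) = D := inter_eq_left.2 fun x hx => mem_Iic.2 (le_sup (f := id) hx)
  have hDS : #D ≤ #S := by
    have := h (D.sup id)
    rw [hD] at this
    exact this.trans (card_le_card inter_subset_left)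
  obtain ⟨E, hES, hEc, hE⟩ := exists_subset_card_eq_min_le_card_inter_Iic S #D hDS
  exact ⟨E, hES, hEc, fun m => (le_min (card_le_card inter_subset_left) (h m)).trans (hE m)⟩

theorem card_symmDiff_add_two_mul_card_inter {α : Type*} [DecidableEq α] (s t : Finset α) :
    #(s ∆ t) + 2 * #(s ∩ t) = #s + #t := by
  rw [symmDiff_def, sup_eq_union, card_union_of_disjoint disjoint_sdiff_sdiff]
  have hs := card_sdiff_add_card_inter s t
  have ht := card_sdiff_add_card_inter t s
  rw [inter_comm] at ht
  omega

theorem card_sdiff_inter_Iic_add {U S : Finset ℕ} (hS : S ⊆ U) (m : ℕ) :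
    #((U \ S) ∩ Iic m) + #(S ∩ Iic m) = #(U ∩ Iic m) := by
  have : (U \ S) ∩ Iic m = (U ∩ Iic m) \ (S ∩ Iic m) := by ext x; by_cases hx : x ≤ m <;> simp [hx]
  rw [this, card_sdiff_add_card_eq_card (inter_subset_inter_right hS)]

theorem card_Icc_one_inter_Iic (n m : ℕ) : #(Icc 1 n ∩ Iic m) = min n m := by
  have : Icc 1 n ∩ Iic m = Icc 1 (min n m) := by ext; simp; omega
  rw [this, Nat.card_Icc]; omega

theorem card_filter_powersetCard_card_inter_eq {α : Type*} [DecidableEq α] (U s : Finset α)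
    {k i : ℕ} (hi : i ≤ k) :
    #{A ∈ U.powersetCard k | #(A ∩ s) = i} = (#(U ∩ s)).choose i * (#(U \ s)).choose (k - i) := by
  have hsplit : ∀ {P Q : Finset α}, P ⊆ U ∩ s → Q ⊆ U \ s → (P ∪ Q) ∩ s = P ∧ (P ∪ Q) \ s = Q := by
    intro P Q hP hQ
    constructor <;> ext x <;> have := @hP x <;> have := @hQ x <;>
      simp only [mem_union, mem_inter, mem_sdiff] at * <;> grind
  rw [← card_powersetCard, ← card_powersetCard, ← card_product]
  refine card_nbij' (fun A => (A ∩ s, A \ s)) (fun p => p.1 ∪ p.2) ?_ ?_ ?_ ?_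
  · intro A hA
    simp only [mem_coe, mem_filter, mem_product, mem_powersetCard] at hA ⊢
    obtain ⟨⟨hAU, hAk⟩, hAi⟩ := hA
    have := card_sdiff_add_card_inter A s
    exact ⟨⟨inter_subset_inter_right hAU, hAi⟩, sdiff_subset_sdiff hAU le_rfl, by omega⟩
  · rintro ⟨P, Q⟩ hPQ
    simp only [mem_coe, mem_filter, mem_product, mem_powersetCard] at hPQ ⊢
    obtain ⟨⟨hP, hPi⟩, hQ, hQk⟩ := hPQ
    have hPQ : Disjoint P Q :=
      disjoint_of_subset_left (hP.trans inter_subset_right)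
        (disjoint_of_subset_right hQ disjoint_sdiff)
    refine ⟨⟨union_subset (hP.trans inter_subset_left) (hQ.trans sdiff_subset), ?_⟩, ?_⟩
    · rw [card_union_of_disjoint hPQ]; omega
    · rw [(hsplit hP hQ).1, hPi]
  · intro A _
    exact (union_comm _ _).trans (sdiff_union_inter A s)
  · rintro ⟨P, Q⟩ hPQ
    simp only [mem_coe, mem_product, mem_powersetCard] at hPQ
    simp only [hsplit hPQ.1.1 hPQ.2.1]

theorem card_filter_card_inter_Iic_eq {n k i : ℕ} (hkn : k + 1 ≤ n) (hi : i ≤ k) :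
    #{B ∈ (Icc 1 n).powersetCard k | #(B ∩ Iic (k + 1)) = i} =
      (k + 1).choose i * (n - k - 1).choose (k - i) := by
  rw [card_filter_powersetCard_card_inter_eq _ _ hi, card_sdiff, inter_comm (Iic _),
    card_Icc_one_inter_Iic, Nat.card_Icc, min_eq_right hkn]
  congr 2

theorem card_filter_card_inter_Iic_mem {n k : ℕ} (hkn : k + 1 ≤ n) {I : Finset ℕ}
    (hI : ∀ i ∈ I, i ≤ k) :
    #{B ∈ (Icc 1 n).powersetCard k | #(B ∩ Iic (k + 1)) ∈ I} =
      ∑ i ∈ I, (k + 1).choose i * (n - k - 1).choose (k - i) := by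
  set L := {B ∈ (Icc 1 n).powersetCard k | #(B ∩ Iic (k + 1)) ∈ I}
  rw [card_eq_sum_card_fiberwise (s := L) (t := I) fun B hB => (mem_filter.1 hB).2]
  refine sum_congr rfl fun i hi => ?_
  rw [filter_filter, ← card_filter_card_inter_Iic_eq hkn (hI i hi)]
  congr 1
  exact filter_congr fun B _ => ⟨fun h => h.2, fun h => ⟨h ▸ hi, h⟩⟩

theorem IsShifted.Ioc_one_mem {n k : ℕ} (hkn : k + 1 ≤ n) {G : Finset (Finset ℕ)}
    (hG : G ⊆ (Icc 1 n).powersetCard k) (hsG : IsShifted n k G) (hntG : ∃ B ∈ G, 1 ∉ B) :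
    Ioc 1 (1 + k) ∈ G := by
  obtain ⟨B, hBG, h1B⟩ := hntG
  obtain ⟨hBsub, hBcard⟩ := mem_powersetCard.1 (hG hBG)
  have hB1 : ∀ b ∈ B, 1 < b := fun b hb =>
    lt_of_le_of_ne (mem_Icc.1 (hBsub hb)).1 fun h => h1B (h ▸ hb)
  have hprec := countPrec_Ioc_of_forall_lt hB1
  rw [hBcard] at hprec
  refine hsG _ (mem_powersetCard.2 ⟨fun x hx => ?_, by simp⟩) B hBG (hprec.prec (by simp [hBcard]))
  simp only [mem_Ioc, mem_Icc] at hx ⊢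
  omega

theorem two_le_card_inter_Iic {n k : ℕ} (hk : 1 ≤ k) (hn : 2 * k ≤ n)
    {F G : Finset (Finset ℕ)} (hF : F ⊆ (Icc 1 n).powersetCard k)
    (hG : G ⊆ (Icc 1 n).powersetCard k)
    (hsF : IsShifted n k F) (hsG : IsShifted n k G)
    (hcross : ∀ A ∈ F, ∀ B ∈ G, (A ∩ B).Nonempty) (hntG : ∃ B ∈ G, 1 ∉ B)
    {A : Finset ℕ} (hA : A ∈ F) : 2 ≤ #(A ∩ Iic (k + 1)) := by
  have hIG := hsG.Ioc_one_mem (by omega) hG hntG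
  have hAcard := (mem_powersetCard.1 (hF hA)).2
  by_contra! htrace
  obtain ⟨j, hj⟩ := hcross A hA _ hIG
  simp only [mem_inter, mem_Ioc] at hj
  have hAj : A ∩ Iic (k + 1) = {j} :=
    eq_singleton_iff_unique_mem.2 ⟨by simp [hj.1]; omega,
      fun x hx => card_le_one.1 (by omega) x hx j (by simp [hj.1]; omega)⟩
  have hsplit := card_sdiff_add_card_inter A (Iic (k + 1))
  set U := A \ Iic (k + 1)
  have hUcard : #U = k - 1 := by
    rw [hAj, card_singleton] at hsplit
    omega
  have hU : ∀ b ∈ U, k + 1 < b := fun b hb => by simpa using (mem_sdiff.1 hb).2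
  have hprec : CountPrec (Ioc (k + 1) (k + 1 + #U) ∪ {1}) A := by
    rw [← sdiff_union_inter A (Iic (k + 1)), hAj]
    refine (countPrec_Ioc_of_forall_lt hU).union (countPrec_singleton (by omega)) ?_ ?_
    · simp
    · simp [U, hj.1]; omega
  have hA'F : Ioc (k + 1) (k + 1 + #U) ∪ {1} ∈ F := by
    refine hsF _ (mem_powersetCard.2 ⟨fun x hx => ?_, ?_⟩) A hA (hprec.prec ?_)
    · simp only [mem_union, mem_singleton, mem_Ioc, mem_Icc] at hx ⊢; omega
    all_goals rw [card_union_of_disjoint (by simp), card_singleton, Nat.card_Ioc]; omega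
  obtain ⟨x, hx⟩ := hcross _ hA'F _ hIG
  simp only [mem_inter, mem_union, mem_singleton, mem_Ioc] at hx
  omega

section Reflection

variable {n : ℕ} {B : Finset ℕ}

def lastBalancedPoint (n : ℕ) (B : Finset ℕ) : ℕ :=
  Nat.findGreatest (fun r => 2 * #(B ∩ Iic r) = r) n

theorem lastBalancedPoint_le : lastBalancedPoint n B ≤ n :=
  Nat.findGreatest_le n

theorem le_lastBalancedPoint {m : ℕ} (hmn : m ≤ n) (hm : 2 * #(B ∩ Iic m) = m) :
    m ≤ lastBalancedPoint n B :=
  Nat.le_findGreatest hmn hm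

theorem two_mul_card_inter_Iic_ne_of_lastBalancedPoint_lt {m : ℕ}
    (hrm : lastBalancedPoint n B < m) (hmn : m ≤ n) : 2 * #(B ∩ Iic m) ≠ m :=
  Nat.findGreatest_is_greatest (P := fun r => 2 * #(B ∩ Iic r) = r) hrm hmn

theorem two_mul_card_inter_Iic_lastBalancedPoint (h0 : 0 ∉ B) :
    2 * #(B ∩ Iic (lastBalancedPoint n B)) = lastBalancedPoint n B :=
  Nat.findGreatest_spec (P := fun r => 2 * #(B ∩ Iic r) = r) (Nat.zero_le n)
    (by rw [show B ∩ Iic 0 = ∅ by ext x; simp; rintro hx rfl; exact h0 hx]; rfl)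

theorem two_mul_card_inter_Iic_lt (hn : 2 * #B ≤ n) {m : ℕ} (hrm : lastBalancedPoint n B < m)
    (hmn : m ≤ n) : 2 * #(B ∩ Iic m) < m := by
  induction hmn using Nat.decreasingInduction with
  | self =>
    have hle : #(B ∩ Iic n) ≤ #B := card_le_card inter_subset_left
    exact lt_of_le_of_ne (by omega) (two_mul_card_inter_Iic_ne_of_lastBalancedPoint_lt hrm le_rfl)
  | of_succ m hmn ih =>
    have hle : #(B ∩ Iic m) ≤ #(B ∩ Iic (m + 1)) := by gcongr; simp
    exact lt_of_le_of_ne (by have := ih (by omega); omega)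
      (two_mul_card_inter_Iic_ne_of_lastBalancedPoint_lt hrm hmn.le)

theorem two_mul_card_inter_Iic_le_min (h0 : 0 ∉ B) (hn : 2 * #B ≤ n) {m : ℕ}
    (hrm : lastBalancedPoint n B ≤ m) : 2 * #(B ∩ Iic m) ≤ min m n := by
  have hB : #(B ∩ Iic m) ≤ #B := card_le_card inter_subset_left
  refine le_min ?_ (by omega)
  rcases hrm.eq_or_lt with rfl | hrm
  · exact (two_mul_card_inter_Iic_lastBalancedPoint h0).le
  · rcases le_or_gt m n with hmn | hmn
    · exact (two_mul_card_inter_Iic_lt hn hrm hmn).le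
    · omega

def reflect (n : ℕ) (B : Finset ℕ) : Finset ℕ :=
  B ∆ Icc 1 (lastBalancedPoint n B)

theorem zero_notMem_of_subset_Icc_one (hB : B ⊆ Icc 1 n) : 0 ∉ B := fun h => by simpa using hB h

theorem card_reflect_inter_Iic_of_le (hB : B ⊆ Icc 1 n) {m : ℕ}
    (hm : lastBalancedPoint n B ≤ m) :
    #(reflect n B ∩ Iic m) = #(B ∩ Iic m) := by
  set r := lastBalancedPoint n B
  have hsplit : reflect n B ∩ Iic m = (B ∩ Iic m) ∆ Icc 1 r := by
    ext x; simp only [reflect, mem_inter, mem_symmDiff, mem_Iic, mem_Icc]; grind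
  have hhalf : B ∩ Iic m ∩ Icc 1 r = B ∩ Iic r := by
    ext x; have := @hB x; simp only [mem_inter, mem_Iic, mem_Icc] at this ⊢; grind
  have := card_symmDiff_add_two_mul_card_inter (B ∩ Iic m) (Icc 1 r)
  rw [← hsplit, hhalf, two_mul_card_inter_Iic_lastBalancedPoint
    (zero_notMem_of_subset_Icc_one hB), Nat.card_Icc] at this
  omega

theorem card_reflect_inter_Iic_add_of_ge (hB : B ⊆ Icc 1 n) {m : ℕ}
    (hm : m ≤ lastBalancedPoint n B) :
    #(reflect n B ∩ Iic m) + #(B ∩ Iic m) = m := by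
  have h₁ : reflect n B ∩ Iic m = Icc 1 m \ B := by
    ext x; have := @hB x; simp only [reflect, mem_inter, mem_symmDiff, mem_sdiff, mem_Iic,
      mem_Icc] at this ⊢; grind
  have h₂ : Icc 1 m ∩ B = B ∩ Iic m := by
    ext x; have := @hB x; simp only [mem_inter, mem_Iic, mem_Icc] at this ⊢; grind
  rw [h₁, ← h₂, card_sdiff_add_card_inter, Nat.card_Icc, Nat.add_sub_cancel]

theorem reflect_subset (hB : B ⊆ Icc 1 n) : reflect n B ⊆ Icc 1 n :=
  symmDiff_le_sup.trans (union_subset hB (Icc_subset_Icc_right lastBalancedPoint_le))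

theorem card_reflect (hB : B ⊆ Icc 1 n) : #(reflect n B) = #B := by
  have h := card_reflect_inter_Iic_of_le hB (lastBalancedPoint_le (n := n))
  rwa [inter_eq_left.2 ((reflect_subset hB).trans Icc_subset_Iic_self),
    inter_eq_left.2 (hB.trans Icc_subset_Iic_self)] at h

theorem lastBalancedPoint_reflect (hB : B ⊆ Icc 1 n) :
    lastBalancedPoint n (reflect n B) = lastBalancedPoint n B := by
  have hr := card_reflect_inter_Iic_of_le hB (le_refl (lastBalancedPoint n B))
  have hr' := two_mul_card_inter_Iic_lastBalancedPoint (n := n)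
    (zero_notMem_of_subset_Icc_one (reflect_subset hB))
  have hle : lastBalancedPoint n B ≤ lastBalancedPoint n (reflect n B) :=
    le_lastBalancedPoint lastBalancedPoint_le
      (by rw [hr, two_mul_card_inter_Iic_lastBalancedPoint (zero_notMem_of_subset_Icc_one hB)])
  refine le_antisymm ?_ hle
  rw [card_reflect_inter_Iic_of_le hB hle] at hr'
  exact le_lastBalancedPoint lastBalancedPoint_le hr'

theorem reflect_reflect (hB : B ⊆ Icc 1 n) : reflect n (reflect n B) = B := by
  rw [reflect, lastBalancedPoint_reflect hB, reflect, symmDiff_symmDiff_cancel_right]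

end Reflection

theorem countPrec_Icc_sdiff_reflect {n : ℕ} {B : Finset ℕ} (hB : B ⊆ Icc 1 n)
    (hn : 2 * #B ≤ n) : CountPrec (Icc 1 n \ reflect n B) B := by
  intro m
  have hW := card_sdiff_inter_Iic_add (reflect_subset hB) m
  rw [card_Icc_one_inter_Iic] at hW
  rcases le_total m (lastBalancedPoint n B) with hm | hm
  · have := card_reflect_inter_Iic_add_of_ge hB hm
    have := (lastBalancedPoint_le (n := n) (B := B))
    omega
  · have := two_mul_card_inter_Iic_le_min (zero_notMem_of_subset_Icc_one hB) hn hm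
    rw [card_reflect_inter_Iic_of_le hB hm] at hW
    omega

theorem exists_prec_disjoint_reflect {n : ℕ} {B : Finset ℕ} (hB : B ⊆ Icc 1 n)
    (hn : 2 * #B ≤ n) : ∃ A ⊆ Icc 1 n, #A = #B ∧ prec A B ∧ Disjoint A (reflect n B) := by
  obtain ⟨A, hA, hAcard, hAB⟩ := (countPrec_Icc_sdiff_reflect hB hn).exists_subset
  exact ⟨A, hA.trans sdiff_subset, hAcard, hAB.prec hAcard,
    disjoint_of_subset_left hA sdiff_disjoint⟩

theorem card_inter_add_card_inter_le_of_reflect_mem {n k : ℕ} (hn : 2 * k ≤ n)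
    {R F G : Finset (Finset ℕ)} (hR : R ⊆ (Icc 1 n).powersetCard k)
    (hRrefl : ∀ B ∈ R, reflect n B ∈ R) (hsF : IsShifted n k F)
    (hcross : ∀ A ∈ F, ∀ B ∈ G, (A ∩ B).Nonempty) :
    #(F ∩ R) + #(G ∩ R) ≤ #R := by
  have hRsub : ∀ B ∈ R, B ⊆ Icc 1 n ∧ #B = k := fun B hB => mem_powersetCard.1 (hR hB)
  have hinj : Set.InjOn (reflect n) ↑(G ∩ R) := fun B hB C hC hBC => by
    rw [← reflect_reflect (hRsub B (mem_inter.1 hB).2).1, hBC,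
      reflect_reflect (hRsub C (mem_inter.1 hC).2).1]
  have hdisj : Disjoint (F ∩ R) ((G ∩ R).image (reflect n)) := by
    refine disjoint_left.2 fun B hBFR hBim => ?_
    obtain ⟨hBF, hBR⟩ := mem_inter.1 hBFR
    obtain ⟨C, hCGR, rfl⟩ := mem_image.1 hBim
    obtain ⟨hCG, hCR⟩ := mem_inter.1 hCGR
    obtain ⟨hCsub, hCcard⟩ := hRsub C hCR
    obtain ⟨A, hAsub, hAcard, hAB, hAC⟩ :=
      exists_prec_disjoint_reflect (reflect_subset hCsub) (by rw [card_reflect hCsub]; omega)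
    rw [reflect_reflect hCsub] at hAC
    have hAF : A ∈ F :=
      hsF A (mem_powersetCard.2 ⟨hAsub, by rw [hAcard, card_reflect hCsub, hCcard]⟩) _ hBF hAB
    exact (disjoint_iff_inter_eq_empty.1 hAC ▸ hcross A hAF C hCG).ne_empty rfl
  calc #(F ∩ R) + #(G ∩ R) = #((F ∩ R) ∪ (G ∩ R).image (reflect n)) := by
        rw [card_union_of_disjoint hdisj, card_image_of_injOn hinj]
    _ ≤ #R := card_le_card (union_subset inter_subset_right
        (image_subset_iff.2 fun B hB => hRrefl B (mem_inter.1 hB).2))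

theorem reflect_mem_filter_card_inter_Iic_mem_Ico {n k : ℕ} {B : Finset ℕ}
    (hB : B ∈ {C ∈ (Icc 1 n).powersetCard k | #(C ∩ Iic (k + 1)) ∈ Ico 2 k}) :
    reflect n B ∈ {C ∈ (Icc 1 n).powersetCard k | #(C ∩ Iic (k + 1)) ∈ Ico 2 k} := by
  obtain ⟨hBk, htr⟩ := mem_filter.1 hB
  obtain ⟨hBsub, hBcard⟩ := mem_powersetCard.1 hBk
  refine mem_filter.2
    ⟨mem_powersetCard.2 ⟨reflect_subset hBsub, (card_reflect hBsub).trans hBcard⟩, ?_⟩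
  rcases le_total (lastBalancedPoint n B) (k + 1) with hr | hr
  · rwa [card_reflect_inter_Iic_of_le hBsub hr]
  · have := card_reflect_inter_Iic_add_of_ge hBsub hr
    simp only [mem_Ico] at htr ⊢
    omega

theorem sdiff_filter_subset_filter_card_inter_Iic_eq {n k : ℕ} {F : Finset (Finset ℕ)}
    (hF : F ⊆ (Icc 1 n).powersetCard k) (htr : ∀ A ∈ F, 2 ≤ #(A ∩ Iic (k + 1))) :
    F \ {B ∈ (Icc 1 n).powersetCard k | #(B ∩ Iic (k + 1)) ∈ Ico 2 k} ⊆
      {B ∈ (Icc 1 n).powersetCard k | #(B ∩ Iic (k + 1)) = k} := by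
  intro A hA
  obtain ⟨hAF, hAR⟩ := mem_sdiff.1 hA
  have hAk := hF hAF
  have := (card_le_card (inter_subset_left (s₁ := A) (s₂ := Iic (k + 1)))).trans_eq
    (mem_powersetCard.1 hAk).2
  have := htr A hAF
  simp only [mem_filter, mem_Ico, hAk, true_and, not_and, not_lt] at hAR ⊢
  omega

/-- Maximum of |F| + |G| for non-trivial cross-intersecting initial families. -/
theorem stmt4 (n k : ℕ) (hk : 2 ≤ k) (hn : 2 * k ≤ n)
    (F G : Finset (Finset ℕ))
    (hF : F ⊆ (Finset.Icc 1 n).powersetCard k)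
    (hG : G ⊆ (Finset.Icc 1 n).powersetCard k)
    (hsF : IsShifted n k F) (hsG : IsShifted n k G)
    (hcross : ∀ A ∈ F, ∀ B ∈ G, (A ∩ B).Nonempty)
    (hntF : ∀ x : ℕ, ∃ A ∈ F, x ∉ A)
    (hntG : ∀ x : ℕ, ∃ B ∈ G, x ∉ B) :
    F.card + G.card ≤
      (k + 1) + ∑ i ∈ Finset.Icc 2 k, (k + 1).choose i * (n - k - 1).choose (k - i) := by
  set R := {B ∈ (Icc 1 n).powersetCard k | #(B ∩ Iic (k + 1)) ∈ Ico 2 k}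
  set P := {B ∈ (Icc 1 n).powersetCard k | #(B ∩ Iic (k + 1)) = k}
  have hFP : F \ R ⊆ P := sdiff_filter_subset_filter_card_inter_Iic_eq hF fun A hA =>
    two_le_card_inter_Iic (by omega) hn hF hG hsF hsG hcross (hntG 1) hA
  have hGP : G \ R ⊆ P := sdiff_filter_subset_filter_card_inter_Iic_eq hG fun B hB =>
    two_le_card_inter_Iic (by omega) hn hG hF hsG hsF
      (fun B hB A hA => inter_comm A B ▸ hcross A hA B hB) (hntF 1) hB
  have hR : #(F ∩ R) + #(G ∩ R) ≤ #R := card_inter_add_card_inter_le_of_reflect_mem hn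
    (filter_subset _ _) (fun B => reflect_mem_filter_card_inter_Iic_mem_Ico) hsF hcross
  have hRcard : #R = ∑ i ∈ Ico 2 k, (k + 1).choose i * (n - k - 1).choose (k - i) :=
    card_filter_card_inter_Iic_mem (by omega) fun i hi => (mem_Ico.1 hi).2.le
  have hPcard : #P = k + 1 := by
    rw [card_filter_card_inter_Iic_eq (by omega) le_rfl, Nat.choose_succ_self_right, Nat.sub_self,
      Nat.choose_zero_right, mul_one]
  calc #F + #G = (#(F ∩ R) + #(G ∩ R)) + (#(F \ R) + #(G \ R)) := by
        rw [← card_sdiff_add_card_inter F R, ← card_sdiff_add_card_inter G R]; omega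
    _ ≤ #R + (#P + #P) := add_le_add hR (add_le_add (card_le_card hFP) (card_le_card hGP))
    _ = (k + 1) + ∑ i ∈ Icc 2 k, (k + 1).choose i * (n - k - 1).choose (k - i) := by
        rw [← Ico_add_one_right_eq_Icc, sum_Ico_succ_top hk, ← hRcard, hPcard,
          Nat.choose_succ_self_right, Nat.sub_self, Nat.choose_zero_right]
        ring
end

section
/- Let k ≥ ℓ > 0 and n ≥ k + ℓ. If F ⊆ C([n],k) and G ⊆ C([n],ℓ) are non-empty and cross-intersecting, then |F| + |G| ≤ C(n,k) - C(n-ℓ,k) + 1. -/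
open Finset
open scoped FinsetFamily

namespace FT5

/-! ### Binomial facts -/

lemma choose_climb {m : ℕ} : ∀ j i, i ≤ j → 2 * j ≤ m + 1 → m.choose i ≤ m.choose j := by
  intro j
  induction j with
  | zero =>
    intro i hi _
    have : i = 0 := by omega
    subst this
    exact le_rfl
  | succ j ihj =>
    intro i hi hm
    rcases Nat.eq_or_lt_of_le hi with rfl | hlt
    · exact le_rfl
    · have h1 : m.choose i ≤ m.choose j := ihj i (by omega) (by omega)
      refine h1.trans ?_
      rcases Nat.lt_or_ge (2 * j + 1) m with h | h
      · exact Nat.choose_le_succ_of_lt_half_left (by omega)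
      · -- 2*j+1 = m
        have hm2 : 2 * j + 1 = m := by omega
        have hj : j ≤ m := by omega
        have : m.choose (m - j) = m.choose j := Nat.choose_symm hj
        have hmj : m - j = j + 1 := by omega
        rw [hmj] at this
        exact this.ge

lemma choose_mid {m i j : ℕ} (hij : i ≤ j) (hjm : i + j ≤ m) : m.choose i ≤ m.choose j := by
  rcases le_or_gt (2 * j) (m + 1) with h | h
  · exact choose_climb j i hij h
  · have hj : j ≤ m := by omega
    have h2 : m.choose (m - j) = m.choose j := Nat.choose_symm hj
    rw [← h2]
    exact choose_climb (m - j) i (by omega) (by omega)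

lemma ineqA (l d : ℕ) : ∀ a, a ≤ l → ∀ N, a + l + d ≤ N →
    N.choose a + (N - l).choose (a + d) ≤ N.choose (a + d) + (N - (l + d)).choose a := by
  intro a
  induction a with
  | zero =>
    intro _ N hN
    simp only [Nat.choose_zero_right, Nat.zero_add, zero_add]
    have h1 : (N - l).choose d ≤ N.choose d := Nat.choose_le_choose d (Nat.sub_le N l)
    omega
  | succ a ih2 =>
    intro ha N hN
    induction N, hN using Nat.le_induction with
    | base =>
      have e1 : a + 1 + l + d - l = a + 1 + d := by omega
      have e2 : a + 1 + l + d - (l + d) = a + 1 := by omega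
      rw [e1, e2, Nat.choose_self, Nat.choose_self]
      have : (a + 1 + l + d).choose (a + 1) ≤ (a + 1 + l + d).choose (a + 1 + d) :=
        choose_mid (by omega) (by omega)
      omega
    | succ N hN ihN =>
      have r1 : N + 1 - l = (N - l) + 1 := by omega
      have r2 : N + 1 - (l + d) = (N - (l + d)) + 1 := by omega
      have r3 : a + 1 + d = (a + d) + 1 := by omega
      rw [r1, r2, r3, Nat.choose_succ_succ', Nat.choose_succ_succ', Nat.choose_succ_succ',
        Nat.choose_succ_succ']
      have H1 := ih2 (by omega) N (by omega)
      have H2 := ihN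
      rw [r3] at H2
      omega

/-! ### Counting lemma -/

lemma card_meets {N r : ℕ} {B : Finset ℕ} (hB : B ⊆ Icc 1 N) {𝒜 : Finset (Finset ℕ)}
    (h𝒜 : 𝒜 ⊆ (Icc 1 N).powersetCard r) (hm : ∀ A ∈ 𝒜, (A ∩ B).Nonempty) :
    𝒜.card + (N - B.card).choose r ≤ N.choose r := by
  have hd : Disjoint 𝒜 ((Icc 1 N \ B).powersetCard r) := by
    rw [disjoint_left]
    intro A hA hA'
    obtain ⟨x, hx⟩ := hm A hA
    rw [mem_inter] at hx
    rw [mem_powersetCard] at hA'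
    exact (mem_sdiff.1 (hA'.1 hx.1)).2 hx.2
  have hu : 𝒜 ∪ (Icc 1 N \ B).powersetCard r ⊆ (Icc 1 N).powersetCard r :=
    union_subset h𝒜 (powersetCard_mono sdiff_subset)
  have hc := card_le_card hu
  rw [card_union_of_disjoint hd, card_powersetCard, card_powersetCard, card_sdiff_of_subset hB,
    Nat.card_Icc] at hc
  have : N + 1 - 1 = N := by omega
  rw [this] at hc
  exact hc

/-! ### Cross-intersecting and compressions -/

def Cross (F G : Finset (Finset ℕ)) : Prop := ∀ A ∈ F, ∀ B ∈ G, (A ∩ B).Nonempty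

lemma Cross.symm {F G : Finset (Finset ℕ)} (h : Cross F G) : Cross G F := by
  intro B hB A hA
  rw [inter_comm]
  exact h A hA B hB

lemma compress_eq_of_cond {i j : ℕ} {B : Finset ℕ} (h1 : i ∉ B) (h2 : j ∈ B) :
    UV.compress {i} {j} B = (B ∪ {i}) \ {j} := by
  rw [UV.compress_of_disjoint_of_le (by simpa using h1) (by simpa using h2)]
  rfl

lemma compress_ne_cond {i j : ℕ} {B : Finset ℕ} (h : UV.compress {i} {j} B ≠ B) :
    i ∉ B ∧ j ∈ B ∧ UV.compress {i} {j} B = (B ∪ {i}) \ {j} := by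
  by_cases hc : Disjoint ({i} : Finset ℕ) B ∧ ({j} : Finset ℕ) ≤ B
  · refine ⟨by simpa using hc.1, by simpa using hc.2, ?_⟩
    rw [UV.compress_of_disjoint_of_le hc.1 hc.2]; rfl
  · exact absurd (by unfold UV.compress; exact if_neg hc) h

lemma aux_old_new {i j : ℕ} (hij : i ≠ j) {F G : Finset (Finset ℕ)} (hc : Cross F G)
    {A' B : Finset ℕ} (hA' : A' ∈ F) (hcA' : UV.compress {i} {j} A' ∈ F)
    (hB : B ∈ G) (hiB : i ∉ B) (hjB : j ∈ B) :
    (A' ∩ ((B ∪ {i}) \ {j})).Nonempty := by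
  obtain ⟨x, hx⟩ := hc A' hA' B hB
  rw [mem_inter] at hx
  by_cases hxj : x = j
  · subst hxj
    by_cases hiA : i ∈ A'
    · exact ⟨i, mem_inter.2 ⟨hiA, by simp [mem_sdiff, hij]⟩⟩
    · rw [compress_eq_of_cond hiA hx.1] at hcA'
      obtain ⟨y, hy⟩ := hc _ hcA' B hB
      rw [mem_inter, mem_sdiff, mem_union, mem_singleton, mem_singleton] at hy
      have hyi : y ≠ i := fun h => hiB (h ▸ hy.2)
      have hyA : y ∈ A' := by tauto
      refine ⟨y, mem_inter.2 ⟨hyA, ?_⟩⟩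
      rw [mem_sdiff, mem_union, mem_singleton, mem_singleton]
      exact ⟨Or.inl hy.2, hy.1.2⟩
  · refine ⟨x, mem_inter.2 ⟨hx.1, ?_⟩⟩
    rw [mem_sdiff, mem_union, mem_singleton, mem_singleton]
    exact ⟨Or.inl hx.2, hxj⟩

lemma cross_compression {i j : ℕ} (hij : i ≠ j) {F G : Finset (Finset ℕ)} (hc : Cross F G) :
    Cross (𝓒 {i} {j} F) (𝓒 {i} {j} G) := by
  intro A' hA' B' hB'
  rw [UV.mem_compression] at hA' hB'
  rcases hA' with ⟨hA'F, hcA'F⟩ | ⟨hA'nF, A, hAF, rfl⟩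
  · rcases hB' with ⟨hB'G, _⟩ | ⟨hB'nG, B, hBG, rfl⟩
    · exact hc _ hA'F _ hB'G
    · have hne : UV.compress {i} {j} B ≠ B := fun h => hB'nG (by rw [h]; exact hBG)
      obtain ⟨h1, h2, h3⟩ := compress_ne_cond hne
      rw [h3]
      exact aux_old_new hij hc hA'F hcA'F hBG h1 h2
  · rcases hB' with ⟨hB'G, hcB'G⟩ | ⟨hB'nG, B, hBG, rfl⟩
    · have hne : UV.compress {i} {j} A ≠ A := fun h => hA'nF (by rw [h]; exact hAF)
      obtain ⟨h1, h2, h3⟩ := compress_ne_cond hne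
      rw [h3, inter_comm]
      exact aux_old_new hij hc.symm hB'G hcB'G hAF h1 h2
    · have hneA : UV.compress {i} {j} A ≠ A := fun h => hA'nF (by rw [h]; exact hAF)
      have hneB : UV.compress {i} {j} B ≠ B := fun h => hB'nG (by rw [h]; exact hBG)
      obtain ⟨hA1, hA2, hA3⟩ := compress_ne_cond hneA
      obtain ⟨hB1, hB2, hB3⟩ := compress_ne_cond hneB
      rw [hA3, hB3]
      refine ⟨i, mem_inter.2 ⟨?_, ?_⟩⟩ <;>
        · rw [mem_sdiff, mem_union, mem_singleton, mem_singleton]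
          exact ⟨Or.inr rfl, hij⟩

/-! ### Measure and existence of shifted families -/

def mu (𝒜 : Finset (Finset ℕ)) : ℕ := ∑ A ∈ 𝒜, ∑ x ∈ A, x

lemma mu_lemma (i j : ℕ) (hij : i < j) (𝒜 : Finset (Finset ℕ)) :
    𝓒 {i} {j} 𝒜 = 𝒜 ∨ mu (𝓒 {i} {j} 𝒜) < mu 𝒜 := by
  classical
  set c : Finset ℕ → Finset ℕ := UV.compress {i} {j} with hc
  set t : Finset (Finset ℕ) := 𝒜.filter (fun A => c A ∉ 𝒜) with ht
  have hkey : ∀ A ∈ t, (∑ x ∈ c A, x) + j = (∑ x ∈ A, x) + i := by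
    intro A hA
    rw [ht, mem_filter] at hA
    have hne : c A ≠ A := fun h => hA.2 (by rw [h]; exact hA.1)
    obtain ⟨h1, h2, h3⟩ := compress_ne_cond hne
    rw [hc, h3]
    have e1 : A ∪ {i} = insert i A := by rw [union_comm]; rfl
    have e2 : (insert i A) \ {j} = (insert i A).erase j := by
      rw [sdiff_singleton_eq_erase]
    rw [e1, e2]
    have hjin : j ∈ insert i A := mem_insert_of_mem h2
    rw [Finset.sum_erase_add _ _ hjin, Finset.sum_insert h1]
    omega
  have hmu : mu (𝓒 {i} {j} 𝒜) = (∑ A ∈ 𝒜.filter (fun A => c A ∈ 𝒜), ∑ x ∈ A, x)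
      + ∑ A ∈ t, ∑ x ∈ c A, x := by
    rw [mu, UV.compression, sum_union UV.compress_disjoint, filter_image,
      sum_image (fun x hx y hy h => UV.compress_injOn (mem_coe.2 hx) (mem_coe.2 hy) h)]
  have hmA : mu 𝒜 = (∑ A ∈ 𝒜.filter (fun A => c A ∈ 𝒜), ∑ x ∈ A, x)
      + ∑ A ∈ t, ∑ x ∈ A, x := by
    rw [mu, ht, ← Finset.sum_filter_add_sum_filter_not 𝒜 (fun A => c A ∈ 𝒜)]
  rcases t.eq_empty_or_nonempty with hte | htne
  · left
    have h1 : 𝒜.filter (fun A => c A ∈ 𝒜) = 𝒜 := by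
      rw [filter_eq_self]
      intro A hA
      by_contra hcA
      have : A ∈ t := by rw [ht, mem_filter]; exact ⟨hA, hcA⟩
      simp [hte] at this
    rw [UV.compression, filter_image, h1]
    have h2 : 𝒜.filter (fun A => c A ∉ 𝒜) = ∅ := hte
    rw [h2, image_empty, union_empty]
  · right
    rw [hmu, hmA]
    have : ∑ A ∈ t, ∑ x ∈ c A, x < ∑ A ∈ t, ∑ x ∈ A, x := by
      apply sum_lt_sum_of_nonempty htne
      intro A hA
      have := hkey A hA
      omega
    omega

def Shifted (n : ℕ) (𝒜 : Finset (Finset ℕ)) : Prop :=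
  ∀ ⦃i j : ℕ⦄, i ∈ Icc 1 n → j ∈ Icc 1 n → i < j → UV.IsCompressed {i} {j} 𝒜

lemma compression_subset {n r i j : ℕ} (hi : i ∈ Icc 1 n) {𝒜 : Finset (Finset ℕ)}
    (h : 𝒜 ⊆ (Icc 1 n).powersetCard r) :
    𝓒 {i} {j} 𝒜 ⊆ (Icc 1 n).powersetCard r := by
  intro a ha
  rw [UV.mem_compression] at ha
  rcases ha with ⟨h1, _⟩ | ⟨_, b, hb, rfl⟩
  · exact h h1
  · have hbp := mem_powersetCard.1 (h hb)
    refine mem_powersetCard.2 ⟨?_, ?_⟩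
    · intro x hx
      have hsub : UV.compress {i} {j} b ⊆ b ∪ {i} := by
        unfold UV.compress
        split_ifs
        · exact sdiff_subset
        · exact subset_union_left
      rcases mem_union.1 (hsub hx) with h' | h'
      · exact hbp.1 h'
      · rw [mem_singleton] at h'; subst h'; exact hi
    · rw [UV.card_compress (by simp)]
      exact hbp.2

lemma exists_shifted (n k l : ℕ) :
    ∀ M (F G : Finset (Finset ℕ)), mu F + mu G < M →
    F ⊆ (Icc 1 n).powersetCard k → G ⊆ (Icc 1 n).powersetCard l → Cross F G →
    ∃ F' G', F'.card = F.card ∧ G'.card = G.card ∧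
      F' ⊆ (Icc 1 n).powersetCard k ∧ G' ⊆ (Icc 1 n).powersetCard l ∧
      Cross F' G' ∧ Shifted n F' ∧ Shifted n G' := by
  intro M
  induction M with
  | zero => intro F G h; omega
  | succ M ih =>
    intro F G hM hF hG hc
    by_cases hs : Shifted n F ∧ Shifted n G
    · exact ⟨F, G, rfl, rfl, hF, hG, hc, hs.1, hs.2⟩
    · have hex : ∃ i j, i ∈ Icc 1 n ∧ j ∈ Icc 1 n ∧ i < j ∧
          ¬(UV.IsCompressed {i} {j} F ∧ UV.IsCompressed {i} {j} G) := by
        by_contra hno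
        push_neg at hno
        exact hs ⟨fun i j hi hj hij => (hno i j hi hj hij).1,
          fun i j hi hj hij => (hno i j hi hj hij).2⟩
      obtain ⟨i, j, hi, hj, hij, hnc⟩ := hex
      have hlt : mu (𝓒 {i} {j} F) + mu (𝓒 {i} {j} G) < mu F + mu G := by
        rcases mu_lemma i j hij F with hF1 | hF1 <;> rcases mu_lemma i j hij G with hG1 | hG1
        · exact absurd ⟨hF1, hG1⟩ hnc
        · rw [hF1]; omega
        · rw [hG1]; omega
        · omega
      obtain ⟨F'', G'', e1, e2, p1, p2, p3, p4, p5⟩ :=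
        ih (𝓒 {i} {j} F) (𝓒 {i} {j} G) (by omega)
          (compression_subset hi hF) (compression_subset hi hG)
          (cross_compression hij.ne hc)
      exact ⟨F'', G'', e1.trans (UV.card_compression _ _ _),
        e2.trans (UV.card_compression _ _ _), p1, p2, p3, p4, p5⟩

/-! ### Consequences of shiftedness -/

lemma Shifted.mem_shift {n : ℕ} {𝒜 : Finset (Finset ℕ)} (hs : Shifted n 𝒜) {i j : ℕ}
    (hi : i ∈ Icc 1 n) (hj : j ∈ Icc 1 n) (hij : i < j) {A : Finset ℕ}
    (hA : A ∈ 𝒜) (hjA : j ∈ A) (hiA : i ∉ A) : (A ∪ {i}) \ {j} ∈ 𝒜 := by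
  have h := hs hi hj hij
  have h2 := UV.compress_mem_compression (u := ({i} : Finset ℕ)) (v := ({j} : Finset ℕ)) hA
  rw [h.eq] at h2
  rwa [compress_eq_of_cond hiA hjA] at h2

lemma exists_notMem_top {n r : ℕ} {𝒜 : Finset (Finset ℕ)}
    (h𝒜 : 𝒜 ⊆ (Icc 1 n).powersetCard r) (hs : Shifted n 𝒜) (hne : 𝒜.Nonempty)
    (hr : r < n) : ∃ A ∈ 𝒜, n ∉ A := by
  obtain ⟨A, hA⟩ := hne
  by_cases hn : n ∈ A
  · have hAp := mem_powersetCard.1 (h𝒜 hA)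
    have hcard : A.card < (Icc 1 n).card := by
      rw [Nat.card_Icc, hAp.2]; omega
    have hex : ∃ i ∈ Icc 1 n, i ∉ A := by
      by_contra hno
      push_neg at hno
      exact absurd (card_le_card hno) (by omega)
    obtain ⟨i, hiI, hiA⟩ := hex
    have hin : i < n := by
      have := mem_Icc.1 hiI
      rcases Nat.eq_or_lt_of_le this.2 with rfl | h
      · exact absurd hn hiA
      · exact h
    have hnI : n ∈ Icc 1 n := mem_Icc.2 ⟨by omega, le_rfl⟩
    refine ⟨(A ∪ {i}) \ {n}, hs.mem_shift hiI hnI hin hA hn hiA, by simp⟩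
  · exact ⟨A, hA, hn⟩

lemma cross_erase {n k l : ℕ} {F G : Finset (Finset ℕ)}
    (hF : F ⊆ (Icc 1 n).powersetCard k) (hG : G ⊆ (Icc 1 n).powersetCard l)
    (hsF : Shifted n F) (hc : Cross F G) (hn : k + l ≤ n) {A B : Finset ℕ}
    (hA : A ∈ F) (hB : B ∈ G) (hnA : n ∈ A) (hnB : n ∈ B) :
    ((A.erase n) ∩ (B.erase n)).Nonempty := by
  have hAp := mem_powersetCard.1 (hF hA)
  have hBp := mem_powersetCard.1 (hG hB)
  have hint : 1 ≤ (A ∩ B).card := card_pos.2 (hc A hA B hB)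
  have hcu : (A ∪ B).card < n := by
    have := card_union_add_card_inter A B
    rw [hAp.2, hBp.2] at this
    omega
  have hABs : A ∪ B ⊆ Icc 1 n := union_subset hAp.1 hBp.1
  have hex : ∃ i ∈ Icc 1 n, i ∉ A ∪ B := by
    by_contra hno
    push_neg at hno
    have h2 := card_le_card hno
    rw [Nat.card_Icc] at h2
    omega
  obtain ⟨i, hiI, hiAB⟩ := hex
  have hiA : i ∉ A := fun h => hiAB (mem_union_left _ h)
  have hiB : i ∉ B := fun h => hiAB (mem_union_right _ h)
  have hin : i < n := by
    have := mem_Icc.1 hiI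
    rcases Nat.eq_or_lt_of_le this.2 with rfl | h
    · exact absurd (mem_union_left _ hnA) hiAB
    · exact h
  have hnI : n ∈ Icc 1 n := mem_Icc.2 ⟨by omega, le_rfl⟩
  have hA' : (A ∪ {i}) \ {n} ∈ F := hsF.mem_shift hiI hnI hin hA hnA hiA
  obtain ⟨x, hx⟩ := hc _ hA' B hB
  rw [mem_inter, mem_sdiff, mem_union, mem_singleton, mem_singleton] at hx
  have hxi : x ≠ i := fun h => hiB (h ▸ hx.2)
  have hxA : x ∈ A := by tauto
  refine ⟨x, mem_inter.2 ⟨mem_erase.2 ⟨hx.1.2, hxA⟩, mem_erase.2 ⟨hx.1.2, hx.2⟩⟩⟩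

/-! ### Partition into low and high parts -/

lemma split_card (n : ℕ) (𝒜 : Finset (Finset ℕ)) :
    𝒜.card = (𝒜.filter (fun A => n ∉ A)).card
      + ((𝒜.filter (fun A => n ∈ A)).image (fun A => A.erase n)).card := by
  have hinj : Set.InjOn (fun A : Finset ℕ => A.erase n) ↑(𝒜.filter (fun A => n ∈ A)) := by
    intro x hx y hy h
    simp only [mem_coe, mem_filter] at hx hy
    rw [← insert_erase hx.2, ← insert_erase hy.2]
    simp only at h
    rw [h]
  rw [card_image_of_injOn hinj]
  have := Finset.card_filter_add_card_filter_not (s := 𝒜) (p := fun A => n ∈ A)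
  omega

lemma low_subset {N r : ℕ} {𝒜 : Finset (Finset ℕ)}
    (h : 𝒜 ⊆ (Icc 1 (N + 1)).powersetCard r) :
    𝒜.filter (fun A => (N + 1) ∉ A) ⊆ (Icc 1 N).powersetCard r := by
  intro A hA
  rw [mem_filter] at hA
  have h2 := mem_powersetCard.1 (h hA.1)
  refine mem_powersetCard.2 ⟨fun x hx => ?_, h2.2⟩
  have hxI := mem_Icc.1 (h2.1 hx)
  have : x ≠ N + 1 := fun e => hA.2 (e ▸ hx)
  exact mem_Icc.2 ⟨hxI.1, by omega⟩

lemma hi_subset {N r : ℕ} {𝒜 : Finset (Finset ℕ)}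
    (h : 𝒜 ⊆ (Icc 1 (N + 1)).powersetCard (r + 1)) :
    (𝒜.filter (fun A => (N + 1) ∈ A)).image (fun A => A.erase (N + 1))
      ⊆ (Icc 1 N).powersetCard r := by
  intro B hB
  obtain ⟨A, hA, rfl⟩ := mem_image.1 hB
  rw [mem_filter] at hA
  have h2 := mem_powersetCard.1 (h hA.1)
  refine mem_powersetCard.2 ⟨fun x hx => ?_, ?_⟩
  · rw [mem_erase] at hx
    have hxI := mem_Icc.1 (h2.1 hx.2)
    exact mem_Icc.2 ⟨hxI.1, by omega⟩
  · rw [card_erase_of_mem hA.2, h2.2]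
    omega

lemma hi_mem {n : ℕ} {𝒜 : Finset (Finset ℕ)} {B : Finset ℕ}
    (hB : B ∈ (𝒜.filter (fun A => n ∈ A)).image (fun A => A.erase n)) :
    n ∉ B ∧ insert n B ∈ 𝒜 := by
  obtain ⟨A, hA, rfl⟩ := mem_image.1 hB
  rw [mem_filter] at hA
  exact ⟨notMem_erase _ _, by rw [insert_erase hA.2]; exact hA.1⟩

/-! ### Main theorem -/

theorem main : ∀ n k l (F G : Finset (Finset ℕ)), 0 < l → l ≤ k → k + l ≤ n →
    F ⊆ (Icc 1 n).powersetCard k → G ⊆ (Icc 1 n).powersetCard l →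
    F.Nonempty → G.Nonempty → Cross F G →
    F.card + G.card + (n - l).choose k ≤ n.choose k + 1 := by
  intro n
  induction n using Nat.strong_induction_on with
  | _ n ih =>
  intro k l F G hl hlk hn hF hG hFne hGne hcross
  rcases Nat.eq_or_lt_of_le hn with hbase | hstep
  · -- base case : n = k + l, complement argument
    have hIcc : (Icc 1 n).card = n := by rw [Nat.card_Icc]; omega
    set G' : Finset (Finset ℕ) := G.image (fun B => Icc 1 n \ B) with hG'
    have hrec : ∀ B ∈ G, Icc 1 n \ (Icc 1 n \ B) = B := by
      intro B hB
      have hBs := (mem_powersetCard.1 (hG hB)).1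
      rw [sdiff_sdiff_right_self, inf_eq_inter, inter_eq_right.2 hBs]
    have hG'card : G'.card = G.card := by
      apply card_image_of_injOn
      intro x hx y hy h
      simp only at h
      rw [← hrec x (mem_coe.1 hx), ← hrec y (mem_coe.1 hy), h]
    have hG'sub : G' ⊆ (Icc 1 n).powersetCard k := by
      intro A hA
      obtain ⟨B, hB, rfl⟩ := mem_image.1 hA
      have hBp := mem_powersetCard.1 (hG hB)
      refine mem_powersetCard.2 ⟨sdiff_subset, ?_⟩
      rw [card_sdiff_of_subset hBp.1, hIcc, hBp.2]
      omega
    have hdisj : Disjoint F G' := by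
      rw [disjoint_left]
      intro A hA hA'
      obtain ⟨B, hB, rfl⟩ := mem_image.1 hA'
      obtain ⟨x, hx⟩ := hcross _ hA B hB
      rw [mem_inter, mem_sdiff] at hx
      exact hx.1.2 hx.2
    have hcard : F.card + G.card ≤ n.choose k := by
      have h1 := card_le_card (union_subset hF hG'sub)
      rw [card_union_of_disjoint hdisj, card_powersetCard, hIcc, hG'card] at h1
      exact h1
    have hnl : n - l = k := by omega
    rw [hnl, Nat.choose_self]
    omega
  · -- inductive step : k + l < n
    obtain ⟨F', G', eF, eG, hF', hG', hc', hsF, hsG⟩ :=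
      exists_shifted n k l (mu F + mu G + 1) F G (by omega) hF hG hcross
    rw [← eF, ← eG]
    have hFne' : F'.Nonempty := card_pos.1 (by rw [eF]; exact card_pos.2 hFne)
    have hGne' : G'.Nonempty := card_pos.1 (by rw [eG]; exact card_pos.2 hGne)
    clear eF eG hF hG hFne hGne hcross
    obtain ⟨N, rfl⟩ : ∃ N, n = N + 1 := ⟨n - 1, by omega⟩
    obtain ⟨K, rfl⟩ : ∃ K, k = K + 1 := ⟨k - 1, by omega⟩
    obtain ⟨L, rfl⟩ : ∃ L, l = L + 1 := ⟨l - 1, by omega⟩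
    set F0 : Finset (Finset ℕ) := F'.filter (fun A => (N + 1) ∉ A) with hF0
    set F1 : Finset (Finset ℕ) :=
      (F'.filter (fun A => (N + 1) ∈ A)).image (fun A => A.erase (N + 1)) with hF1
    set G0 : Finset (Finset ℕ) := G'.filter (fun A => (N + 1) ∉ A) with hG0
    set G1 : Finset (Finset ℕ) :=
      (G'.filter (fun A => (N + 1) ∈ A)).image (fun A => A.erase (N + 1)) with hG1
    have hFsplit : F'.card = F0.card + F1.card := split_card _ _
    have hGsplit : G'.card = G0.card + G1.card := split_card _ _
    have hF0sub : F0 ⊆ (Icc 1 N).powersetCard (K + 1) := low_subset hF'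
    have hG0sub : G0 ⊆ (Icc 1 N).powersetCard (L + 1) := low_subset hG'
    have hF1sub : F1 ⊆ (Icc 1 N).powersetCard K := hi_subset hF'
    have hG1sub : G1 ⊆ (Icc 1 N).powersetCard L := hi_subset hG'
    have hF0ne : F0.Nonempty := by
      obtain ⟨A, hA, hnA⟩ := exists_notMem_top hF' hsF hFne' (by omega)
      exact ⟨A, mem_filter.2 ⟨hA, hnA⟩⟩
    have hG0ne : G0.Nonempty := by
      obtain ⟨B, hB, hnB⟩ := exists_notMem_top hG' hsG hGne' (by omega)
      exact ⟨B, mem_filter.2 ⟨hB, hnB⟩⟩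
    have hcross0 : Cross F0 G0 := fun A hA B hB =>
      hc' A (mem_of_mem_filter _ hA) B (mem_of_mem_filter _ hB)
    have IH0 := ih N (by omega) (K + 1) (L + 1) F0 G0 hl hlk (by omega) hF0sub hG0sub
      hF0ne hG0ne hcross0
    -- Pascal expansions
    have p1 : (N + 1).choose (K + 1) = N.choose K + N.choose (K + 1) :=
      Nat.choose_succ_succ' N K
    have e1 : N + 1 - (L + 1) = (N - (L + 1)) + 1 := by omega
    have p2 : (N + 1 - (L + 1)).choose (K + 1)
        = (N - (L + 1)).choose K + (N - (L + 1)).choose (K + 1) := by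
      rw [e1, Nat.choose_succ_succ']
    by_cases hG1e : G1 = ∅
    · -- Case 1 : no member of G contains N+1
      have hGc : G'.card = G0.card := by rw [hGsplit, hG1e, card_empty]; omega
      obtain ⟨B, hB⟩ := hG0ne
      have hBp := mem_powersetCard.1 (hG0sub hB)
      have hmeet : ∀ A1 ∈ F1, (A1 ∩ B).Nonempty := by
        intro A1 hA1
        obtain ⟨hnA1, hins⟩ := hi_mem (hF1 ▸ hA1)
        obtain ⟨x, hx⟩ := hc' _ hins B (mem_of_mem_filter _ hB)
        rw [mem_inter] at hx
        have hxN : x ≠ N + 1 := by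
          intro e
          have := mem_Icc.1 (hBp.1 (e ▸ hx.2))
          omega
        refine ⟨x, mem_inter.2 ⟨?_, hx.2⟩⟩
        rcases mem_insert.1 hx.1 with h | h
        · exact absurd h hxN
        · exact h
      have hFb := card_meets hBp.1 hF1sub hmeet
      rw [hBp.2] at hFb
      omega
    · by_cases hF1e : F1 = ∅
      · -- Case 2 : G has members containing N+1 but F does not
        have hFc : F'.card = F0.card := by rw [hFsplit, hF1e, card_empty]; omega
        obtain ⟨A, hA⟩ := hF0ne
        have hAp := mem_powersetCard.1 (hF0sub hA)
        have hmeet : ∀ B1 ∈ G1, (B1 ∩ A).Nonempty := by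
          intro B1 hB1
          obtain ⟨hnB1, hins⟩ := hi_mem (hG1 ▸ hB1)
          obtain ⟨x, hx⟩ := hc' A (mem_of_mem_filter _ hA) _ hins
          rw [mem_inter] at hx
          have hxN : x ≠ N + 1 := by
            intro e
            have := mem_Icc.1 (hAp.1 (e ▸ hx.1))
            omega
          refine ⟨x, mem_inter.2 ⟨?_, hx.1⟩⟩
          rcases mem_insert.1 hx.2 with h | h
          · exact absurd h hxN
          · exact h
        have hGb := card_meets hAp.1 hG1sub hmeet
        rw [hAp.2] at hGb
        -- the binomial inequality
        have hIn := ineqA (L + 1) (K - L) L (by omega) N (by omega)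
        have eKL : L + (K - L) = K := by omega
        have eKL2 : L + 1 + (K - L) = K + 1 := by omega
        rw [eKL, eKL2] at hIn
        omega
      · -- Case 3 : both F and G have members containing N+1
        have hF1ne : F1.Nonempty := nonempty_iff_ne_empty.2 hF1e
        have hG1ne : G1.Nonempty := nonempty_iff_ne_empty.2 hG1e
        -- l ≥ 2
        have hL1 : 1 ≤ L := by
          by_contra hL0
          have hL : L = 0 := by omega
          obtain ⟨B1, hB1⟩ := hG1ne
          have hB1p := mem_powersetCard.1 (hG1sub hB1)
          have hB1e : B1 = ∅ := card_eq_zero.1 (by rw [hB1p.2, hL])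
          obtain ⟨hnB1, hins⟩ := hi_mem (hG1 ▸ hB1)
          rw [hB1e] at hins
          obtain ⟨A, hA⟩ := hF0ne
          rw [hF0, mem_filter] at hA
          obtain ⟨x, hx⟩ := hc' A hA.1 _ hins
          rw [mem_inter] at hx
          have : x = N + 1 := by simpa using hx.2
          exact hA.2 (this ▸ hx.1)
        have hcross1 : Cross F1 G1 := by
          intro A1 hA1 B1 hB1
          obtain ⟨hnA1, hinsA⟩ := hi_mem (hF1 ▸ hA1)
          obtain ⟨hnB1, hinsB⟩ := hi_mem (hG1 ▸ hB1)
          have := cross_erase hF' hG' hsF hc' (by omega) hinsA hinsB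
            (mem_insert_self _ _) (mem_insert_self _ _)
          rwa [erase_insert hnA1, erase_insert hnB1] at this
        obtain ⟨K', rfl⟩ : ∃ K', K = K' + 1 := ⟨K - 1, by omega⟩
        have IH1 := ih N (by omega) (K' + 1) L F1 G1 (by omega) (by omega) (by omega)
          hF1sub hG1sub hF1ne hG1ne hcross1
        have e2 : N - L = (N - (L + 1)) + 1 := by omega
        have p3 : (N - L).choose (K' + 1)
            = (N - (L + 1)).choose K' + (N - (L + 1)).choose (K' + 1) := by
          rw [e2, Nat.choose_succ_succ']
        have hpos : 1 ≤ (N - (L + 1)).choose K' := Nat.choose_pos (by omega)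
        rw [p3] at IH1
        omega

end FT5

/-- Frankl–Tokushige bound for non-empty cross-intersecting families of
different uniformities. -/
theorem stmt5 (n k l : ℕ) (hl : 0 < l) (hlk : l ≤ k) (hn : k + l ≤ n)
    (F G : Finset (Finset ℕ))
    (hF : F ⊆ (Finset.Icc 1 n).powersetCard k)
    (hG : G ⊆ (Finset.Icc 1 n).powersetCard l)
    (hFne : F.Nonempty) (hGne : G.Nonempty)
    (hcross : ∀ A ∈ F, ∀ B ∈ G, (A ∩ B).Nonempty) :
    F.card + G.card ≤ n.choose k - (n - l).choose k + 1 := by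
  have h := FT5.main n k l F G hl hlk hn hF hG hFne hGne hcross
  have h2 : (n - l).choose k ≤ n.choose k := Nat.choose_le_choose k (Nat.sub_le n l)
  omega
end

section
/- Let m ≥ a + b be positive integers. If A ⊆ C([m],a) and B ⊆ C([m],b) are cross-intersecting families, then |A|/C(m,a) + |B|/C(m,b) ≤ 1. -/
/-!
Double count the pairs `(S, T)` of disjoint sets with `|S| = a`, `|T| = b` inside an `m`-set.
Those with `S ∈ A` number `|A| C(m-a, b)`, those with `T ∈ B` number `|B| C(m-b, a)`, and
cross-intersection means no pair is of both kinds. Counting all such pairs from either side gives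
`C(m, a) C(m-a, b) = C(m, b) C(m-b, a)`, and dividing by this total yields the bound.
-/

open Finset

section DisjointPairs

variable {α : Type*} [DecidableEq α] {U : Finset α} {a b : ℕ}

def disjointPairs (U : Finset α) (a b : ℕ) : Finset (Finset α × Finset α) :=
  {p ∈ U.powersetCard a ×ˢ U.powersetCard b | Disjoint p.1 p.2}

lemma filter_disjoint_powersetCard (U S : Finset α) (b : ℕ) :
    {T ∈ U.powersetCard b | Disjoint S T} = (U \ S).powersetCard b := by
  ext T
  simp only [mem_filter, mem_powersetCard, subset_sdiff]
  tauto

lemma card_filter_fst_mem_disjointPairs {𝒜 : Finset (Finset α)} (h𝒜 : 𝒜 ⊆ U.powersetCard a) :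
    #{p ∈ disjointPairs U a b | p.1 ∈ 𝒜} = #𝒜 * (#U - a).choose b := by
  have hfilter : {p ∈ disjointPairs U a b | p.1 ∈ 𝒜} =
      {p ∈ 𝒜 ×ˢ U.powersetCard b | Disjoint p.1 p.2} := by
    ext ⟨S, T⟩
    have := @h𝒜 S
    simp only [disjointPairs, mem_filter, mem_product]
    tauto
  rw [hfilter, card_filter, sum_product, ← smul_eq_mul, ← sum_const]
  refine sum_congr rfl fun S hS => ?_
  obtain ⟨hSU, rfl⟩ := mem_powersetCard.1 (h𝒜 hS)
  rw [← card_filter, filter_disjoint_powersetCard, card_powersetCard, card_sdiff_of_subset hSU]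

@[simp]
lemma swap_mem_disjointPairs {p : Finset α × Finset α} :
    p.swap ∈ disjointPairs U b a ↔ p ∈ disjointPairs U a b := by
  simp only [disjointPairs, mem_filter, mem_product, Prod.fst_swap, Prod.snd_swap, disjoint_comm]
  tauto

lemma card_filter_disjointPairs_swap (P : Finset α × Finset α → Prop) [DecidablePred P] :
    #{p ∈ disjointPairs U a b | P p} = #{p ∈ disjointPairs U b a | P p.swap} := by
  refine card_nbij' Prod.swap Prod.swap ?_ ?_ (fun _ _ => rfl) (fun _ _ => rfl) <;>
    intro p <;> simp

lemma card_filter_snd_mem_disjointPairs {ℬ : Finset (Finset α)} (hℬ : ℬ ⊆ U.powersetCard b) :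
    #{p ∈ disjointPairs U a b | p.2 ∈ ℬ} = #ℬ * (#U - b).choose a := by
  rw [card_filter_disjointPairs_swap]
  exact card_filter_fst_mem_disjointPairs hℬ

lemma card_disjointPairs (U : Finset α) (a b : ℕ) :
    #(disjointPairs U a b) = (#U).choose a * (#U - a).choose b := by
  rw [← card_powersetCard a U, ← card_filter_fst_mem_disjointPairs subset_rfl, filter_true_of_mem]
  intro p hp
  exact (mem_product.1 (mem_filter.1 hp).1).1

lemma card_disjointPairs_comm (U : Finset α) (a b : ℕ) :
    #(disjointPairs U a b) = #(disjointPairs U b a) := by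
  simpa using card_filter_disjointPairs_swap (U := U) (a := a) (b := b) fun _ => True

theorem card_mul_choose_add_card_mul_choose_le_of_cross_intersecting {𝒜 ℬ : Finset (Finset α)}
    (h𝒜 : 𝒜 ⊆ U.powersetCard a) (hℬ : ℬ ⊆ U.powersetCard b)
    (hcross : ∀ S ∈ 𝒜, ∀ T ∈ ℬ, (S ∩ T).Nonempty) :
    #𝒜 * (#U - a).choose b + #ℬ * (#U - b).choose a ≤ #(disjointPairs U a b) := by
  have hdisj : Disjoint {p ∈ disjointPairs U a b | p.1 ∈ 𝒜} {p ∈ disjointPairs U a b | p.2 ∈ ℬ} :=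
    disjoint_filter.2 fun p hp hS hT =>
      not_disjoint_iff_nonempty_inter.2 (hcross _ hS _ hT) (mem_filter.1 hp).2
  rw [← card_filter_fst_mem_disjointPairs h𝒜, ← card_filter_snd_mem_disjointPairs hℬ,
    ← card_union_of_disjoint hdisj]
  exact card_le_card (union_subset (filter_subset _ _) (filter_subset _ _))

end DisjointPairs

lemma div_add_div_le_one_of_mul_add_mul_le {x y N₁ N₂ c₁ c₂ : ℝ} (hN₁ : 0 < N₁) (hc₁ : 0 < c₁)
    (hc₂ : 0 < c₂) (hN : N₁ * c₁ = N₂ * c₂) (h : x * c₁ + y * c₂ ≤ N₁ * c₁) :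
    x / N₁ + y / N₂ ≤ 1 := by
  rw [← mul_div_mul_right x N₁ hc₁.ne', ← mul_div_mul_right y N₂ hc₂.ne', ← hN, ← add_div,
    div_le_one (by positivity)]
  exact h

theorem stmt7_general (m a b : ℕ) (hm : a + b ≤ m)
    (A B : Finset (Finset ℕ))
    (hA : A ⊆ (Finset.Icc 1 m).powersetCard a)
    (hB : B ⊆ (Finset.Icc 1 m).powersetCard b)
    (hcross : ∀ S ∈ A, ∀ T ∈ B, (S ∩ T).Nonempty) :
    (A.card : ℝ) / (m.choose a) + (B.card : ℝ) / (m.choose b) ≤ 1 := by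
  have hU : #(Icc 1 m) = m := by simp
  have hcount := card_mul_choose_add_card_mul_choose_le_of_cross_intersecting hA hB hcross
  have hsymm := card_disjointPairs_comm (Icc 1 m) a b
  rw [card_disjointPairs, card_disjointPairs, hU] at hsymm
  rw [card_disjointPairs, hU] at hcount
  refine div_add_div_le_one_of_mul_add_mul_le (c₁ := ((m - a).choose b : ℕ))
    (c₂ := ((m - b).choose a : ℕ)) ?_ ?_ ?_ (by exact_mod_cast hsymm) (by exact_mod_cast hcount)
  all_goals exact_mod_cast Nat.choose_pos (by omega)

/-- Normalized bound for cross-intersecting families (Lemma 2.4). -/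
theorem stmt7 (m a b : ℕ) (ha : 0 < a) (hb : 0 < b) (hm : a + b ≤ m)
    (A B : Finset (Finset ℕ))
    (hA : A ⊆ (Finset.Icc 1 m).powersetCard a)
    (hB : B ⊆ (Finset.Icc 1 m).powersetCard b)
    (hcross : ∀ S ∈ A, ∀ T ∈ B, (S ∩ T).Nonempty) :
    (A.card : ℝ) / (m.choose a) + (B.card : ℝ) / (m.choose b) ≤ 1 :=
  stmt7_general m a b hm A B hA hB hcross
end

section
/- Let F be a family of k-subsets of [n] and let 0 ≤ ℓ ≤ k. Then |σ_ℓ(F)| / C(n,ℓ) ≥ |F| / C(n,k), where σ_ℓ(F) = {H ∈ C([n],ℓ) : H ⊆ F for some F ∈ F} is the ℓ-shadow of F. -/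
open Finset

lemma shadow_step (n j : ℕ) (F : Finset (Finset ℕ)) :
    (((Icc 1 n).powersetCard (j+1)).filter (fun H => ∃ A ∈ F, H ⊆ A)).card * (j+1)
      ≤ (((Icc 1 n).powersetCard j).filter (fun H => ∃ A ∈ F, H ⊆ A)).card * (n - j) := by
  set S1 := ((Icc 1 n).powersetCard (j+1)).filter (fun H => ∃ A ∈ F, H ⊆ A) with hS1
  set S0 := ((Icc 1 n).powersetCard j).filter (fun H => ∃ A ∈ F, H ⊆ A) with hS0
  refine Finset.card_mul_le_card_mul (fun H G => G ⊆ H) ?_ ?_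
  · intro H hH
    simp only [hS1, mem_filter, mem_powersetCard] at hH
    obtain ⟨⟨hHs, hHc⟩, A, hA, hHA⟩ := hH
    have : H.powersetCard j ⊆ S0.bipartiteAbove (fun H G => G ⊆ H) H := by
      intro G hG
      rw [mem_powersetCard] at hG
      simp only [Finset.bipartiteAbove, mem_filter, hS0, mem_powersetCard]
      exact ⟨⟨⟨hG.1.trans hHs, hG.2⟩, ⟨A, hA, hG.1.trans hHA⟩⟩, hG.1⟩
    calc j + 1 = H.card.choose j := by rw [hHc, Nat.choose_succ_self_right]
    _ = (H.powersetCard j).card := (card_powersetCard j H).symm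
    _ ≤ _ := card_le_card this
  · intro G hG
    simp only [hS0, mem_filter, mem_powersetCard] at hG
    obtain ⟨⟨hGs, hGc⟩, -⟩ := hG
    have hsub : S1.bipartiteBelow (fun H G => G ⊆ H) G ⊆ (Icc 1 n \ G).image (fun x => insert x G) := by
      intro H hH
      simp only [Finset.bipartiteBelow, mem_filter, hS1, mem_powersetCard] at hH
      obtain ⟨⟨⟨hHs, hHc⟩, -⟩, hGH⟩ := hH
      have hne : (H \ G).Nonempty := by
        rw [← card_pos, card_sdiff_of_subset hGH, hHc, hGc]; omega
      obtain ⟨x, hx⟩ := hne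
      rw [mem_sdiff] at hx
      refine mem_image.2 ⟨x, mem_sdiff.2 ⟨hHs hx.1, hx.2⟩, ?_⟩
      apply Finset.eq_of_subset_of_card_le
      · intro y hy
        rcases mem_insert.1 hy with h | h
        · exact h ▸ hx.1
        · exact hGH h
      · rw [hHc, card_insert_of_notMem hx.2, hGc]
    calc _ ≤ ((Icc 1 n \ G).image (fun x => insert x G)).card := card_le_card hsub
    _ ≤ (Icc 1 n \ G).card := card_image_le
    _ = n - j := by rw [card_sdiff_of_subset hGs, Nat.card_Icc, hGc]; omega

/-- Sperner's normalized shadow inequality. -/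
theorem stmt8 (n k l : ℕ) (hl : l ≤ k)
    (F : Finset (Finset ℕ))
    (hF : F ⊆ (Finset.Icc 1 n).powersetCard k) :
    ((((Finset.Icc 1 n).powersetCard l).filter
        (fun H => ∃ A ∈ F, H ⊆ A)).card : ℝ) / (n.choose l)
      ≥ (F.card : ℝ) / (n.choose k) := by
  by_cases hkn : n < k
  · rw [Nat.choose_eq_zero_of_lt hkn]
    rw [Nat.cast_zero, div_zero]
    positivity
  push_neg at hkn
  -- S k = F
  have hSk : ((Icc 1 n).powersetCard k).filter (fun H => ∃ A ∈ F, H ⊆ A) = F := by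
    ext H
    simp only [mem_filter, mem_powersetCard]
    constructor
    · rintro ⟨⟨hHs, hHc⟩, A, hA, hHA⟩
      have := mem_powersetCard.1 (hF hA)
      have : H = A := Finset.eq_of_subset_of_card_le hHA (by omega)
      exact this ▸ hA
    · intro hH
      have := mem_powersetCard.1 (hF hH)
      exact ⟨this, H, hH, Subset.rfl⟩
  have key : ∀ d j, j + d = k →
      ((((Icc 1 n).powersetCard j).filter (fun H => ∃ A ∈ F, H ⊆ A)).card : ℝ) / (n.choose j)
        ≥ ((((Icc 1 n).powersetCard k).filter (fun H => ∃ A ∈ F, H ⊆ A)).card : ℝ) / (n.choose k) := by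
    intro d
    induction d with
    | zero => intro j hj; subst hj; simp
    | succ d ih =>
      intro j hj
      refine le_trans (ih (j+1) (by omega)) ?_
      have h0 : (0:ℝ) < n.choose j := by
        exact_mod_cast Nat.choose_pos (by omega)
      have h1 : (0:ℝ) < n.choose (j+1) := by
        exact_mod_cast Nat.choose_pos (by omega)
      rw [div_le_div_iff₀ h1 h0]
      have step := shadow_step n j F
      have hch := Nat.choose_succ_right_eq n j
      have hnj : 0 < n - j := by omega
      set a1 := (((Icc 1 n).powersetCard (j+1)).filter (fun H => ∃ A ∈ F, H ⊆ A)).card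
      set a0 := (((Icc 1 n).powersetCard j).filter (fun H => ∃ A ∈ F, H ⊆ A)).card
      have h2 : a1 * n.choose j * (n-j) ≤ a0 * n.choose (j+1) * (n-j) := by
        calc a1 * n.choose j * (n-j) = a1 * (n.choose j * (n-j)) := by ring
        _ = a1 * (n.choose (j+1) * (j+1)) := by rw [hch]
        _ = a1 * (j+1) * n.choose (j+1) := by ring
        _ ≤ a0 * (n-j) * n.choose (j+1) := Nat.mul_le_mul_right _ step
        _ = a0 * n.choose (j+1) * (n-j) := by ring
      have h3 := Nat.le_of_mul_le_mul_right h2 hnj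
      exact_mod_cast h3
  have := key (k - l) l (by omega)
  rwa [hSk] at this
end

section
/- Let F ⊆ C([n],k) be a shifted (initial) family, let q < n be a positive integer, and let P ⊆ R ⊆ [q] with |R| ≤ k. Then |F(P, [q]∖P-avoiding)| / C(n-q, k-|P|) ≤ |F(R, [q]∖R-avoiding)| / C(n-q, k-|R|), where F(P, [q]∖P-avoiding) = {F∖[q] : F ∈ F, F ∩ [q] = P}. -/
/-- `trace F q P = {F ∖ [q] : F ∈ F, F ∩ [q] = P}`. -/
def trace (F : Finset (Finset ℕ)) (q : ℕ) (P : Finset ℕ) : Finset (Finset ℕ) :=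
  (F.filter (fun A => A ∩ Finset.Icc 1 q = P)).image (fun A => A \ Finset.Icc 1 q)

/-!
In a shifted family, replacing a member `P ∪ G` (with `G` above `q`) by `R ∪ H` for any
`H ⊆ G` of the right size moves elements downwards, so every `(k - |R|)`-subset of a set in
the `P`-trace lies in the `R`-trace. Double counting the pairs `H ⊆ G` gives
`|T_P| C(s, s') ≤ |T_R| C(m - s', s - s')` with `m = n - q`, `s = k - |P|`, `s' = k - |R|`, and
the identity `C(m, s) C(s, s') = C(m, s') C(m - s', s - s')` turns this into the inequality
between normalized trace sizes.
-/

open Finset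

theorem List.Pairwise.getD_le_iff_lt_length_filter {L : List ℕ} (hL : L.Pairwise (· ≤ ·))
    {i : ℕ} (hi : i < L.length) (x : ℕ) :
    L.getD i 0 ≤ x ↔ i < (L.filter (· ≤ x)).length := by
  induction L generalizing i with
  | nil => simp at hi
  | cons a L ih =>
    obtain ⟨ha, hL⟩ := List.pairwise_cons.mp hL
    by_cases hax : a ≤ x
    · cases i with
      | zero => simp [hax]
      | succ i => simpa [hax] using ih hL (by simpa using hi)
    · have hLx : ∀ b ∈ L, ¬ b ≤ x := fun b hb hbx => hax ((ha b hb).trans hbx)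
      have hnil : L.filter (· ≤ x) = [] := by simpa using hLx
      cases i with
      | zero => simp [hax, hnil]
      | succ i =>
        simp only [List.getD_cons_succ, List.filter_cons, hax, hnil]
        rw [List.getD_eq_getElem _ _ (by simpa using hi)]
        simpa using hLx _ (List.getElem_mem _)

theorem Finset.sort_getD_le_iff_s9 (S : Finset ℕ) {i : ℕ} (hi : i < #S) (x : ℕ) :
    (S.sort (· ≤ ·)).getD i 0 ≤ x ↔ i < #(S.filter (· ≤ x)) := by
  have hlen : #(S.filter (· ≤ x)) = ((S.sort (· ≤ ·)).filter (· ≤ x)).length := by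
    rw [← List.countP_eq_length_filter, ← (S.sort_nodup (· ≤ ·)).card_eq_countP,
      S.sort_toFinset]
  rw [hlen]
  exact (S.pairwise_sort (· ≤ ·)).getD_le_iff_lt_length_filter (by rwa [S.length_sort]) x

theorem prec_of_card_filter_le {A B : Finset ℕ} (hcard : #A = #B)
    (h : ∀ x, #(B.filter (· ≤ x)) ≤ #(A.filter (· ≤ x))) : prec A B :=
  ⟨hcard, fun _ hi => (A.sort_getD_le_iff_s9 hi _).mpr <|
    ((B.sort_getD_le_iff_s9 (hcard ▸ hi) _).mp le_rfl).trans_le (h _)⟩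

theorem card_filter_le_card_filter_add_card_sub {α : Type*} [DecidableEq α] (p : α → Prop)
    [DecidablePred p] {G H : Finset α} (hHG : H ⊆ G) :
    #(G.filter p) ≤ #(H.filter p) + (#G - #H) := by
  have hsub : G.filter p ⊆ H.filter p ∪ (G \ H) := fun a ha => by
    obtain ⟨haG, hpa⟩ := mem_filter.mp ha
    by_cases haH : a ∈ H
    · exact mem_union_left _ (mem_filter.mpr ⟨haH, hpa⟩)
    · exact mem_union_right _ (mem_sdiff.mpr ⟨haG, haH⟩)
  calc #(G.filter p) ≤ #(H.filter p ∪ (G \ H)) := card_le_card hsub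
    _ ≤ #(H.filter p) + #(G \ H) := card_union_le _ _
    _ = #(H.filter p) + (#G - #H) := by rw [card_sdiff_of_subset hHG]

theorem prec_union_union {P R G H : Finset ℕ} {q : ℕ} (hPR : P ⊆ R) (hHG : H ⊆ G)
    (hR : ∀ a ∈ R, a ≤ q) (hG : ∀ b ∈ G, q < b) (hcard : #R + #H = #P + #G) :
    prec (R ∪ H) (P ∪ G) := by
  have disj {X Y : Finset ℕ} (hX : ∀ a ∈ X, a ≤ q) (hY : ∀ b ∈ Y, q < b) :
      Disjoint X Y :=
    disjoint_left.mpr fun a ha hb => (hY a hb).not_ge (hX a ha)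
  have hRH := disj hR fun b hb => hG b (hHG hb)
  have hPG := disj (fun a ha => hR a (hPR ha)) hG
  refine prec_of_card_filter_le
    (by rw [card_union_of_disjoint hRH, card_union_of_disjoint hPG, hcard]) fun x => ?_
  rw [filter_union, filter_union, card_union_of_disjoint (disjoint_filter_filter hPG),
    card_union_of_disjoint (disjoint_filter_filter hRH)]
  by_cases hx : x ≤ q
  · have hG₀ : G.filter (· ≤ x) = ∅ :=
      filter_eq_empty_iff.mpr fun b hb => by have := hG b hb; omega
    have hH₀ : H.filter (· ≤ x) = ∅ :=
      filter_eq_empty_iff.mpr fun b hb => by have := hG b (hHG hb); omega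
    simpa [hG₀, hH₀] using card_le_card (filter_subset_filter (· ≤ x) hPR)
  · rw [filter_true_of_mem fun a ha => (hR a (hPR ha)).trans (by omega),
      filter_true_of_mem fun a ha => (hR a ha).trans (by omega)]
    have := card_filter_le_card_filter_add_card_sub (· ≤ x) hHG
    have := card_le_card hHG
    omega

section trace

variable {F : Finset (Finset ℕ)} {q : ℕ} {P G : Finset ℕ}

theorem mem_trace : G ∈ trace F q P ↔ ∃ A ∈ F, A ∩ Icc 1 q = P ∧ A \ Icc 1 q = G := by
  simp [trace, and_assoc]

theorem union_mem_of_mem_trace (hG : G ∈ trace F q P) : P ∪ G ∈ F := by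
  obtain ⟨A, hA, rfl, rfl⟩ := mem_trace.mp hG
  rwa [union_comm, sdiff_union_inter]

theorem mem_trace_of_union_mem {R H : Finset ℕ} (hR : R ⊆ Icc 1 q) (hH : Disjoint H (Icc 1 q))
    (hRH : R ∪ H ∈ F) : H ∈ trace F q R :=
  mem_trace.mpr ⟨R ∪ H, hRH,
    by rw [union_inter_distrib_right, inter_eq_left.mpr hR,
      disjoint_iff_inter_eq_empty.mp hH, union_empty],
    by rw [union_sdiff_distrib, sdiff_eq_empty_iff_subset.mpr hR, hH.sdiff_eq_left, empty_union]⟩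

variable {n k : ℕ} (hF : F ⊆ (Icc 1 n).powersetCard k)
include hF

theorem subset_Icc_of_mem_trace (hG : G ∈ trace F q P) : G ⊆ Icc (q + 1) n := by
  obtain ⟨A, hA, -, rfl⟩ := mem_trace.mp hG
  intro a ha
  obtain ⟨haA, haq⟩ := mem_sdiff.mp ha
  have := mem_Icc.mp ((mem_powersetCard.mp (hF hA)).1 haA)
  simp only [mem_Icc] at haq ⊢
  omega

theorem card_add_card_of_mem_trace (hG : G ∈ trace F q P) : #P + #G = k := by
  obtain ⟨A, hA, rfl, rfl⟩ := mem_trace.mp hG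
  rw [add_comm, card_sdiff_add_card_inter, (mem_powersetCard.mp (hF hA)).2]

theorem mem_trace_of_subset_of_mem_trace (hq : q < n) (hsh : IsShifted n k F) {R H : Finset ℕ}
    (hPR : P ⊆ R) (hR : R ⊆ Icc 1 q) (hRk : #R ≤ k) (hG : G ∈ trace F q P) (hHG : H ⊆ G)
    (hH : #H = k - #R) : H ∈ trace F q R := by
  have hGI := subset_Icc_of_mem_trace hF hG
  have hGq : ∀ b ∈ G, q < b := fun b hb => (mem_Icc.mp (hGI hb)).1
  have hPG := union_mem_of_mem_trace hG
  have hprec : prec (R ∪ H) (P ∪ G) :=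
    prec_union_union hPR hHG (fun a ha => (mem_Icc.mp (hR ha)).2) hGq
      (by have := card_add_card_of_mem_trace hF hG; omega)
  have hRH : R ∪ H ∈ (Icc 1 n).powersetCard k := by
    refine mem_powersetCard.mpr ⟨union_subset ?_ ?_, ?_⟩
    · exact hR.trans (Icc_subset_Icc_right hq.le)
    · exact (hHG.trans hGI).trans (Icc_subset_Icc_left (by omega))
    · rw [hprec.1, (mem_powersetCard.mp (hF hPG)).2]
  refine mem_trace_of_union_mem hR ?_ (hsh _ hRH _ hPG hprec)
  exact disjoint_left.mpr fun a ha haq => (hGq a (hHG ha)).not_ge (mem_Icc.mp haq).2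

end trace

theorem card_filter_superset_le {J H : Finset ℕ} {s : ℕ} {T : Finset (Finset ℕ)}
    (hT : T ⊆ J.powersetCard s) (hHJ : H ⊆ J) :
    #(T.filter (H ⊆ ·)) ≤ (#J - #H).choose (s - #H) := by
  rw [← card_sdiff_of_subset hHJ, ← card_powersetCard]
  refine card_le_card_of_injOn (· \ H) (fun G hG => ?_) (fun G₁ hG₁ G₂ hG₂ h => ?_)
  · obtain ⟨hGT, hHG⟩ := mem_filter.mp hG
    obtain ⟨hGJ, hGs⟩ := mem_powersetCard.mp (hT hGT)
    exact mem_powersetCard.mpr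
      ⟨sdiff_subset_sdiff hGJ le_rfl, by rw [card_sdiff_of_subset hHG, hGs]⟩
  · rw [← sdiff_union_of_subset (mem_filter.mp hG₁).2,
      ← sdiff_union_of_subset (mem_filter.mp hG₂).2]
    exact congrArg (· ∪ H) h

theorem card_trace_mul_choose_le {n k q : ℕ} (hq : q < n) {F : Finset (Finset ℕ)}
    (hF : F ⊆ (Icc 1 n).powersetCard k) (hsh : IsShifted n k F) {P R : Finset ℕ}
    (hPR : P ⊆ R) (hR : R ⊆ Icc 1 q) (hRk : #R ≤ k) :
    #(trace F q P) * (k - #P).choose (k - #R)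
      ≤ #(trace F q R) * (n - q - (k - #R)).choose (k - #P - (k - #R)) := by
  refine card_mul_le_card_mul (fun G H => H ⊆ G) (fun G hG => ?_) (fun H hH => ?_)
  · have hGcard : #G = k - #P := by have := card_add_card_of_mem_trace hF hG; omega
    calc (k - #P).choose (k - #R) = #(G.powersetCard (k - #R)) := by
          rw [card_powersetCard, hGcard]
      _ ≤ _ := card_le_card fun H hH => by
          obtain ⟨hHG, hHcard⟩ := mem_powersetCard.mp hH
          exact (mem_bipartiteAbove _).mpr
            ⟨mem_trace_of_subset_of_mem_trace hF hq hsh hPR hR hRk hG hHG hHcard, hHG⟩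
  · have hTP : trace F q P ⊆ (Icc (q + 1) n).powersetCard (k - #P) := fun G hG =>
      mem_powersetCard.mpr
        ⟨subset_Icc_of_mem_trace hF hG, by have := card_add_card_of_mem_trace hF hG; omega⟩
    have hHcard : #H = k - #R := by have := card_add_card_of_mem_trace hF hH; omega
    simpa [bipartiteBelow, hHcard] using card_filter_superset_le hTP (subset_Icc_of_mem_trace hF hH)

theorem div_choose_le_div_choose {a b m s t : ℕ} (hts : t ≤ s) (hsm : s ≤ m)
    (h : a * s.choose t ≤ b * (m - t).choose (s - t)) :
    (a : ℝ) / m.choose s ≤ b / m.choose t := by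
  have key :
      a * m.choose t * (m - t).choose (s - t) ≤ b * m.choose s * (m - t).choose (s - t) :=
    calc a * m.choose t * (m - t).choose (s - t) = a * s.choose t * m.choose s := by
          rw [mul_assoc, ← Nat.choose_mul hts]; ring
      _ ≤ b * (m - t).choose (s - t) * m.choose s := Nat.mul_le_mul_right _ h
      _ = b * m.choose s * (m - t).choose (s - t) := by ring
  rw [div_le_div_iff₀ (by exact_mod_cast Nat.choose_pos hsm)
    (by exact_mod_cast Nat.choose_pos (hts.trans hsm))]
  exact_mod_cast Nat.le_of_mul_le_mul_right key (Nat.choose_pos (by omega))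

theorem stmt9_general (n k q : ℕ) (hq : q < n)
    (F : Finset (Finset ℕ))
    (hF : F ⊆ (Finset.Icc 1 n).powersetCard k)
    (hsh : IsShifted n k F)
    (P R : Finset ℕ) (hPR : P ⊆ R) (hR : R ⊆ Finset.Icc 1 q) (hRk : R.card ≤ k) :
    ((trace F q P).card : ℝ) / ((n - q).choose (k - P.card))
      ≤ ((trace F q R).card : ℝ) / ((n - q).choose (k - R.card)) := by
  rcases lt_or_ge (n - q) (k - #P) with hlt | hle
  · rw [Nat.choose_eq_zero_of_lt hlt, Nat.cast_zero, div_zero]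
    positivity
  exact div_choose_le_div_choose (Nat.sub_le_sub_left (card_le_card hPR) k) hle
    (card_trace_mul_choose_le hq hF hsh hPR hR hRk)

/-- Lemma 2.5: monotonicity of normalized traces for initial families. -/
theorem stmt9 (n k q : ℕ) (hq0 : 0 < q) (hq : q < n)
    (F : Finset (Finset ℕ))
    (hF : F ⊆ (Finset.Icc 1 n).powersetCard k)
    (hsh : IsShifted n k F)
    (P R : Finset ℕ) (hPR : P ⊆ R) (hR : R ⊆ Finset.Icc 1 q) (hRk : R.card ≤ k) :
    ((trace F q P).card : ℝ) / ((n - q).choose (k - P.card))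
      ≤ ((trace F q R).card : ℝ) / ((n - q).choose (k - R.card)) :=
  stmt9_general n k q hq F hF hsh P R hPR hR hRk
end

section
/- Let F ⊆ C([n],k) be a family and 1 ≤ i ≠ j ≤ n. Suppose F is non-trivial but the shift S_{ij}(F) is a star (has nonempty total intersection). Then S_{ij}(F) ⊆ {S ∈ C([n],k) : i ∈ S}, the families F(i) = {F∖{i} : i∈F∈F} and F(j) = {F∖{j} : j∈F∈F} are disjoint, i.e. F(i) ∩ F(j) = ∅, and every F ∈ F meets {i, j}. -/
/-- The image of a single set under the (i,j)-shift relative to the family F. -/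
def shiftSet (i j : ℕ) (F : Finset (Finset ℕ)) (A : Finset ℕ) : Finset ℕ :=
  if j ∈ A ∧ i ∉ A ∧ insert i (A.erase j) ∉ F then insert i (A.erase j) else A

/-- The (i,j)-shift of a family. -/
def shiftFam (i j : ℕ) (F : Finset (Finset ℕ)) : Finset (Finset ℕ) :=
  F.image (shiftSet i j F)

/-- Fact 2.1: if F is non-trivial but S_{ij}(F) is a star, then S_{ij}(F) ⊆ S_i,
the traces F(i) and F(j) are disjoint, and every member of F meets {i, j}. -/
theorem stmt10 (n k i j : ℕ) (hi : 1 ≤ i) (hin : i ≤ n) (hj : 1 ≤ j) (hjn : j ≤ n)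
    (hij : i ≠ j)
    (F : Finset (Finset ℕ))
    (hF : F ⊆ (Finset.Icc 1 n).powersetCard k)
    (hnt : ∀ x : ℕ, ∃ A ∈ F, x ∉ A)
    (hstar : ∃ x : ℕ, ∀ A ∈ shiftFam i j F, x ∈ A) :
    (∀ A ∈ shiftFam i j F, i ∈ A) ∧
    ((F.filter (fun A => i ∈ A)).image (fun A => A.erase i)) ∩
      ((F.filter (fun A => j ∈ A)).image (fun A => A.erase j)) = ∅ ∧
    (∀ A ∈ F, (A ∩ ({i, j} : Finset ℕ)).Nonempty) := by
  obtain ⟨x, hx⟩ := hstar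
  have hxi : x = i := by
    by_contra hxne
    rcases hnt x with ⟨A, hA, hxA⟩
    have hmem : shiftSet i j F A ∈ shiftFam i j F := Finset.mem_image_of_mem _ hA
    have hxs := hx _ hmem
    unfold shiftSet at hxs
    split_ifs at hxs with h
    · rcases Finset.mem_insert.mp hxs with h1 | h2
      · exact hxne h1
      · exact hxA (Finset.mem_of_mem_erase h2)
    · exact hxA hxs
  rw [hxi] at hx
  refine ⟨hx, ?_, ?_⟩
  · rw [Finset.eq_empty_iff_forall_notMem]
    intro B hB
    rw [Finset.mem_inter] at hB
    obtain ⟨h1, h2⟩ := hB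
    simp only [Finset.mem_image, Finset.mem_filter] at h1 h2
    obtain ⟨A, ⟨hAF, hiA⟩, hAe⟩ := h1
    obtain ⟨A', ⟨hA'F, hjA'⟩, hA'e⟩ := h2
    have hiB : i ∉ B := hAe ▸ Finset.notMem_erase _ _
    have hiA' : i ∉ A' := fun h =>
      hiB (hA'e ▸ Finset.mem_erase.mpr ⟨hij, h⟩)
    have hAeq : insert i (A'.erase j) = A := by
      rw [hA'e, ← hAe, Finset.insert_erase hiA]
    have hfix : shiftSet i j F A' = A' := by
      unfold shiftSet
      rw [if_neg]
      rintro ⟨_, _, h3⟩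
      exact h3 (hAeq ▸ hAF)
    have hiall := hx _ (Finset.mem_image_of_mem _ hA'F)
    rw [hfix] at hiall
    exact hiA' hiall
  · intro A hA
    by_contra hempty
    rw [Finset.not_nonempty_iff_eq_empty, Finset.eq_empty_iff_forall_notMem] at hempty
    have hiA : i ∉ A := fun h =>
      hempty i (Finset.mem_inter.mpr ⟨h, by simp⟩)
    have hjA : j ∉ A := fun h =>
      hempty j (Finset.mem_inter.mpr ⟨h, by simp⟩)
    have hfix : shiftSet i j F A = A := by
      unfold shiftSet
      rw [if_neg]
      rintro ⟨h1, _, _⟩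
      exact hjA h1
    have hiall := hx _ (Finset.mem_image_of_mem _ hA)
    rw [hfix] at hiall
    exact hiA hiall
end

section
/- Let F ⊆ C([n],k) and 1 ≤ i ≠ j ≤ n. Then |T²(F)| ≤ |T²(S_{ij}(F))|, where T²(H) = {T ∈ C([n],2) : T ∩ H ≠ ∅ for all H ∈ H} is the set of 2-element transversals of H. -/
/-- The 2-element transversals of a family, within [n]. -/
def T2 (n : ℕ) (H : Finset (Finset ℕ)) : Finset (Finset ℕ) :=
  ((Finset.Icc 1 n).powersetCard 2).filter (fun T => ∀ A ∈ H, (T ∩ A).Nonempty)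

/-!
Shifting is injective on a family, so `S_ij(T²(F))` has as many members as `T²(F)`; it then
suffices to show that every shifted transversal of `F` is a transversal of `S_ij(F)`.
-/

open Finset

namespace Shift

variable {i j : ℕ} {F : Finset (Finset ℕ)} {A T : Finset ℕ}

lemma mem_T2 {n : ℕ} {H : Finset (Finset ℕ)} :
    T ∈ T2 n H ↔ (T ⊆ Icc 1 n ∧ T.card = 2) ∧ ∀ A ∈ H, (T ∩ A).Nonempty := by
  simp [T2, mem_powersetCard]

lemma mem_shift_of_mem_of_ne {x : ℕ} (hx : x ∈ A) (hxj : x ≠ j) : x ∈ insert i (A.erase j) :=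
  mem_insert_of_mem (mem_erase.mpr ⟨hxj, hx⟩)

lemma card_shift (hj : j ∈ A) (hi : i ∉ A) : (insert i (A.erase j)).card = A.card := by
  rw [card_insert_of_notMem (fun h => hi (mem_of_mem_erase h)), card_erase_add_one hj]

lemma shiftSet_injOn : Set.InjOn (shiftSet i j F) F := by
  intro A hA B hB hAB
  simp only [shiftSet] at hAB
  split_ifs at hAB with hcA hcB hcB
  · have hiA : i ∉ A.erase j := fun h => hcA.2.1 (mem_of_mem_erase h)
    have hiB : i ∉ B.erase j := fun h => hcB.2.1 (mem_of_mem_erase h)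
    have hAB' : A.erase j = B.erase j := by
      simpa [erase_insert hiA, erase_insert hiB] using congrArg (·.erase i) hAB
    rw [← insert_erase hcA.1, ← insert_erase hcB.1, hAB']
  · exact absurd (hAB ▸ hB) hcA.2.2
  · exact absurd (hAB ▸ hA) hcB.2.2
  · exact hAB

lemma card_shiftFam : (shiftFam i j F).card = F.card :=
  card_image_of_injOn shiftSet_injOn

lemma mem_shiftFam_cases {B : Finset ℕ} (hB : B ∈ shiftFam i j F) :
    (B ∈ F ∧ (j ∈ B → i ∉ B → insert i (B.erase j) ∈ F)) ∨
      ∃ A ∈ F, j ∈ A ∧ i ∉ A ∧ B = insert i (A.erase j) := by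
  obtain ⟨A, hA, rfl⟩ := mem_image.mp hB
  by_cases hc : j ∈ A ∧ i ∉ A ∧ insert i (A.erase j) ∉ F
  · exact .inr ⟨A, hA, hc.1, hc.2.1, if_pos hc⟩
  · rw [shiftSet, if_neg hc]
    exact .inl ⟨hA, fun hjA hiA => by_contra fun h => hc ⟨hjA, hiA, h⟩⟩

lemma meets_shiftFam (hT : ∀ A ∈ F, (T ∩ A).Nonempty)
    (hT' : j ∈ T → i ∉ T → ∀ A ∈ F, (insert i (T.erase j) ∩ A).Nonempty) :
    ∀ B ∈ shiftFam i j F, (T ∩ B).Nonempty := by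
  intro B hB
  rcases mem_shiftFam_cases hB with ⟨hBF, -⟩ | ⟨A, hA, -, hiA, rfl⟩
  · exact hT B hBF
  obtain ⟨y, hy⟩ := hT A hA
  obtain ⟨hyT, hyA⟩ := mem_inter.mp hy
  by_cases hyj : y = j
  · -- `T` may meet `A` only in `j`; then the shift of `T` supplies a point of `A` other than `j`.
    subst hyj
    by_cases hiT : i ∈ T
    · exact ⟨i, mem_inter.mpr ⟨hiT, mem_insert_self _ _⟩⟩
    obtain ⟨z, hz⟩ := hT' hyT hiT A hA
    obtain ⟨hzT', hzA⟩ := mem_inter.mp hz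
    have hzT : z ∈ T.erase y := (mem_insert.mp hzT').resolve_left (fun h => hiA (h ▸ hzA))
    exact ⟨z, mem_inter.mpr ⟨mem_of_mem_erase hzT,
      mem_shift_of_mem_of_ne hzA (ne_of_mem_erase hzT)⟩⟩
  · exact ⟨y, mem_inter.mpr ⟨hyT, mem_shift_of_mem_of_ne hyA hyj⟩⟩

lemma shift_meets_shiftFam (hiT : i ∉ T) (hT : ∀ A ∈ F, (T ∩ A).Nonempty) :
    ∀ B ∈ shiftFam i j F, (insert i (T.erase j) ∩ B).Nonempty := by
  intro B hB
  by_cases hiB : i ∈ B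
  · exact ⟨i, mem_inter.mpr ⟨mem_insert_self _ _, hiB⟩⟩
  rcases mem_shiftFam_cases hB with ⟨hBF, hBF'⟩ | ⟨A, -, -, -, rfl⟩
  · obtain ⟨y, hy⟩ := hT B hBF
    obtain ⟨hyT, hyB⟩ := mem_inter.mp hy
    by_cases hyj : y = j
    · -- `B` stayed put although it contains `j` and not `i`, so its shift is a member of `F`.
      subst hyj
      obtain ⟨z, hz⟩ := hT _ (hBF' hyB hiB)
      obtain ⟨hzT, hzB'⟩ := mem_inter.mp hz
      have hzB : z ∈ B.erase y :=
        (mem_insert.mp hzB').resolve_left (fun h => hiT (h ▸ hzT))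
      exact ⟨z, mem_inter.mpr ⟨mem_shift_of_mem_of_ne hzT (ne_of_mem_erase hzB),
        mem_of_mem_erase hzB⟩⟩
    · exact ⟨y, mem_inter.mpr ⟨mem_shift_of_mem_of_ne hyT hyj, hyB⟩⟩
  · exact absurd (mem_insert_self _ _) hiB

lemma shiftFam_T2_subset {n : ℕ} (hi : i ∈ Icc 1 n) :
    shiftFam i j (T2 n F) ⊆ T2 n (shiftFam i j F) := by
  intro B hB
  obtain ⟨T, hT, rfl⟩ := mem_image.mp hB
  obtain ⟨⟨hTn, hT2⟩, hTF⟩ := mem_T2.mp hT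
  rw [shiftSet]
  split_ifs with hc
  · obtain ⟨hjT, hiT, -⟩ := hc
    refine mem_T2.mpr ⟨⟨?_, (card_shift hjT hiT).trans hT2⟩, shift_meets_shiftFam hiT hTF⟩
    exact insert_subset hi ((erase_subset j T).trans hTn)
  · refine mem_T2.mpr ⟨⟨hTn, hT2⟩, meets_shiftFam hTF fun hjT hiT => ?_⟩
    exact (mem_T2.mp (by_contra fun h => hc ⟨hjT, hiT, h⟩)).2

end Shift

theorem stmt11_general (n i j : ℕ) (hi : 1 ≤ i) (hin : i ≤ n)
    (F : Finset (Finset ℕ)) :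
    (T2 n F).card ≤ (T2 n (shiftFam i j F)).card :=
  calc (T2 n F).card = (shiftFam i j (T2 n F)).card := Shift.card_shiftFam.symm
    _ ≤ (T2 n (shiftFam i j F)).card :=
      card_le_card (Shift.shiftFam_T2_subset (mem_Icc.mpr ⟨hi, hin⟩))

/-- Claim 2.3: shifting does not decrease the number of 2-transversals. -/
theorem stmt11 (n k i j : ℕ) (hi : 1 ≤ i) (hin : i ≤ n) (hj : 1 ≤ j) (hjn : j ≤ n)
    (hij : i ≠ j)
    (F : Finset (Finset ℕ))
    (hF : F ⊆ (Finset.Icc 1 n).powersetCard k) :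
    (T2 n F).card ≤ (T2 n (shiftFam i j F)).card :=
  stmt11_general n i j hi hin F
end

section
/- Let q > p + 1 and let (a₀,...,a_q) and (b₀,...,b_p) be appropriate sequences of nonnegative reals, meaning cᵢ = c_{m−i} for all i and c₀ ≤ c₁ ≤ ... ≤ c_{⌊m/2⌋}. Let u < v be nonnegative integers with u + v ≤ q − p. Then Σ_{i=0}^{p} a_{i+u} b_i ≤ Σ_{i=0}^{p} a_{i+v} b_i. -/
/-!
Write `S t = ∑_{i ≤ p} a_{i+t} b_i`. The symmetry of `a` and `b` gives `S (q - p - t) = S t`, so it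
suffices to show that `S` increases on `t ≤ (q - p) / 2`. For one step, the increments
`c_i = a_{i+t+1} - a_{i+t}` are antisymmetric about `M = q - 2t - 1` and nonnegative on the first
half, while `b`, extended by zero beyond `p`, is larger at `i` than at `M - i` on that half; pairing
`i` with `M - i` in `S (t + 1) - S t = ∑_{i ≤ M} c_i b_i` makes every pair nonnegative.
-/

open Finset

/-- An appropriate sequence `(c₀, …, c_m)` without the nonnegativity condition; values beyond `m`
play no role. -/
structure SymmUnimodal {α : Type*} [Preorder α] (m : ℕ) (c : ℕ → α) : Prop where
  symm : ∀ i ≤ m, c i = c (m - i)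
  mono : ∀ i j : ℕ, i ≤ j → j ≤ m / 2 → c i ≤ c j

namespace SymmUnimodal

variable {α : Type*} [Preorder α] {m : ℕ} {c : ℕ → α}

theorem le_of_min_le_min (hc : SymmUnimodal m c) {i j : ℕ} (hi : i ≤ m) (hj : j ≤ m)
    (hij : min i (m - i) ≤ min j (m - j)) : c i ≤ c j := by
  have fold : ∀ k ≤ m, c k = c (min k (m - k)) := by
    intro k hk
    rcases le_total k (m - k) with h | h
    · rw [min_eq_left h]
    · rw [min_eq_right h, ← hc.symm k hk]
  rw [fold i hi, fold j hj]
  exact hc.mono _ _ hij (by omega)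

theorem le_succ (hc : SymmUnimodal m c) {i : ℕ} (hi : 2 * i + 1 ≤ m) : c i ≤ c (i + 1) :=
  hc.le_of_min_le_min (by omega) (by omega) (by omega)

theorem indicator_sub_le {R : Type*} [Zero R] [Preorder R] {p : ℕ} {b : ℕ → R}
    (hb : SymmUnimodal p b) (hb0 : ∀ i ≤ p, 0 ≤ b i) {M i : ℕ} (hpM : p ≤ M) (hi : 2 * i ≤ M) :
    (Set.Iic p).indicator b (M - i) ≤ (Set.Iic p).indicator b i := by
  by_cases hMi : M - i ≤ p
  · have hip : i ≤ p := by omega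
    rw [Set.indicator_of_mem (Set.mem_Iic.2 hMi), Set.indicator_of_mem (Set.mem_Iic.2 hip)]
    exact hb.le_of_min_le_min hMi hip (by omega)
  · rw [Set.indicator_of_notMem (mt Set.mem_Iic.1 hMi)]
    exact Set.indicator_nonneg hb0 i

end SymmUnimodal

def crossCorr {R : Type*} [AddCommMonoid R] [Mul R] (a b : ℕ → R) (p t : ℕ) : R :=
  ∑ i ∈ range (p + 1), a (i + t) * b i

theorem crossCorr_reflect {R : Type*} [AddCommMonoid R] [Mul R] {p q : ℕ} {a b : ℕ → R}
    (hasym : ∀ i ≤ q, a i = a (q - i)) (hbsym : ∀ i ≤ p, b i = b (p - i))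
    (hpq : p ≤ q) {t : ℕ} (ht : t ≤ q - p) :
    crossCorr a b p (q - p - t) = crossCorr a b p t := by
  rw [crossCorr, ← sum_range_reflect]
  refine sum_congr rfl fun i hi => ?_
  have hi : i ≤ p := Nat.lt_succ_iff.mp (mem_range.mp hi)
  rw [Nat.add_sub_cancel, show p - i + (q - p - t) = q - (i + t) by omega,
    ← hasym (i + t) (by omega), ← hbsym i hi]

variable {R : Type*} [CommRing R] [LinearOrder R] [IsStrictOrderedRing R]

theorem sum_range_mul_nonneg_of_antisymm (M : ℕ) (c B : ℕ → R)
    (hanti : ∀ i ≤ M, c (M - i) = -c i)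
    (hhalf : ∀ i, 2 * i ≤ M → 0 ≤ c i ∧ B (M - i) ≤ B i) :
    0 ≤ ∑ i ∈ range (M + 1), c i * B i := by
  have hreflect : ∑ i ∈ range (M + 1), c i * B (M - i) = -∑ i ∈ range (M + 1), c i * B i := by
    rw [← sum_range_reflect, ← sum_neg_distrib]
    refine sum_congr rfl fun i hi => ?_
    have hi : i ≤ M := Nat.lt_succ_iff.mp (mem_range.mp hi)
    rw [Nat.add_sub_cancel, hanti i hi, Nat.sub_sub_self hi, neg_mul]
  have hpair : ∀ i ≤ M, 0 ≤ c i * (B i - B (M - i)) := by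
    intro i hi
    rcases le_or_gt (2 * i) M with h | h
    · obtain ⟨hc, hB⟩ := hhalf i h
      exact mul_nonneg hc (sub_nonneg.2 hB)
    · obtain ⟨hc, hB⟩ := hhalf (M - i) (by omega)
      rw [Nat.sub_sub_self hi] at hB
      have hci : c i = -c (M - i) := by rw [hanti i hi, neg_neg]
      rw [hci]
      exact mul_nonneg_of_nonpos_of_nonpos (neg_nonpos.2 hc) (sub_nonpos.2 hB)
  have htwice : 0 ≤ 2 * ∑ i ∈ range (M + 1), c i * B i := by
    calc (0 : R) ≤ ∑ i ∈ range (M + 1), c i * (B i - B (M - i)) :=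
          sum_nonneg fun i hi => hpair i (Nat.lt_succ_iff.mp (mem_range.mp hi))
      _ = 2 * ∑ i ∈ range (M + 1), c i * B i := by
          simp only [mul_sub, sum_sub_distrib, hreflect]
          ring
  exact (mul_nonneg_iff_of_pos_left two_pos).1 htwice

section crossCorr

variable {p q : ℕ} {a b : ℕ → R}

theorem crossCorr_le_succ (ha : SymmUnimodal q a) (hb : SymmUnimodal p b)
    (hb0 : ∀ i ≤ p, 0 ≤ b i) {t : ℕ} (ht : 2 * t + 1 ≤ q - p) :
    crossCorr a b p t ≤ crossCorr a b p (t + 1) := by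
  set M := q - (2 * t + 1)
  set c : ℕ → R := fun i => a (i + t + 1) - a (i + t)
  set B := (Set.Iic p).indicator b
  have hincr : crossCorr a b p (t + 1) - crossCorr a b p t = ∑ i ∈ range (M + 1), c i * B i := by
    rw [crossCorr, crossCorr, ← sum_sub_distrib]
    refine sum_subset_zero_on_sdiff (range_subset_range.2 (by omega)) ?_ ?_
    · intro i hi
      have : ¬ i ≤ p := by simp only [mem_sdiff, mem_range] at hi; omega
      simp [B, Set.indicator_of_notMem (mt Set.mem_Iic.1 this)]
    · intro i hi
      have : i ≤ p := Nat.lt_succ_iff.mp (mem_range.mp hi)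
      simp only [c, B, Set.indicator_of_mem (Set.mem_Iic.2 this)]
      ring_nf
  have hanti : ∀ i ≤ M, c (M - i) = -c i := by
    intro i hi
    simp only [c]
    rw [ha.symm (M - i + t + 1) (by omega), ha.symm (M - i + t) (by omega)]
    rw [show q - (M - i + t + 1) = i + t by omega, show q - (M - i + t) = i + t + 1 by omega]
    ring
  have hhalf : ∀ i, 2 * i ≤ M → 0 ≤ c i ∧ B (M - i) ≤ B i := fun i hi =>
    ⟨sub_nonneg.2 (ha.le_succ (by omega)), hb.indicator_sub_le hb0 (by omega) hi⟩
  linarith [sum_range_mul_nonneg_of_antisymm M c B hanti hhalf]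

theorem crossCorr_monotoneOn (ha : SymmUnimodal q a) (hb : SymmUnimodal p b)
    (hb0 : ∀ i ≤ p, 0 ≤ b i) : MonotoneOn (crossCorr a b p) (Set.Iic ((q - p) / 2)) :=
  monotoneOn_of_le_succ Set.ordConnected_Iic fun t _ _ ht => by
    rw [Order.succ_eq_add_one] at ht ⊢
    exact crossCorr_le_succ ha hb hb0 (by rw [Set.mem_Iic] at ht; omega)

end crossCorr

theorem stmt12_general (p q : ℕ)
    (a b : ℕ → ℝ)
    (hb0 : ∀ i ≤ p, 0 ≤ b i)
    (hasym : ∀ i ≤ q, a i = a (q - i)) (hbsym : ∀ i ≤ p, b i = b (p - i))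
    (hamono : ∀ i j : ℕ, i ≤ j → j ≤ q / 2 → a i ≤ a j)
    (hbmono : ∀ i j : ℕ, i ≤ j → j ≤ p / 2 → b i ≤ b j)
    (u v : ℕ) (huv : u < v) (hsum : u + v ≤ q - p) :
    ∑ i ∈ Finset.range (p + 1), a (i + u) * b i
      ≤ ∑ i ∈ Finset.range (p + 1), a (i + v) * b i := by
  have hmono := crossCorr_monotoneOn ⟨hasym, hamono⟩ ⟨hbsym, hbmono⟩ hb0
  change crossCorr a b p u ≤ crossCorr a b p v
  rcases le_or_gt (2 * v) (q - p) with hv | hv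
  · exact hmono (Set.mem_Iic.2 (by omega)) (Set.mem_Iic.2 (by omega)) huv.le
  · rw [← crossCorr_reflect hasym hbsym (t := v) (by omega) (by omega)]
    exact hmono (Set.mem_Iic.2 (by omega)) (Set.mem_Iic.2 (by omega)) (by omega)

/-- Lemma 3.4: an inequality for "appropriate" (symmetric, unimodal) sequences. -/
theorem stmt12 (p q : ℕ) (hq : p + 1 < q)
    (a b : ℕ → ℝ)
    (ha0 : ∀ i ≤ q, 0 ≤ a i) (hb0 : ∀ i ≤ p, 0 ≤ b i)
    (hasym : ∀ i ≤ q, a i = a (q - i)) (hbsym : ∀ i ≤ p, b i = b (p - i))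
    (hamono : ∀ i j : ℕ, i ≤ j → j ≤ q / 2 → a i ≤ a j)
    (hbmono : ∀ i j : ℕ, i ≤ j → j ≤ p / 2 → b i ≤ b j)
    (u v : ℕ) (huv : u < v) (hsum : u + v ≤ q - p) :
    ∑ i ∈ Finset.range (p + 1), a (i + u) * b i
      ≤ ∑ i ∈ Finset.range (p + 1), a (i + v) * b i :=
  stmt12_general p q a b hb0 hasym hbsym hamono hbmono u v huv hsum
end

section
/- Let ℓ ≥ 2 and let G be a non-trivial family of ℓ-subsets of [2ℓ] (the intersection of all members of G is empty). For 2 ≤ r < ℓ, the number of r-subsets T of [2ℓ] that meet every member of G is at most C(2ℓ, r) − 2·C(ℓ, r). -/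
open Finset

private lemma pascal_le (m r : ℕ) (hr : 1 ≤ r) :
    Nat.choose m r ≤ Nat.choose (m - 1) (r - 1) + Nat.choose (m - 1) r := by
  obtain ⟨r, rfl⟩ : ∃ r', r = r' + 1 := ⟨r - 1, by omega⟩
  cases m with
  | zero => simp [Nat.choose_eq_zero_of_lt (by omega : 0 < r + 1)]
  | succ m => simp [Nat.choose_succ_succ]

private lemma lemA (r : ℕ) (hr : 1 ≤ r) (U : Finset ℕ) (X : Finset ℕ) :
    ∀ (m : ℕ) (H : ℕ → Finset ℕ),
      (∀ x ∈ X, x ∈ H x ∧ H x ⊆ U ∧ m ≤ (H x).card) →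
      Nat.choose m r ≤
        ((U.powersetCard r).filter (fun S => ∃ x ∈ S, x ∈ X ∧ S ⊆ H x)).card
          + Nat.choose (m - X.card) r := by
  classical
  induction X using Finset.induction_on with
  | empty =>
      intro m H _
      simp
  | @insert x₀ X' hx₀ ih =>
      intro m H hH
      obtain ⟨hx₀H, hHU, hHcard⟩ := hH x₀ (mem_insert_self _ _)
      set H' : ℕ → Finset ℕ := fun x => H x \ {x₀} with hH'def
      have hH' : ∀ x ∈ X', x ∈ H' x ∧ H' x ⊆ U ∧ m - 1 ≤ (H' x).card := by
        intro x hx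
        obtain ⟨h1, h2, h3⟩ := hH x (mem_insert_of_mem hx)
        refine ⟨?_, ?_, ?_⟩
        · simp only [hH'def, mem_sdiff, mem_singleton]
          exact ⟨h1, by rintro rfl; exact hx₀ hx⟩
        · exact (sdiff_subset).trans h2
        · have : (H x).card - 1 ≤ (H x \ {x₀}).card := by
            rcases em (x₀ ∈ H x) with h | h
            · rw [card_sdiff_of_subset (singleton_subset_iff.mpr h), card_singleton]
            · rw [sdiff_eq_self_of_disjoint (by simpa using h)]
              omega
          simp only [hH'def]
          omega
      have ih' := ih (m - 1) H' hH'
      set F := (U.powersetCard r).filter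
        (fun S => ∃ x ∈ S, x ∈ insert x₀ X' ∧ S ⊆ H x) with hFdef
      set F' := (U.powersetCard r).filter
        (fun S => ∃ x ∈ S, x ∈ X' ∧ S ⊆ H' x) with hF'def
      set Fa := ((H x₀ \ {x₀}).powersetCard (r - 1)).image (insert x₀) with hFadef
      have hF'F : F' ⊆ F := by
        intro S hS
        simp only [hF'def, hFdef, mem_filter] at hS ⊢
        obtain ⟨hS1, x, hxS, hxX', hSsub⟩ := hS
        exact ⟨hS1, x, hxS, mem_insert_of_mem hxX', hSsub.trans sdiff_subset⟩
      have hFaF : Fa ⊆ F := by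
        intro S hS
        simp only [hFadef, mem_image] at hS
        obtain ⟨R, hR, rfl⟩ := hS
        rw [mem_powersetCard] at hR
        obtain ⟨hRsub, hRcard⟩ := hR
        have hx₀R : x₀ ∉ R := fun h => by simpa using (hRsub h)
        simp only [hFdef, mem_filter, mem_powersetCard]
        refine ⟨⟨?_, ?_⟩, x₀, mem_insert_self _ _, mem_insert_self _ _, ?_⟩
        · exact insert_subset (hHU hx₀H) ((hRsub.trans sdiff_subset).trans hHU)
        · rw [card_insert_of_notMem hx₀R, hRcard]; omega
        · exact insert_subset hx₀H (hRsub.trans sdiff_subset)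
      have hdisj : Disjoint Fa F' := by
        rw [disjoint_left]
        intro S hSa hSF'
        simp only [hFadef, mem_image] at hSa
        obtain ⟨R, hR, rfl⟩ := hSa
        simp only [hF'def, mem_filter] at hSF'
        obtain ⟨-, x, hxS, -, hSsub⟩ := hSF'
        have := hSsub (mem_insert_self x₀ R)
        simp [hH'def] at this
      have hFacard : Fa.card = ((H x₀).card - 1).choose (r - 1) := by
        rw [hFadef, card_image_of_injOn, card_powersetCard,
          card_sdiff_of_subset (singleton_subset_iff.mpr hx₀H), card_singleton]
        intro R₁ h₁ R₂ h₂ heq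
        simp only [Finset.mem_coe, mem_powersetCard] at h₁ h₂
        have hx₁ : x₀ ∉ R₁ := fun h => by simpa using (h₁.1 h)
        have hx₂ : x₀ ∉ R₂ := fun h => by simpa using (h₂.1 h)
        rw [← erase_insert hx₁, ← erase_insert hx₂, heq]
      have hsub : Fa ∪ F' ⊆ F := union_subset hFaF hF'F
      have hcard : Fa.card + F'.card ≤ F.card := by
        rw [← card_union_of_disjoint hdisj]
        exact card_le_card hsub
      have h1 := pascal_le m r hr
      have h2 : Nat.choose (m - 1) (r - 1) ≤ Fa.card := by
        rw [hFacard]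
        exact Nat.choose_le_choose _ (by omega)
      have heq : m - (insert x₀ X').card = m - 1 - X'.card := by
        rw [card_insert_of_notMem hx₀]; omega
      rw [heq]
      omega

/-- Lemma 4.4: bound on the number of r-transversals of a non-trivial
ℓ-uniform family on [2ℓ]. -/
theorem stmt13 (l r : ℕ) (hl : 2 ≤ l) (hr2 : 2 ≤ r) (hrl : r < l)
    (G : Finset (Finset ℕ))
    (hG : G ⊆ (Finset.Icc 1 (2 * l)).powersetCard l)
    (hnt : ∀ x : ℕ, ∃ B ∈ G, x ∉ B) :
    (((Finset.Icc 1 (2 * l)).powersetCard r).filter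
        (fun T => ∀ B ∈ G, (T ∩ B).Nonempty)).card
      ≤ (2 * l).choose r - 2 * l.choose r := by
  classical
  set U := Finset.Icc 1 (2 * l) with hUdef
  have hUcard : U.card = 2 * l := by
    rw [hUdef, Nat.card_Icc]; omega
  obtain ⟨B₁, hB₁G, -⟩ := hnt 0
  have hB₁ := Finset.mem_powersetCard.mp (hG hB₁G)
  obtain ⟨hB₁U, hB₁card⟩ := hB₁
  -- choice of a member missing x, for every x
  set Bx : ℕ → Finset ℕ := fun x => (hnt x).choose with hBxdef
  have hBx : ∀ x, Bx x ∈ G ∧ x ∉ Bx x := fun x => (hnt x).choose_spec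
  set Hf : ℕ → Finset ℕ := fun x => U \ Bx x with hHfdef
  have hBxcard : ∀ x, (Bx x).card = l := fun x =>
    (Finset.mem_powersetCard.mp (hG (hBx x).1)).2
  have hBxU : ∀ x, Bx x ⊆ U := fun x =>
    (Finset.mem_powersetCard.mp (hG (hBx x).1)).1
  have key : ∀ x ∈ B₁, x ∈ Hf x ∧ Hf x ⊆ U ∧ l ≤ (Hf x).card := by
    intro x hx
    refine ⟨?_, sdiff_subset, ?_⟩
    · simp only [hHfdef, mem_sdiff]
      exact ⟨hB₁U hx, (hBx x).2⟩
    · simp only [hHfdef]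
      rw [card_sdiff_of_subset (hBxU x), hUcard, hBxcard]
      omega
  set N := (U.powersetCard r).filter
    (fun T => ¬ ∀ B ∈ G, (T ∩ B).Nonempty) with hNdef
  set F₁ := (U \ B₁).powersetCard r with hF₁def
  set F₃ := (U.powersetCard r).filter (fun S => ∃ x ∈ S, x ∈ B₁ ∧ S ⊆ Hf x)
    with hF₃def
  have hF₁N : F₁ ⊆ N := by
    intro T hT
    rw [hF₁def, mem_powersetCard] at hT
    obtain ⟨hTsub, hTcard⟩ := hT
    rw [hNdef, mem_filter, mem_powersetCard]
    refine ⟨⟨hTsub.trans sdiff_subset, hTcard⟩, ?_⟩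
    intro hall
    have := hall B₁ hB₁G
    rw [Finset.disjoint_iff_inter_eq_empty.mp
      (Finset.sdiff_disjoint.mono_left hTsub)] at this
    exact Finset.not_nonempty_empty this
  have hF₃N : F₃ ⊆ N := by
    intro S hS
    rw [hF₃def, mem_filter] at hS
    obtain ⟨hS1, x, hxS, hxB₁, hSsub⟩ := hS
    rw [hNdef, mem_filter]
    refine ⟨hS1, ?_⟩
    intro hall
    have := hall (Bx x) (hBx x).1
    have hdisj : Disjoint S (Bx x) :=
      Finset.sdiff_disjoint.mono_left (by simpa [hHfdef] using hSsub)
    rw [Finset.disjoint_iff_inter_eq_empty.mp hdisj] at this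
    exact Finset.not_nonempty_empty this
  have hdisj13 : Disjoint F₁ F₃ := by
    rw [disjoint_left]
    intro S hS1 hS3
    rw [hF₁def, mem_powersetCard] at hS1
    rw [hF₃def, mem_filter] at hS3
    obtain ⟨-, x, hxS, hxB₁, -⟩ := hS3
    have := hS1.1 hxS
    simp only [mem_sdiff] at this
    exact this.2 hxB₁
  have hF₁card : F₁.card = l.choose r := by
    rw [hF₁def, card_powersetCard, card_sdiff_of_subset hB₁U, hUcard, hB₁card]
    congr 1
    omega
  have hF₃card : l.choose r ≤ F₃.card := by
    have := lemA r (by omega) U B₁ l Hf key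
    rw [hB₁card, Nat.sub_self] at this
    rw [Nat.choose_eq_zero_of_lt (by omega : 0 < r)] at this
    simpa [hF₃def] using this
  have hNcard : 2 * l.choose r ≤ N.card := by
    have h := card_le_card (union_subset hF₁N hF₃N)
    rw [card_union_of_disjoint hdisj13] at h
    omega
  have hsplit :
      ((U.powersetCard r).filter (fun T => ∀ B ∈ G, (T ∩ B).Nonempty)).card
        + N.card = (2 * l).choose r := by
    rw [hNdef, Finset.card_filter_add_card_filter_not,
      card_powersetCard, hUcard]
  omega
end

section
/- Let k ≥ ℓ ≥ 2, k ≥ 3, n > k + ℓ. Suppose F ⊆ C([n],k) and G ⊆ C([2ℓ],ℓ) are non-trivial and cross-intersecting (where sets in G are viewed as subsets of [n]). Then |F| + |G| ≤ C(n,k) − 2·C(n−ℓ,k) + C(n−2ℓ,k) + 2, with strict inequality unless |G| = 2. -/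
/-!
Let `X = [2ℓ]`, `Y = [n] \ X` and let `d s` count the `s`-subsets of `X` missing some member
of `G`. Every `k`-set `T ∪ A` with such a `T` and `A ⊆ Y` misses a member of `G`, hence is not
in `F`; so `|F| ≤ C(n,k) - ∑ₛ d s · C(n-2ℓ, k-s)`. Choosing for each `x ∈ X` a member of `G`
avoiding `x` and double counting incidences `x ∈ T` gives `d s ≥ 2 C(ℓ,s)` for `s ≥ 1`;
also `d 0 ≥ 1` and `d ℓ ≥ |G|` via complements. Vandermonde's identity
`∑ₛ C(ℓ,s) C(n-2ℓ,k-s) = C(n-ℓ,k)` turns this into the bound. When `|G| ≥ 3` the slack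
`(|G| - 2) C(n-2ℓ,k-ℓ)` is strict if `ℓ < k`; if `ℓ = k`, two distinct members of `G` miss a
common point, which then lies in more than `ℓ - 1` of the `(ℓ-1)`-sets counted by `d (ℓ-1)`;
double counting again gives `d (ℓ-1) > 2ℓ`.
-/

open Finset

section

variable {α : Type*} [DecidableEq α]

lemma Finset.card_filter_mem_powersetCard_succ {S : Finset α} {x : α} (hx : x ∈ S) (s : ℕ) :
    #{T ∈ S.powersetCard (s + 1) | x ∈ T} = (#S - 1).choose s := by
  rw [← card_erase_of_mem hx, ← card_powersetCard]
  refine card_nbij' (·.erase x) (insert x) (fun T hT => ?_) (fun T hT => ?_) (fun T hT => ?_)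
    (fun T hT => ?_) <;> simp only [mem_coe, mem_filter, mem_powersetCard] at hT ⊢
  · exact ⟨erase_subset_erase x hT.1.1, by rw [card_erase_of_mem hT.2, hT.1.2]; rfl⟩
  · have hxT : x ∉ T := fun h => (mem_erase.1 (hT.1 h)).1 rfl
    exact ⟨⟨insert_subset hx (hT.1.trans (erase_subset x S)),
      by rw [card_insert_of_notMem hxT, hT.2]⟩, mem_insert_self x T⟩
  · exact insert_erase hT.2
  · exact erase_insert fun h => (mem_erase.1 (hT.1 h)).1 rfl

lemma Finset.union_inter_eq_of_subset_of_disjoint {T A X : Finset α} (hT : T ⊆ X)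
    (hA : Disjoint A X) :
    (T ∪ A) ∩ X = T := by
  rw [union_inter_distrib_right, inter_eq_left.2 hT, disjoint_iff_inter_eq_empty.1 hA, union_empty]

lemma card_add_card_filter_exists_disjoint_le {F G P : Finset (Finset α)} (hF : F ⊆ P)
    (hcross : ∀ A ∈ F, ∀ B ∈ G, (A ∩ B).Nonempty) :
    #F + #{A ∈ P | ∃ B ∈ G, Disjoint A B} ≤ #P := by
  have hF' : F ⊆ {A ∈ P | ¬∃ B ∈ G, Disjoint A B} := fun A hA =>
    mem_filter.2 ⟨hF hA, fun ⟨B, hB, hAB⟩ =>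
      not_disjoint_iff_nonempty_inter.2 (hcross A hA B hB) hAB⟩
  calc #F + #{A ∈ P | ∃ B ∈ G, Disjoint A B}
      ≤ #{A ∈ P | ¬∃ B ∈ G, Disjoint A B} + #{A ∈ P | ∃ B ∈ G, Disjoint A B} := by
        gcongr
    _ = #P := by rw [add_comm, card_filter_add_card_filter_not]

def avoiding (G : Finset (Finset α)) (X : Finset α) (s : ℕ) : Finset (Finset α) :=
  {T ∈ X.powersetCard s | ∃ B ∈ G, Disjoint T B}

section Avoiding

variable {G : Finset (Finset α)} {X B : Finset α} {l s : ℕ}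

lemma powersetCard_sdiff_subset_avoiding (hB : B ∈ G) :
    (X \ B).powersetCard s ⊆ avoiding G X s := by
  intro T hT
  obtain ⟨hTXB, hTs⟩ := mem_powersetCard.1 hT
  exact mem_filter.2 ⟨mem_powersetCard.2 ⟨hTXB.trans sdiff_subset, hTs⟩, B, hB,
    (subset_sdiff.1 hTXB).2⟩

lemma sum_card_filter_mem_avoiding :
    ∑ x ∈ X, #{T ∈ avoiding G X s | x ∈ T} = s * #(avoiding G X s) := by
  have h := sum_card_bipartiteAbove_eq_sum_card_bipartiteBelow (s := X) (t := avoiding G X s)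
    (r := fun x T => x ∈ T)
  simp only [bipartiteAbove, bipartiteBelow] at h
  rw [h, sum_congr rfl fun T hT => ?_, sum_const, smul_eq_mul, mul_comm]
  obtain ⟨hTX, hTs⟩ := mem_powersetCard.1 (mem_filter.1 hT).1
  rw [filter_mem_eq_inter, inter_eq_right.2 hTX, hTs]

lemma card_avoiding_zero_pos (hX : X.Nonempty) (hnt : ∀ x ∈ X, ∃ B ∈ G, x ∉ B) :
    0 < #(avoiding G X 0) := by
  obtain ⟨x, hx⟩ := hX
  obtain ⟨B, hB, -⟩ := hnt x hx
  exact card_pos.2 ⟨∅, mem_filter.2 ⟨mem_powersetCard.2 ⟨empty_subset X, card_empty⟩, B, hB,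
    disjoint_empty_left B⟩⟩

variable (hX : #X = 2 * l) (hG : G ⊆ X.powersetCard l)
include hX hG

lemma card_sdiff_eq_of_mem (hB : B ∈ G) : #(X \ B) = l := by
  obtain ⟨hBX, hBl⟩ := mem_powersetCard.1 (hG hB)
  rw [card_sdiff_of_subset hBX, hX, hBl]
  omega

lemma choose_le_card_filter_mem_avoiding (hB : B ∈ G) {x : α} (hx : x ∈ X) (hxB : x ∉ B) :
    (l - 1).choose s ≤ #{T ∈ avoiding G X (s + 1) | x ∈ T} := by
  rw [← card_sdiff_eq_of_mem hX hG hB,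
    ← card_filter_mem_powersetCard_succ (mem_sdiff.2 ⟨hx, hxB⟩)]
  exact card_le_card (filter_subset_filter _ (powersetCard_sdiff_subset_avoiding hB))


lemma two_mul_choose_le_card_avoiding (hnt : ∀ x ∈ X, ∃ B ∈ G, x ∉ B) (s : ℕ) :
    2 * l.choose (s + 1) ≤ #(avoiding G X (s + 1)) := by
  have hdeg : ∀ x ∈ X, (l - 1).choose s ≤ #{T ∈ avoiding G X (s + 1) | x ∈ T} := fun x hx =>
    let ⟨_, hB, hxB⟩ := hnt x hx
    choose_le_card_filter_mem_avoiding hX hG hB hx hxB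
  have hsum := card_nsmul_le_sum _ _ _ hdeg
  rw [sum_card_filter_mem_avoiding, hX, smul_eq_mul] at hsum
  have hpascal : l * (l - 1).choose s = l.choose (s + 1) * (s + 1) := by
    cases l with
    | zero => simp
    | succ m => exact Nat.add_one_mul_choose_eq m s
  refine Nat.le_of_mul_le_mul_left ?_ s.succ_pos
  calc (s + 1) * (2 * l.choose (s + 1)) = 2 * (l * (l - 1).choose s) := by rw [hpascal]; ring
    _ ≤ (s + 1) * #(avoiding G X (s + 1)) := by rw [← mul_assoc]; exact hsum

lemma card_le_card_avoiding : #G ≤ #(avoiding G X l) := by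
  refine card_le_card_of_injOn (X \ ·) (fun B hB => ?_) (fun B hB B' hB' h => ?_)
  · exact powersetCard_sdiff_subset_avoiding hB
      (mem_powersetCard.2 ⟨subset_rfl, card_sdiff_eq_of_mem hX hG hB⟩)
  · have hBX := (mem_powersetCard.1 (hG hB)).1
    have hB'X := (mem_powersetCard.1 (hG hB')).1
    rw [← Finset.sdiff_sdiff_eq_self hBX, ← Finset.sdiff_sdiff_eq_self hB'X]
    exact congrArg (X \ ·) h

lemma card_le_two_of_forall_notMem_notMem_eq
    (h : ∀ B ∈ G, ∀ B' ∈ G, ∀ x ∈ X, x ∉ B → x ∉ B' → B = B') : #G ≤ 2 := by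
  obtain rfl | ⟨B, hB⟩ := G.eq_empty_or_nonempty
  · simp
  suffices G ⊆ {B, X \ B} from (card_le_card this).trans card_le_two
  intro B' hB'
  rw [mem_insert, mem_singleton, or_iff_not_imp_left]
  intro hne
  refine (eq_of_subset_of_card_le (fun x hx => ?_) ?_).symm
  · by_contra hxB'
    exact hne (h B hB B' hB' x (mem_sdiff.1 hx).1 (mem_sdiff.1 hx).2 hxB').symm
  · rw [card_sdiff_eq_of_mem hX hG hB, (mem_powersetCard.1 (hG hB')).2]

lemma lt_card_filter_mem_avoiding (hl : 3 ≤ l) {B' : Finset α} (hB : B ∈ G) (hB' : B' ∈ G)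
    (hne : B ≠ B') {x : α} (hx : x ∈ X) (hxB : x ∉ B) (hxB' : x ∉ B') :
    l - 1 < #{T ∈ avoiding G X (l - 1) | x ∈ T} := by
  obtain ⟨m, rfl⟩ : ∃ m, l = m + 3 := ⟨l - 3, by omega⟩
  have hBX := (mem_powersetCard.1 (hG hB)).1
  have hcard' := card_sdiff_eq_of_mem hX hG hB'
  obtain ⟨y, hyB, hyB'⟩ : ∃ y ∈ B, y ∉ B' := not_subset.1 fun h => hne <|
    eq_of_subset_of_card_le h <| by
      rw [(mem_powersetCard.1 (hG hB)).2, (mem_powersetCard.1 (hG hB')).2]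
  obtain ⟨z, hz⟩ : (((X \ B').erase x).erase y).Nonempty := by
    rw [← card_pos]
    have := pred_card_le_card_erase (s := (X \ B').erase x) (a := y)
    have := pred_card_le_card_erase (s := X \ B') (a := x)
    omega
  simp only [mem_erase, mem_sdiff] at hz
  have hxT : x ∈ (X \ B').erase z := mem_erase.2 ⟨hz.2.1.symm, mem_sdiff.2 ⟨hx, hxB'⟩⟩
  have hyT : y ∈ (X \ B').erase z := mem_erase.2 ⟨hz.1.symm, mem_sdiff.2 ⟨hBX hyB, hyB'⟩⟩
  have hssub :
      {T ∈ (X \ B).powersetCard (m + 2) | x ∈ T} ⊂ {T ∈ avoiding G X (m + 2) | x ∈ T} := by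
    refine Finset.ssubset_iff_subset_ne.2
      ⟨filter_subset_filter _ (powersetCard_sdiff_subset_avoiding hB), fun h => ?_⟩
    have hmem : (X \ B').erase z ∈ {T ∈ avoiding G X (m + 2) | x ∈ T} := by
      refine mem_filter.2 ⟨powersetCard_sdiff_subset_avoiding hB'
        (mem_powersetCard.2 ⟨erase_subset _ _, ?_⟩), hxT⟩
      rw [card_erase_of_mem (mem_sdiff.2 hz.2.2), hcard']
      rfl
    rw [← h, mem_filter, mem_powersetCard] at hmem
    exact (mem_sdiff.1 (hmem.1.1 hyT)).2 hyB
  have := card_lt_card hssub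
  rw [card_filter_mem_powersetCard_succ (mem_sdiff.2 ⟨hx, hxB⟩),
    card_sdiff_eq_of_mem hX hG hB] at this
  simpa [Nat.choose_succ_self_right] using this

lemma two_mul_lt_card_avoiding_sub_one (hl : 3 ≤ l) (hnt : ∀ x ∈ X, ∃ B ∈ G, x ∉ B)
    (hG3 : 3 ≤ #G) :
    2 * l < #(avoiding G X (l - 1)) := by
  obtain ⟨B, hB, B', hB', x, hx, hxB, hxB', hne⟩ :
      ∃ B ∈ G, ∃ B' ∈ G, ∃ x ∈ X, x ∉ B ∧ x ∉ B' ∧ B ≠ B' := by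
    by_contra! h
    exact (card_le_two_of_forall_notMem_notMem_eq hX hG h).not_gt hG3
  obtain ⟨m, rfl⟩ : ∃ m, l = m + 2 := ⟨l - 2, by omega⟩
  have hdeg : ∀ y ∈ X, m + 1 ≤ #{T ∈ avoiding G X (m + 1) | y ∈ T} := fun y hy => by
    obtain ⟨_, hB, hyB⟩ := hnt y hy
    simpa using choose_le_card_filter_mem_avoiding hX hG hB hy hyB (s := m)
  have hsum :=
    sum_lt_sum hdeg ⟨x, hx, lt_card_filter_mem_avoiding hX hG hl hB hB' hne hx hxB hxB'⟩
  rw [sum_card_filter_mem_avoiding, sum_const, hX, smul_eq_mul] at hsum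
  have : (m + 1) * (2 * (m + 2)) < (m + 1) * #(avoiding G X (m + 1)) := by
    simpa [mul_comm] using hsum
  simpa using Nat.lt_of_mul_lt_mul_left this

lemma two_mul_choose_add_le_sum_card_avoiding_mul_choose (hl : 2 ≤ l) {k N : ℕ} (hlk : l ≤ k)
    (hnt : ∀ x ∈ X, ∃ B ∈ G, x ∉ B) :
    2 * ((l + N).choose k : ℤ) + (#(avoiding G X 0) - 2) * N.choose k
        + (#(avoiding G X (l - 1)) - 2 * l) * N.choose (k - (l - 1))
        + (#(avoiding G X l) - 2) * N.choose (k - l) ≤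
      ∑ s ∈ range (k + 1), (#(avoiding G X s) * N.choose (k - s) : ℤ) := by
  set e : ℕ → ℤ := fun s => (#(avoiding G X s) - 2 * l.choose s : ℤ) * N.choose (k - s) with he
  have hvandermonde : ∑ s ∈ range (k + 1), (#(avoiding G X s) * N.choose (k - s) : ℤ) =
      2 * (l + N).choose k + ∑ s ∈ range (k + 1), e s := by
    rw [Nat.add_choose_eq, Nat.sum_antidiagonal_eq_sum_range_succ_mk, Nat.succ_eq_add_one]
    push_cast
    simp only [he, sub_mul, sum_sub_distrib, mul_sum, mul_assoc]
    ring
  have he_nonneg : ∀ s ∈ range (k + 1), s ∉ ({0, l - 1, l} : Finset ℕ) → 0 ≤ e s := by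
    intro s _ hs
    obtain ⟨t, rfl⟩ := Nat.exists_eq_succ_of_ne_zero (by simp at hs; tauto : s ≠ 0)
    have := two_mul_choose_le_card_avoiding hX hG hnt t
    exact mul_nonneg (sub_nonneg.2 (by exact_mod_cast this)) (Nat.cast_nonneg _)
  have hsub : ({0, l - 1, l} : Finset ℕ) ⊆ range (k + 1) := by
    intro s hs
    simp only [mem_insert, mem_singleton] at hs
    rw [mem_range]
    omega
  have hthree := sum_le_sum_of_subset_of_nonneg hsub he_nonneg
  rw [sum_insert (by simp; omega), sum_pair (by omega)] at hthree
  have hchoose : l.choose (l - 1) = l := by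
    rw [Nat.choose_symm_of_eq_add (by omega : l = l - 1 + 1), Nat.choose_one_right]
  simp only [he, Nat.choose_zero_right, Nat.choose_self, hchoose, Nat.sub_zero, Nat.cast_one]
    at hthree
  rw [hvandermonde]
  linarith

lemma le_sum_card_avoiding_mul_choose (hl : 2 ≤ l) {k N : ℕ} (hlk : l ≤ k) (hk : 3 ≤ k)
    (hN : k < l + N) (hnt : ∀ x ∈ X, ∃ B ∈ G, x ∉ B) :
    (2 * (l + N).choose k + #G : ℤ) + (if #G = 2 then 0 else 1) ≤
      ∑ s ∈ range (k + 1), (#(avoiding G X s) * N.choose (k - s) : ℤ) + N.choose k + 2 := by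
  have hsum := two_mul_choose_add_le_sum_card_avoiding_mul_choose hX hG hl (N := N) hlk hnt
  have hzero : (1 : ℤ) ≤ #(avoiding G X 0) := by
    exact_mod_cast card_avoiding_zero_pos (card_pos.1 (by omega : 0 < #X)) hnt
  have hpred : (2 * l : ℤ) ≤ #(avoiding G X (l - 1)) := by
    have := two_mul_choose_le_card_avoiding hX hG hnt (l - 2)
    rw [show l - 2 + 1 = l - 1 by omega, Nat.choose_symm_of_eq_add (by omega : l = l - 1 + 1),
      Nat.choose_one_right] at this
    exact_mod_cast this
  have htop : (2 : ℤ) ≤ #(avoiding G X l) := by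
    have := two_mul_choose_le_card_avoiding hX hG hnt (l - 1)
    rw [Nat.sub_add_cancel (by omega : 1 ≤ l), Nat.choose_self] at this
    exact_mod_cast this
  have htopG : (#G : ℤ) ≤ #(avoiding G X l) := by exact_mod_cast card_le_card_avoiding hX hG
  have h0 := mul_nonneg (sub_nonneg.2 hzero) (Nat.cast_nonneg (α := ℤ) (N.choose k))
  have h1 :=
    mul_nonneg (sub_nonneg.2 hpred) (Nat.cast_nonneg (α := ℤ) (N.choose (k - (l - 1))))
  have h2 := mul_nonneg (sub_nonneg.2 htop) (Nat.cast_nonneg (α := ℤ) (N.choose (k - l)))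
  split_ifs with hG2
  · linarith [(by exact_mod_cast hG2 : (#G : ℤ) = 2)]
  obtain hG1 | hG3 := lt_or_gt_of_ne hG2
  · linarith [(by exact_mod_cast hG1 : (#G : ℤ) < 2)]
  have hG3' : (2 : ℤ) < #G := by exact_mod_cast hG3
  have hGtop := mul_le_mul_of_nonneg_right (sub_le_sub_right htopG 2)
    (Nat.cast_nonneg (α := ℤ) (N.choose (k - l)))
  obtain hlk | rfl := hlk.lt_or_eq
  · have hw2 : (2 : ℤ) ≤ N.choose (k - l) := by
      have := Nat.choose_le_choose (k - l) (by omega : k - l + 1 ≤ N)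
      rw [Nat.choose_succ_self_right] at this
      exact_mod_cast (by omega : 2 ≤ N.choose (k - l))
    nlinarith
  · have hpred' : (2 * l + 1 : ℤ) ≤ #(avoiding G X (l - 1)) := by
      exact_mod_cast two_mul_lt_card_avoiding_sub_one hX hG hk hnt hG3
    have hw1 : (1 : ℤ) ≤ N.choose (l - (l - 1)) := by exact_mod_cast Nat.choose_pos (by omega)
    have :=
      mul_le_mul_of_nonneg_right (sub_le_sub_right hpred' (2 * l)) (zero_le_one.trans hw1)
    simp only [Nat.sub_self, Nat.choose_zero_right, Nat.cast_one, mul_one] at hsum hGtop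
    linarith

end Avoiding

lemma sum_card_avoiding_mul_choose_le {G : Finset (Finset α)} {X Y : Finset α}
    (hXY : Disjoint X Y) (hG : ∀ B ∈ G, B ⊆ X) (k : ℕ) :
    ∑ s ∈ range (k + 1), #(avoiding G X s) * (#Y).choose (k - s) ≤
      #{A ∈ (X ∪ Y).powersetCard k | ∃ B ∈ G, Disjoint A B} := by
  set P := (range (k + 1)).biUnion fun s => avoiding G X s ×ˢ Y.powersetCard (k - s)
  have hP : #P = ∑ s ∈ range (k + 1), #(avoiding G X s) * (#Y).choose (k - s) := by
    rw [card_biUnion]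
    · simp only [card_product, card_powersetCard]
    · intro s _ s' _ hss'
      refine disjoint_left.2 fun p hp hp' => hss' ?_
      rw [mem_product] at hp hp'
      exact (mem_powersetCard.1 (mem_filter.1 hp.1).1).2.symm.trans
        (mem_powersetCard.1 (mem_filter.1 hp'.1).1).2
  have hmemP : ∀ p ∈ P, ∃ s ≤ k, p.1 ∈ avoiding G X s ∧ p.2 ⊆ Y ∧ #p.2 = k - s := by
    intro p hp
    obtain ⟨s, hs, hp⟩ := mem_biUnion.1 hp
    obtain ⟨hT, hA⟩ := mem_product.1 hp
    exact ⟨s, Nat.lt_succ_iff.1 (mem_range.1 hs), hT, mem_powersetCard.1 hA⟩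
  rw [← hP]
  refine card_le_card_of_injOn (fun p => p.1 ∪ p.2) (fun p hp => ?_) (fun p hp p' hp' h => ?_)
  · obtain ⟨s, hs, hT, hAY, hAcard⟩ := hmemP p hp
    obtain ⟨hTs, B, hB, hTB⟩ := mem_filter.1 hT
    obtain ⟨hTX, hTcard⟩ := mem_powersetCard.1 hTs
    have hTA : Disjoint p.1 p.2 := disjoint_of_subset_left hTX (disjoint_of_subset_right hAY hXY)
    rw [mem_coe, mem_filter, mem_powersetCard, card_union_of_disjoint hTA, hTcard, hAcard]
    refine ⟨⟨union_subset_union hTX hAY, by omega⟩, B, hB, disjoint_union_left.2 ⟨hTB, ?_⟩⟩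
    exact disjoint_of_subset_left hAY (disjoint_of_subset_right (hG B hB) hXY.symm)
  · have hsplit : ∀ p ∈ P, (p.1 ∪ p.2) ∩ X = p.1 ∧ (p.1 ∪ p.2) ∩ Y = p.2 := fun p hp => by
      obtain ⟨s, -, hT, hAY, -⟩ := hmemP p hp
      have hTX := (mem_powersetCard.1 (mem_filter.1 hT).1).1
      refine ⟨union_inter_eq_of_subset_of_disjoint hTX (disjoint_of_subset_left hAY hXY.symm), ?_⟩
      rw [union_comm]
      exact union_inter_eq_of_subset_of_disjoint hAY (disjoint_of_subset_left hTX hXY)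
    obtain ⟨h1, h2⟩ := hsplit p hp
    obtain ⟨h1', h2'⟩ := hsplit p' hp'
    simp only at h
    rw [h] at h1 h2
    exact Prod.ext (h1.symm.trans h1') (h2.symm.trans h2')

end

theorem stmt14_general (n k l : ℕ) (hl : 2 ≤ l) (hlk : l ≤ k) (hk : 3 ≤ k)
    (hn : k + l < n)
    (F G : Finset (Finset ℕ))
    (hF : F ⊆ (Finset.Icc 1 n).powersetCard k)
    (hG : G ⊆ (Finset.Icc 1 (2 * l)).powersetCard l)
    (hcross : ∀ A ∈ F, ∀ B ∈ G, (A ∩ B).Nonempty)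
    (hntG : ∀ x : ℕ, ∃ B ∈ G, x ∉ B) :
    (F.card + G.card : ℤ) ≤
        (n.choose k : ℤ) - 2 * (n - l).choose k + (n - 2 * l).choose k + 2 ∧
    (G.card ≠ 2 →
      (F.card + G.card : ℤ) <
        (n.choose k : ℤ) - 2 * (n - l).choose k + (n - 2 * l).choose k + 2) := by
  have hXY : Disjoint (Icc 1 (2 * l)) (Icc (2 * l + 1) n) :=
    disjoint_left.2 fun a ha hb => by rw [mem_Icc] at ha hb; omega
  have hXYn : Icc 1 (2 * l) ∪ Icc (2 * l + 1) n = Icc 1 n := by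
    ext a; simp only [mem_union, mem_Icc]; omega
  have hU := sum_card_avoiding_mul_choose_le hXY (fun B hB => (mem_powersetCard.1 (hG hB)).1) k
  rw [hXYn, Nat.card_Icc, show n + 1 - (2 * l + 1) = n - 2 * l by omega] at hU
  have hFU := card_add_card_filter_exists_disjoint_le hF hcross
  rw [card_powersetCard, Nat.card_Icc, Nat.add_sub_cancel] at hFU
  have hbound := le_sum_card_avoiding_mul_choose (by simp) hG hl hlk hk
    (by omega : k < l + (n - 2 * l)) fun x _ => hntG x
  rw [show l + (n - 2 * l) = n - l by omega] at hbound
  zify at hU hFU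
  split_ifs at hbound with hG2
  · exact ⟨by linarith, fun h => absurd hG2 h⟩
  · exact ⟨by linarith, fun _ => by linarith⟩

/-- Proposition 4.3: cross-intersecting non-trivial F ⊆ C([n],k),
G ⊆ C([2ℓ],ℓ). -/
theorem stmt14 (n k l : ℕ) (hl : 2 ≤ l) (hlk : l ≤ k) (hk : 3 ≤ k)
    (hn : k + l < n)
    (F G : Finset (Finset ℕ))
    (hF : F ⊆ (Finset.Icc 1 n).powersetCard k)
    (hG : G ⊆ (Finset.Icc 1 (2 * l)).powersetCard l)
    (hcross : ∀ A ∈ F, ∀ B ∈ G, (A ∩ B).Nonempty)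
    (hntF : ∀ x : ℕ, ∃ A ∈ F, x ∉ A)
    (hntG : ∀ x : ℕ, ∃ B ∈ G, x ∉ B) :
    (F.card + G.card : ℤ) ≤
        (n.choose k : ℤ) - 2 * (n - l).choose k + (n - 2 * l).choose k + 2 ∧
    (G.card ≠ 2 →
      (F.card + G.card : ℤ) <
        (n.choose k : ℤ) - 2 * (n - l).choose k + (n - 2 * l).choose k + 2) :=
  stmt14_general n k l hl hlk hk hn F G hF hG hcross hntG
end

section
/- Suppose F, G ⊆ C([n],k) are cross-intersecting families with |F| + |G| maximal among all pairs of non-trivial cross-intersecting pairs, and define for H ∈ {F, G} the graph T₂(H) of pairs {i,j} such that every member of H meets {i,j}. Then T₂(F) and T₂(G) are cross-intersecting, i.e., every edge of T₂(F) meets every edge of T₂(G), provided n ≥ 2k. -/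
/-- Fact 4.6: for a maximal pair of non-trivial cross-intersecting families,
the transversal graphs T₂(F) and T₂(G) are cross-intersecting. -/
theorem stmt16 (n k : ℕ) (hn : 2 * k ≤ n)
    (F G : Finset (Finset ℕ))
    (hF : F ⊆ (Finset.Icc 1 n).powersetCard k)
    (hG : G ⊆ (Finset.Icc 1 n).powersetCard k)
    (hcross : ∀ A ∈ F, ∀ B ∈ G, (A ∩ B).Nonempty)
    (hntF : ∀ x : ℕ, ∃ A ∈ F, x ∉ A)
    (hntG : ∀ x : ℕ, ∃ B ∈ G, x ∉ B)
    (hmax : ∀ F' G' : Finset (Finset ℕ),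
      F' ⊆ (Finset.Icc 1 n).powersetCard k →
      G' ⊆ (Finset.Icc 1 n).powersetCard k →
      (∀ A ∈ F', ∀ B ∈ G', (A ∩ B).Nonempty) →
      (∀ x : ℕ, ∃ A ∈ F', x ∉ A) → (∀ x : ℕ, ∃ B ∈ G', x ∉ B) →
      F'.card + G'.card ≤ F.card + G.card) :
    ∀ e ∈ T2 n F, ∀ e' ∈ T2 n G, (e ∩ e').Nonempty := by
  intro e he e' he'
  by_contra hdisj
  rw [Finset.not_nonempty_iff_eq_empty] at hdisj
  simp only [T2, Finset.mem_filter, Finset.mem_powersetCard] at he he'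
  obtain ⟨⟨heI, hecard⟩, heT⟩ := he
  obtain ⟨⟨he'I, he'card⟩, he'T⟩ := he'
  -- dispose of small k
  by_cases hk : k ≤ 1
  · obtain ⟨B, hB, -⟩ := hntG 0
    obtain ⟨hBI, hBcard⟩ := Finset.mem_powersetCard.mp (hG hB)
    interval_cases k
    · rw [Finset.card_eq_zero] at hBcard
      obtain ⟨A, hA, -⟩ := hntF 0
      have := hcross A hA B hB
      simp [hBcard] at this
    · rw [Finset.card_eq_one] at hBcard
      obtain ⟨b, rfl⟩ := hBcard
      obtain ⟨A, hA, hbA⟩ := hntF b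
      have := hcross A hA _ hB
      obtain ⟨x, hx⟩ := this
      simp at hx
      exact hbA (hx.2 ▸ hx.1)
  push_neg at hk
  have hcardIcc : (Finset.Icc 1 n).card = n := by simp
  -- every k-subset of [n] containing e is in G
  have keyG : ∀ B ∈ (Finset.Icc 1 n).powersetCard k, e ⊆ B → B ∈ G := by
    intro B hB heB
    set G' := G ∪ ((Finset.Icc 1 n).powersetCard k).filter (fun B => e ⊆ B) with hG'
    have hsub : G ⊆ G' := Finset.subset_union_left
    have hG'sub : G' ⊆ (Finset.Icc 1 n).powersetCard k := by
      apply Finset.union_subset hG (Finset.filter_subset _ _)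
    have hcross' : ∀ A ∈ F, ∀ B ∈ G', (A ∩ B).Nonempty := by
      intro A hA C hC
      rcases Finset.mem_union.mp hC with hC | hC
      · exact hcross A hA C hC
      · obtain ⟨x, hx⟩ := heT A hA
        simp only [Finset.mem_inter] at hx
        exact ⟨x, Finset.mem_inter.mpr ⟨hx.2, (Finset.mem_filter.mp hC).2 hx.1⟩⟩
    have hnt' : ∀ x : ℕ, ∃ B ∈ G', x ∉ B := fun x => by
      obtain ⟨B, hB, h⟩ := hntG x; exact ⟨B, hsub hB, h⟩
    have := hmax F G' hF hG'sub hcross' hntF hnt'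
    have hcard : G'.card ≤ G.card := by omega
    have : G' = G := Finset.eq_of_subset_of_card_le hsub hcard ▸ rfl
    have hBG' : B ∈ G' := Finset.mem_union_right _ (Finset.mem_filter.mpr ⟨hB, heB⟩)
    rwa [this] at hBG'
  -- every k-subset of [n] containing e' is in F
  have keyF : ∀ A ∈ (Finset.Icc 1 n).powersetCard k, e' ⊆ A → A ∈ F := by
    intro A hA he'A
    set F' := F ∪ ((Finset.Icc 1 n).powersetCard k).filter (fun A => e' ⊆ A) with hF'
    have hsub : F ⊆ F' := Finset.subset_union_left
    have hF'sub : F' ⊆ (Finset.Icc 1 n).powersetCard k :=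
      Finset.union_subset hF (Finset.filter_subset _ _)
    have hcross' : ∀ A ∈ F', ∀ B ∈ G, (A ∩ B).Nonempty := by
      intro C hC B hB
      rcases Finset.mem_union.mp hC with hC | hC
      · exact hcross C hC B hB
      · obtain ⟨x, hx⟩ := he'T B hB
        simp only [Finset.mem_inter] at hx
        exact ⟨x, Finset.mem_inter.mpr ⟨(Finset.mem_filter.mp hC).2 hx.1, hx.2⟩⟩
    have hnt' : ∀ x : ℕ, ∃ A ∈ F', x ∉ A := fun x => by
      obtain ⟨A, hA, h⟩ := hntF x; exact ⟨A, hsub hA, h⟩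
    have := hmax F' G hF'sub hG hcross' hnt' hntG
    have hcard : F'.card ≤ F.card := by omega
    have : F' = F := Finset.eq_of_subset_of_card_le hsub hcard ▸ rfl
    have hAF' : A ∈ F' := Finset.mem_union_right _ (Finset.mem_filter.mpr ⟨hA, he'A⟩)
    rwa [this] at hAF'
  -- construct A ⊇ e' disjoint from e
  have hdisj' : Disjoint e' e := by
    rw [Finset.disjoint_iff_inter_eq_empty, Finset.inter_comm]; exact hdisj
  have he't1 : e' ⊆ (Finset.Icc 1 n) \ e := Finset.subset_sdiff.mpr ⟨he'I, hdisj'⟩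
  have ht1card : ((Finset.Icc 1 n) \ e).card = n - 2 := by
    rw [Finset.card_sdiff_of_subset heI, hcardIcc, hecard]
  obtain ⟨A, he'A, hAsub, hAcard⟩ :=
    Finset.exists_subsuperset_card_eq (n := k) he't1 (by omega) (by rw [ht1card]; omega)
  have hAIcc : A ⊆ Finset.Icc 1 n := hAsub.trans (Finset.sdiff_subset)
  have hAmem : A ∈ (Finset.Icc 1 n).powersetCard k :=
    Finset.mem_powersetCard.mpr ⟨hAIcc, hAcard⟩
  have hAF : A ∈ F := keyF A hAmem he'A
  -- construct B ⊇ e disjoint from A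
  have hdisjA : Disjoint e A := by
    rw [Finset.disjoint_right]
    intro x hxA hxe
    exact (Finset.mem_sdiff.mp (hAsub hxA)).2 hxe
  have het2 : e ⊆ (Finset.Icc 1 n) \ A := Finset.subset_sdiff.mpr ⟨heI, hdisjA⟩
  have ht2card : ((Finset.Icc 1 n) \ A).card = n - k := by
    rw [Finset.card_sdiff_of_subset hAIcc, hcardIcc, hAcard]
  obtain ⟨B, heB, hBsub, hBcard⟩ :=
    Finset.exists_subsuperset_card_eq (n := k) het2 (by omega) (by rw [ht2card]; omega)
  have hBmem : B ∈ (Finset.Icc 1 n).powersetCard k :=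
    Finset.mem_powersetCard.mpr ⟨hBsub.trans (Finset.sdiff_subset), hBcard⟩
  have hBG : B ∈ G := keyG B hBmem heB
  obtain ⟨x, hx⟩ := hcross A hAF B hBG
  simp only [Finset.mem_inter] at hx
  exact (Finset.mem_sdiff.mp (hBsub hx.2)).2 hx.1
end

section
/- For fixed k ≥ 3, ℓ ≥ 2 with k ≥ ℓ and all n > k + ℓ: g(n,k,ℓ) < h(n,k,ℓ), where g(n,k,ℓ) = Σ_{i=2}^{ℓ+1} C(ℓ+1,i)·C(n−ℓ−1, k−i) + C(ℓ+1, ℓ) and h(n,k,ℓ) = C(n,k) − 2·C(n−ℓ,k) + C(n−2ℓ,k) + 2. -/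
/-!
Write `n = (ℓ + 1) + a` with `a = n - ℓ - 1`. Vandermonde's identity splits `C(n, k)` according
to how many elements are taken from the first `ℓ + 1`; the terms with at least two of them form
exactly the sum in `g`, and Pascal's rule gives `C(n - ℓ, k) = C(a, k) + C(a, k - 1)`. After
cancelling, the claim becomes `C(a, k) + (ℓ - 1) < (ℓ - 1) C(a, k - 1) + C(a - (ℓ - 1), k)`.
Telescoping Pascal's rule bounds `C(a, k) - C(a - t, k)` by `t C(a - 1, k - 1)`, and
`C(a - 1, k - 1) + 2 ≤ C(a, k - 1)` as soon as `k ≥ 3` and `a ≥ k`.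
-/

open Finset

namespace Nat

/-- Without the guard, each `i > k` would contribute `m.choose i * a.choose 0`,
since `k - i = 0`. -/
theorem add_choose_eq_sum_range_left (m a k : ℕ) :
    (m + a).choose k =
      ∑ i ∈ range (m + 1), m.choose i * if i ≤ k then a.choose (k - i) else 0 := by
  rw [add_choose_eq, Finset.Nat.sum_antidiagonal_eq_sum_range_succ_mk]
  calc ∑ i ∈ range (k + 1), m.choose i * a.choose (k - i)
      = ∑ i ∈ range (k + 1), m.choose i * if i ≤ k then a.choose (k - i) else 0 :=
        sum_congr rfl fun i hi => by rw [if_pos (Nat.lt_succ_iff.mp (mem_range.mp hi))]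
    _ = ∑ i ∈ range (m + k + 1), m.choose i * if i ≤ k then a.choose (k - i) else 0 :=
        sum_subset (range_subset_range.mpr (by omega)) fun i _ hi => by
          rw [mem_range, not_lt] at hi
          rw [if_neg (by omega), mul_zero]
    _ = ∑ i ∈ range (m + 1), m.choose i * if i ≤ k then a.choose (k - i) else 0 :=
        (sum_subset (range_subset_range.mpr (by omega)) fun i _ hi => by
          rw [mem_range, not_lt] at hi
          rw [choose_eq_zero_of_lt (by omega), zero_mul]).symm

theorem choose_succ_le_choose_sub_add_mul (a k t : ℕ) :
    a.choose (k + 1) ≤ (a - t).choose (k + 1) + t * (a - 1).choose k := by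
  induction t with
  | zero => simp
  | succ t ih =>
    suffices (a - t).choose (k + 1) ≤ (a - (t + 1)).choose (k + 1) + (a - 1).choose k by
      rw [add_mul, one_mul]; omega
    rcases Nat.eq_zero_or_pos (a - t) with h | h
    · simp [h]
    · obtain ⟨m, hm⟩ : ∃ m, a - t = m + 1 := ⟨a - t - 1, by omega⟩
      rw [hm, show a - (t + 1) = m by omega, choose_succ_succ', add_comm]
      exact Nat.add_le_add_left (choose_le_choose k (by omega)) _

theorem choose_pred_add_two_le {a c : ℕ} (hc : 2 ≤ c) (ha : c < a) :
    (a - 1).choose c + 2 ≤ a.choose c := by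
  obtain ⟨b, rfl⟩ : ∃ b, a = b + 1 := ⟨a - 1, by omega⟩
  obtain ⟨d, rfl⟩ : ∃ d, c = d + 1 := ⟨c - 1, by omega⟩
  have h : d + 1 ≤ b.choose d :=
    (choose_succ_self_right d).symm.le.trans (choose_le_choose d (by omega))
  rw [choose_succ_succ', add_tsub_cancel_right]
  omega

theorem choose_succ_add_lt_mul_choose_add_choose_sub {a c t : ℕ} (hc : 2 ≤ c) (ha : c < a)
    (ht : 1 ≤ t) :
    a.choose (c + 1) + t < t * a.choose c + (a - t).choose (c + 1) := by
  have htele := choose_succ_le_choose_sub_add_mul a c t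
  have hgap : t * ((a - 1).choose c + 2) ≤ t * a.choose c :=
    Nat.mul_le_mul_left t (choose_pred_add_two_le hc ha)
  rw [mul_add] at hgap
  omega

end Nat

theorem stmt19_general (n k l : ℕ) (hk : 3 ≤ k) (hl : 2 ≤ l)
    (hn : k + l < n) :
    ((∑ i ∈ Finset.Icc 2 (l + 1),
        (l + 1).choose i * (if i ≤ k then (n - l - 1).choose (k - i) else 0)
      + (l + 1).choose l : ℕ) : ℤ)
      < (n.choose k : ℤ) - 2 * (n - l).choose k + (n - 2 * l).choose k + 2 := by
  obtain ⟨c, rfl⟩ : ∃ c, k = c + 1 := ⟨k - 1, by omega⟩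
  obtain ⟨t, rfl⟩ : ∃ t, l = t + 1 := ⟨l - 1, by omega⟩
  set a := n - (t + 1) - 1
  set S :=
    ∑ i ∈ Icc 2 (t + 2), (t + 2).choose i * if i ≤ c + 1 then a.choose (c + 1 - i) else 0
  have hvand : n.choose (c + 1) = a.choose (c + 1) + (t + 2) * a.choose c + S := by
    rw [show n = (t + 2) + a by omega, Nat.add_choose_eq_sum_range_left, range_eq_Ico,
      sum_eq_sum_Ico_succ_bot (by omega), sum_eq_sum_Ico_succ_bot (by omega),
      Ico_add_one_right_eq_Icc]
    simp only [Nat.choose_zero_right, Nat.choose_one_right, one_mul, zero_le,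
      le_add_iff_nonneg_left, if_true, tsub_zero, add_tsub_cancel_right, zero_add, add_assoc]
    rfl
  have hpascal : (n - (t + 1)).choose (c + 1) = a.choose c + a.choose (c + 1) := by
    rw [show n - (t + 1) = a + 1 by omega, Nat.choose_succ_succ']
  have hkey := Nat.choose_succ_add_lt_mul_choose_add_choose_sub (t := t) (by omega : 2 ≤ c)
    (by omega : c < a) (by omega)
  rw [show a - t = n - 2 * (t + 1) by omega] at hkey
  rw [Nat.choose_succ_self_right]
  push_cast [hvand, hpascal]
  linarith [(by exact_mod_cast hkey :
    (a.choose (c + 1) + t : ℤ) < t * a.choose c + (n - 2 * (t + 1)).choose (c + 1))]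

/-- Proposition 4.2: g(n,k,ℓ) < h(n,k,ℓ) for n > k + ℓ, k ≥ 3, ℓ ≥ 2, k ≥ ℓ. -/
theorem stmt19 (n k l : ℕ) (hk : 3 ≤ k) (hl : 2 ≤ l) (hlk : l ≤ k)
    (hn : k + l < n) :
    ((∑ i ∈ Finset.Icc 2 (l + 1),
        (l + 1).choose i * (if i ≤ k then (n - l - 1).choose (k - i) else 0)
      + (l + 1).choose l : ℕ) : ℤ)
      < (n.choose k : ℤ) - 2 * (n - l).choose k + (n - 2 * l).choose k + 2 :=
  stmt19_general n k l hk hl hn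
end
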